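/- arXiv:2405.18766 — 3 statements merged into one kernel-verified Lean document; each statement's English description precedes it below -/
import Mathlib

section
/- Let a, b, k be nonnegative integers. The number of plane partitions in the a×b rectangle bounded by k equals the product over 1 ≤ i ≤ a and 1 ≤ j ≤ b of (k+i+j−1)/(i+j−1). (This is the cardinality of the set 𝒫_k of Definition 4.1 in the U(p,q) setting, where a = p−k and b = q−k.) -/
/-- A plane partition bounded by `k` contained in the diagram `D` (a finite set of
boxes, indexed 1-based): a function on all of `ℕ × ℕ` that vanishes outside `D`,
takes values in `{0, …, k}` on `D`, weakly increases along rows to the right, and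
weakly decreases down columns. -/
def IsPP (D : Finset (ℕ × ℕ)) (k : ℕ) (P : ℕ × ℕ → ℕ) : Prop :=
  (∀ x ∈ D, P x ≤ k) ∧ (∀ x, x ∉ D → P x = 0) ∧
  (∀ i j : ℕ, (i, j) ∈ D → (i, j + 1) ∈ D → P (i, j) ≤ P (i, j + 1)) ∧
  (∀ i j : ℕ, (i, j) ∈ D → (i + 1, j) ∈ D → P (i + 1, j) ≤ P (i, j))

/-- The boxes of the `a × b` rectangle. -/
def rectBoxes (a b : ℕ) : Finset (ℕ × ℕ) := Finset.Icc 1 a ×ˢ Finset.Icc 1 b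

open Finset Polynomial Matrix

/-- The set of rows interlacing below a given row `l`. -/
def gtbox {n : ℕ} (l : Fin (n+1) → ℕ) : Finset (Fin n → ℕ) :=
  Fintype.piFinset fun i => Finset.Icc (l i.succ) (l i.castSucc)

/-- The number of Gelfand–Tsetlin patterns with top row `l`. -/
def gtcount : (n : ℕ) → (Fin n → ℕ) → ℕ
  | 0, _ => 1
  | n+1, l => ∑ μ ∈ gtbox l, gtcount n μ

/-- Shifted entries. -/
def zq (n : ℕ) (l : Fin n → ℕ) : Fin n → ℚ := fun i => ((l i + (n - 1 - (i:ℕ)) : ℕ) : ℚ)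

lemma sum_Icc_choose' (L U j : ℕ) (h : L ≤ U + 1) :
    (∑ t ∈ Icc L U, Nat.choose t j) + Nat.choose L (j+1) = Nat.choose (U+1) (j+1) := by
  rcases le_or_gt L j with hLj | hjL
  · have hL0 : Nat.choose L (j+1) = 0 := Nat.choose_eq_zero_of_lt (by omega)
    rcases le_or_gt j U with hjU | hUj
    · have hsum : ∑ t ∈ Icc L U, Nat.choose t j = ∑ t ∈ Icc j U, Nat.choose t j := by
        refine (Finset.sum_subset (Finset.Icc_subset_Icc_left hLj) ?_).symm
        intro t ht hnt
        simp only [Finset.mem_Icc] at ht hnt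
        exact Nat.choose_eq_zero_of_lt (by omega)
      rw [hsum, Nat.sum_Icc_choose, hL0]
      omega
    · have hsum : ∑ t ∈ Icc L U, Nat.choose t j = 0 := by
        refine Finset.sum_eq_zero fun t ht => ?_
        simp only [Finset.mem_Icc] at ht
        exact Nat.choose_eq_zero_of_lt (by omega)
      have h2 : Nat.choose (U+1) (j+1) = 0 := Nat.choose_eq_zero_of_lt (by omega)
      omega
  · have hL1 : 1 ≤ L := by omega
    have e0 : Icc j (L-1) = Ico j L := by
      rw [← Finset.Ico_add_one_right_eq_Icc]; congr 1; omega
    have e1 : Icc L U = Ico L (U+1) := by rw [Finset.Ico_add_one_right_eq_Icc]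
    have e2 : Icc j U = Ico j (U+1) := by rw [Finset.Ico_add_one_right_eq_Icc]
    have esum : (∑ t ∈ Icc j (L-1), Nat.choose t j) + ∑ t ∈ Icc L U, Nat.choose t j
        = ∑ t ∈ Icc j U, Nat.choose t j := by
      rw [e0, e1, e2]
      exact Finset.sum_Ico_consecutive _ (by omega) (by omega)
    have h1 : ∑ t ∈ Icc j (L-1), Nat.choose t j = Nat.choose L (j+1) := by
      rw [Nat.sum_Icc_choose]; congr 1; omega
    have h2 : ∑ t ∈ Icc j U, Nat.choose t j = Nat.choose (U+1) (j+1) := Nat.sum_Icc_choose _ _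
    omega

lemma sum_descP (j L U : ℕ) (h : L ≤ U + 1) :
    ∑ t ∈ Icc L U, (descPochhammer ℚ j).eval (t:ℚ)
      = ((descPochhammer ℚ (j+1)).eval ((U+1 : ℕ):ℚ)
          - (descPochhammer ℚ (j+1)).eval ((L:ℕ):ℚ)) / (j+1) := by
  have key := sum_Icc_choose' L U j h
  have keyQ : ((∑ t ∈ Icc L U, Nat.choose t j : ℕ) : ℚ)
      = (Nat.choose (U+1) (j+1) : ℚ) - (Nat.choose L (j+1) : ℚ) := by
    have : ((∑ t ∈ Icc L U, Nat.choose t j : ℕ) : ℚ) + (Nat.choose L (j+1) : ℚ)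
        = (Nat.choose (U+1) (j+1) : ℚ) := by exact_mod_cast congrArg (Nat.cast : ℕ → ℚ) key
    linarith
  have e1 : ∀ m : ℕ, (descPochhammer ℚ j).eval ((m:ℕ):ℚ) = ((m.descFactorial j : ℕ) : ℚ) :=
    fun m => descPochhammer_eval_eq_descFactorial ℚ m j
  have e2 : ∀ m : ℕ, (descPochhammer ℚ (j+1)).eval ((m:ℕ):ℚ)
      = ((m.descFactorial (j+1) : ℕ) : ℚ) :=
    fun m => descPochhammer_eval_eq_descFactorial ℚ m (j+1)
  calc ∑ t ∈ Icc L U, (descPochhammer ℚ j).eval (t:ℚ)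
      = ∑ t ∈ Icc L U, ((Nat.factorial j : ℚ) * (Nat.choose t j : ℚ)) := by
        refine Finset.sum_congr rfl fun t _ => ?_
        rw [e1 t, Nat.descFactorial_eq_factorial_mul_choose]
        push_cast; ring
    _ = (Nat.factorial j : ℚ) * (((∑ t ∈ Icc L U, Nat.choose t j : ℕ) : ℚ)) := by
        rw [← Finset.mul_sum]; push_cast; ring
    _ = (Nat.factorial j : ℚ) * ((Nat.choose (U+1) (j+1) : ℚ) - (Nat.choose L (j+1) : ℚ)) := by
        rw [keyQ]
    _ = ((descPochhammer ℚ (j+1)).eval ((U+1 : ℕ):ℚ)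
          - (descPochhammer ℚ (j+1)).eval ((L:ℕ):ℚ)) / (j+1) := by
        rw [e2 (U+1), e2 L, Nat.descFactorial_eq_factorial_mul_choose,
          Nat.descFactorial_eq_factorial_mul_choose, Nat.factorial_succ]
        have : ((j:ℚ)+1) ≠ 0 := by positivity
        push_cast
        field_simp

lemma det_rows_sub {n : ℕ} (R : Fin (n+1) → Fin (n+1) → ℚ) (h1 : ∀ i, R i 0 = 1) :
    Matrix.det (Matrix.of fun (i j : Fin n) => R i.castSucc j.succ - R i.succ j.succ)
      = (-1)^n * Matrix.det (Matrix.of R) := by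
  set R' : ℕ → Fin (n+1) → ℚ := fun r j => if h : r < n+1 then R ⟨r,h⟩ j else 0 with hR'
  set G : ℕ → Matrix (Fin (n+1)) (Fin (n+1)) ℚ :=
    fun m => Matrix.of fun i j => if (i:ℕ) < m then R' i j - R' ((i:ℕ)+1) j else R' i j with hG
  have hdet : ∀ m, m ≤ n → (G m).det = (Matrix.of R).det := by
    intro m hm
    induction m with
    | zero =>
      congr 1
      ext i j
      simp only [hG, hR', Matrix.of_apply, Nat.not_lt_zero, if_false, i.isLt, dif_pos]
    | succ m ih =>
      have hmn : m ≤ n := Nat.le_of_succ_le hm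
      rw [← ih hmn]
      have hne : (⟨m, by omega⟩ : Fin (n+1)) ≠ ⟨m+1, by omega⟩ := by
        simp [Fin.ext_iff]
      have hup : G (m+1) = Matrix.updateRow (G m) ⟨m, by omega⟩
          ((G m) ⟨m, by omega⟩ + (-1 : ℚ) • (G m) ⟨m+1, by omega⟩) := by
        ext i j
        rcases eq_or_ne i ⟨m, by omega⟩ with hi | hi
        · subst hi
          rw [Matrix.updateRow_self]
          simp only [hG, Matrix.of_apply, Pi.add_apply, Pi.smul_apply, smul_eq_mul]
          rw [if_pos (by omega), if_neg (by omega), if_neg (by omega)]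
          ring
        · rw [Matrix.updateRow_ne hi]
          simp only [hG, Matrix.of_apply]
          have : (i : ℕ) < m + 1 ↔ (i : ℕ) < m := by
            constructor
            · intro h'
              rcases Nat.lt_or_ge (i:ℕ) m with h'' | h''
              · exact h''
              · exfalso; exact hi (Fin.ext (by simp only [Fin.val_mk]; omega))
            · omega
          rw [if_congr this rfl rfl]
      rw [hup, Matrix.det_updateRow_add_smul_self _ hne]
  have hcol : ∀ i : Fin (n+1), (G n) i 0 = if (i:ℕ) < n then 0 else 1 := by
    intro i
    simp only [hG, hR', Matrix.of_apply]
    by_cases hi : (i:ℕ) < n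
    · rw [if_pos hi, if_pos hi, dif_pos (by omega), dif_pos (by omega), h1, h1, sub_self]
    · rw [if_neg hi, if_neg hi, dif_pos (by omega), h1]
  have hexp := Matrix.det_succ_column_zero (G n)
  have hsingle : (G n).det
      = (-1)^n * ((G n).submatrix (Fin.last n).succAbove Fin.succ).det := by
    rw [hexp]
    rw [Finset.sum_eq_single (Fin.last n)]
    · rw [hcol]
      simp [Fin.last]
    · intro i _ hi
      rw [hcol]
      have : (i : ℕ) < n := by
        rcases Nat.lt_or_ge (i:ℕ) n with h'' | h''
        · exact h''
        · exact absurd (Fin.ext (by simp only [Fin.val_last]; omega)) hi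
      rw [if_pos this]
      ring
    · intro h
      exact absurd (Finset.mem_univ _) h
  have hsub : (G n).submatrix (Fin.last n).succAbove Fin.succ
      = Matrix.of fun (i j : Fin n) => R i.castSucc j.succ - R i.succ j.succ := by
    ext i j
    rw [Fin.succAbove_last]
    simp only [Matrix.submatrix_apply, hG, hR', Matrix.of_apply]
    have hcs : ((Fin.castSucc i : Fin (n+1)) : ℕ) = (i:ℕ) := Fin.coe_castSucc i
    rw [if_pos (by rw [hcs]; exact i.isLt), dif_pos (by rw [hcs]; exact Nat.lt_succ_of_lt i.isLt),
      dif_pos (by rw [hcs]; exact Nat.succ_lt_succ i.isLt)]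
    congr 2 <;> exact Fin.ext (by simp [hcs])
  have hsq : (-1:ℚ)^n * (-1:ℚ)^n = 1 := by
    rw [← pow_add, ← two_mul, pow_mul]; norm_num
  rw [← hsub]
  rw [hdet n le_rfl] at hsingle
  rw [hsingle, ← mul_assoc, hsq, one_mul]

lemma prod_fin_cast_add_one (n : ℕ) : (∏ j : Fin n, ((j:ℚ)+1)) = n.factorial := by
  induction n with
  | zero => simp
  | succ m ih =>
    rw [Fin.prod_univ_castSucc]
    simp only [Fin.coe_castSucc, ih, Fin.val_last, Nat.factorial_succ]
    push_cast; ring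

lemma step (n : ℕ) (l : Fin (n+1) → ℕ) (hl : Antitone l) :
    (n.factorial : ℚ) * ∑ μ ∈ gtbox l, (Matrix.vandermonde (zq n μ)).det
      = (-1)^n * (Matrix.vandermonde (zq (n+1) l)).det := by
  classical
  set c : Fin n → ℕ := fun i => n - 1 - (i:ℕ) with hc
  set A : Fin n → Finset ℕ := fun i => Finset.Icc (l i.succ) (l i.castSucc) with hA
  set g : (i : Fin n) → ℕ → (Fin n → ℚ) :=
    fun i t => fun j => (descPochhammer ℚ (j:ℕ)).eval ((t + c i : ℕ) : ℚ) with hg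
  set Rm : Fin (n+1) → Fin (n+1) → ℚ :=
    fun i j => (descPochhammer ℚ (j:ℕ)).eval (zq (n+1) l i) with hRm
  have hdetrow : ∀ μ : Fin n → ℕ, (Matrix.vandermonde (zq n μ)).det
      = (Matrix.detRowAlternating (R := ℚ) (n := Fin n)).toMultilinearMap
          (fun i => g i (μ i)) := by
    intro μ
    rw [Matrix.det_eval_matrixOfPolynomials_eq_det_vandermonde (zq n μ)
      (fun j => descPochhammer ℚ (j:ℕ)) (fun j => descPochhammer_natDegree ℚ _)
      (fun j => monic_descPochhammer ℚ _)]
    rfl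
  have hsum : ∑ μ ∈ gtbox l, (Matrix.vandermonde (zq n μ)).det
      = Matrix.det (Matrix.of fun i j => ∑ t ∈ A i, g i t j) := by
    simp_rw [hdetrow]
    rw [gtbox, ← MultilinearMap.map_sum_finset]
    have hre : (fun i => ∑ t ∈ A i, g i t) = fun i => (fun j => ∑ t ∈ A i, g i t j) := by
      funext i j
      exact Finset.sum_apply _ _ _
    rw [hre]
    rfl
  have hLU : ∀ i : Fin n, l i.succ ≤ l i.castSucc := fun i => hl (Fin.castSucc_le_succ i)
  have hrowpt : ∀ (i j : Fin n), (∑ t ∈ A i, g i t j)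
      = (((j:ℚ)+1))⁻¹ * (Rm i.castSucc j.succ - Rm i.succ j.succ) := by
    intro i j
    have hmap : ∑ t ∈ A i, g i t j
        = ∑ s ∈ Finset.Icc (l i.succ + c i) (l i.castSucc + c i),
            (descPochhammer ℚ (j:ℕ)).eval (s:ℚ) := by
      rw [hA]
      rw [← Finset.map_add_right_Icc, Finset.sum_map]
      rfl
    have e1 : zq (n+1) l i.castSucc = ((l i.castSucc + c i + 1 : ℕ) : ℚ) := by
      unfold zq
      congr 1
      simp only [hc, Fin.coe_castSucc]
      omega
    have e2 : zq (n+1) l i.succ = ((l i.succ + c i : ℕ) : ℚ) := by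
      unfold zq
      congr 1
      simp only [hc, Fin.val_succ]
      omega
    have hcast : Rm i.castSucc j.succ - Rm i.succ j.succ
        = (descPochhammer ℚ ((j:ℕ)+1)).eval ((l i.castSucc + c i + 1 : ℕ):ℚ)
          - (descPochhammer ℚ ((j:ℕ)+1)).eval ((l i.succ + c i : ℕ):ℚ) := by
      rw [hRm]
      simp only []
      rw [e1, e2, Fin.val_succ]
    rw [hmap, sum_descP (j:ℕ) _ _ (by have := hLU i; omega), hcast, div_eq_inv_mul]
  have hmat : (Matrix.of fun i j => ∑ t ∈ A i, g i t j)
      = Matrix.of (fun i j : Fin n => (((j:ℚ)+1))⁻¹ *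
          (Matrix.of (fun (i' j' : Fin n) => Rm i'.castSucc j'.succ - Rm i'.succ j'.succ) i j)) := by
    ext i j
    exact hrowpt i j
  have hR0 : ∀ i : Fin (n+1), Rm i 0 = 1 := by
    intro i
    simp [hRm, descPochhammer_zero]
  have hdR : Matrix.det (Matrix.of Rm) = (Matrix.vandermonde (zq (n+1) l)).det := by
    rw [Matrix.det_eval_matrixOfPolynomials_eq_det_vandermonde (zq (n+1) l)
      (fun j => descPochhammer ℚ (j:ℕ)) (fun j => descPochhammer_natDegree ℚ _)
      (fun j => monic_descPochhammer ℚ _)]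
  rw [hsum, hmat, Matrix.det_mul_row, det_rows_sub Rm hR0, hdR]
  have hprodinv : (∏ j : Fin n, (((j:ℚ)+1))⁻¹) = ((n.factorial : ℚ))⁻¹ := by
    rw [Finset.prod_inv_distrib, prod_fin_cast_add_one n]
  rw [hprodinv]
  have hfac : (n.factorial : ℚ) ≠ 0 := by
    exact_mod_cast Nat.factorial_ne_zero n
  field_simp

theorem gt_formula : ∀ (n : ℕ) (l : Fin n → ℕ), Antitone l →
    (gtcount n l : ℚ) * (Matrix.vandermonde (zq n 0)).det
      = (Matrix.vandermonde (zq n l)).det := by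
  intro n
  induction n with
  | zero =>
    intro l _
    simp [gtcount, Matrix.det_fin_zero]
  | succ n ih =>
    intro l hl
    have hsq : (-1:ℚ)^n * (-1:ℚ)^n = 1 := by
      rw [← pow_add, ← two_mul, pow_mul]; norm_num
    have hbox0 : gtbox (0 : Fin (n+1) → ℕ) = {(0 : Fin n → ℕ)} := by
      ext μ
      simp only [gtbox, Fintype.mem_piFinset, Pi.zero_apply, Finset.mem_Icc, Nat.le_zero,
        Finset.mem_singleton, funext_iff]
      constructor
      · intro h i; have := h i; omega
      · intro h i; have := h i; omega
    have h0 := step n (0 : Fin (n+1) → ℕ) (fun _ _ _ => le_rfl)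
    rw [hbox0, Finset.sum_singleton] at h0
    have hY : (Matrix.vandermonde (zq (n+1) (0 : Fin (n+1) → ℕ))).det
        = (-1:ℚ)^n * ((n.factorial : ℚ) * (Matrix.vandermonde (zq n (0 : Fin n → ℕ))).det) := by
      have h2 := congrArg (fun t => (-1:ℚ)^n * t) h0
      rw [← mul_assoc ((-1:ℚ)^n) ((-1:ℚ)^n) _, hsq, one_mul] at h2
      rw [← h2]
    have hmu : ∀ μ ∈ gtbox l, Antitone μ := by
      intro μ hμ
      rw [gtbox, Fintype.mem_piFinset] at hμ
      intro x y hxy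
      rcases eq_or_lt_of_le hxy with rfl | hlt
      · exact le_rfl
      · have hy := hμ y
        have hx := hμ x
        rw [Finset.mem_Icc] at hy hx
        calc μ y ≤ l y.castSucc := hy.2
          _ ≤ l x.succ := hl (by
            rw [Fin.le_def]
            simp only [Fin.coe_castSucc, Fin.val_succ]
            exact hlt)
          _ ≤ μ x := hx.1
    have hstep := step n l hl
    have hexp : ((gtcount (n+1) l : ℕ) : ℚ) = ∑ μ ∈ gtbox l, (gtcount n μ : ℚ) := by
      rw [show gtcount (n+1) l = ∑ μ ∈ gtbox l, gtcount n μ from rfl]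
      push_cast
      rfl
    calc (gtcount (n+1) l : ℚ) * (Matrix.vandermonde (zq (n+1) 0)).det
        = ∑ μ ∈ gtbox l, (gtcount n μ : ℚ) * (Matrix.vandermonde (zq (n+1) 0)).det := by
          rw [hexp, Finset.sum_mul]
      _ = ∑ μ ∈ gtbox l, ((-1:ℚ)^n * ((n.factorial : ℚ) *
            ((gtcount n μ : ℚ) * (Matrix.vandermonde (zq n (0 : Fin n → ℕ))).det))) := by
          refine Finset.sum_congr rfl fun μ _ => ?_
          rw [hY]
          ring
      _ = (-1:ℚ)^n * ((n.factorial : ℚ) *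
            ∑ μ ∈ gtbox l, (Matrix.vandermonde (zq n μ)).det) := by
          simp only [Finset.mul_sum]
          refine Finset.sum_congr rfl fun μ hμ => ?_
          rw [← ih μ (hmu μ hμ)]
      _ = (-1:ℚ)^n * ((-1:ℚ)^n * (Matrix.vandermonde (zq (n+1) l)).det) := by
          rw [hstep]
      _ = (Matrix.vandermonde (zq (n+1) l)).det := by
          rw [← mul_assoc, hsq, one_mul]

/-- Gelfand–Tsetlin pattern with `n` rows (row `r` has entries `0..r`), top row `l`. -/
def IsGT (n : ℕ) (l : Fin n → ℕ) (x : ℕ → ℕ → ℕ) : Prop :=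
  (∀ i : Fin n, x (n-1) (i:ℕ) = l i) ∧
  (∀ r i : ℕ, r + 2 ≤ n → i ≤ r → (x r i ≤ x (r+1) i ∧ x (r+1) (i+1) ≤ x r i)) ∧
  (∀ r i : ℕ, n ≤ r ∨ r < i → x r i = 0)

def gtTrunc (n : ℕ) (x : ℕ → ℕ → ℕ) : ℕ → ℕ → ℕ := fun r i => if r < n then x r i else 0

def gtExtend (n : ℕ) (l : Fin (n+1) → ℕ) (y : ℕ → ℕ → ℕ) : ℕ → ℕ → ℕ :=
  fun r i => if r = n then (if h : i < n+1 then l ⟨i, h⟩ else 0) else y r i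

lemma mem_gtbox_of {n : ℕ} {l : Fin (n+1) → ℕ} {x : ℕ → ℕ → ℕ} (hx : IsGT (n+1) l x) :
    (fun i : Fin n => x (n-1) (i:ℕ)) ∈ gtbox l := by
  rw [gtbox, Fintype.mem_piFinset]
  intro i
  rw [Finset.mem_Icc]
  have hn : 1 ≤ n := Nat.one_le_iff_ne_zero.mpr (by rintro rfl; exact i.elim0)
  have h2 := hx.2.1 (n-1) (i:ℕ) (by omega) (by omega)
  have e : n - 1 + 1 = n := by omega
  rw [e] at h2
  have t1 := hx.1 i.castSucc
  have t2 := hx.1 i.succ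
  simp only [Nat.add_sub_cancel, Fin.coe_castSucc, Fin.val_succ] at t1 t2
  exact ⟨le_trans (le_of_eq t2.symm) h2.2, le_trans h2.1 (le_of_eq t1)⟩

lemma isGT_trunc {n : ℕ} {l : Fin (n+1) → ℕ} {x : ℕ → ℕ → ℕ} (hx : IsGT (n+1) l x) :
    IsGT n (fun i : Fin n => x (n-1) (i:ℕ)) (gtTrunc n x) := by
  refine ⟨?_, ?_, ?_⟩
  · intro i
    have hn : 1 ≤ n := Nat.one_le_iff_ne_zero.mpr (by rintro rfl; exact i.elim0)
    simp only [gtTrunc, if_pos (show n - 1 < n by omega)]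
  · intro r i hr hi
    simp only [gtTrunc, if_pos (show r < n by omega), if_pos (show r + 1 < n by omega)]
    exact hx.2.1 r i (by omega) hi
  · intro r i h
    simp only [gtTrunc]
    rcases Nat.lt_or_ge r n with h' | h'
    · rw [if_pos h']
      rcases h with h | h
      · exact absurd h (by omega)
      · exact hx.2.2 r i (Or.inr h)
    · rw [if_neg (by omega)]

lemma isGT_extend {n : ℕ} {l : Fin (n+1) → ℕ} {μ : Fin n → ℕ} {y : ℕ → ℕ → ℕ}
    (hμ : μ ∈ gtbox l) (hy : IsGT n μ y) : IsGT (n+1) l (gtExtend n l y) := by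
  rw [gtbox, Fintype.mem_piFinset] at hμ
  refine ⟨?_, ?_, ?_⟩
  · intro i
    simp only [gtExtend, Nat.add_sub_cancel, if_true]
    rw [dif_pos i.isLt, Fin.eta]
  · intro r i hr hi
    rcases Nat.lt_or_ge (r+2) (n+1) with h' | h'
    · have hr1 : r + 1 ≠ n := by omega
      have hr0 : r ≠ n := by omega
      simp only [gtExtend, if_neg hr1, if_neg hr0]
      exact hy.2.1 r i (by omega) hi
    · have hn : n = r + 1 := by omega
      subst hn
      simp only [gtExtend, if_pos rfl, if_neg (show r ≠ r + 1 by omega),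
        dif_pos (show i < r + 2 by omega), dif_pos (show i + 1 < r + 2 by omega)]
      have htop := hy.1 ⟨i, by omega⟩
      simp only [Nat.add_sub_cancel] at htop
      rw [htop]
      have hb := hμ ⟨i, by omega⟩
      rw [Finset.mem_Icc] at hb
      constructor
      · exact le_trans hb.2 (le_of_eq (by congr 1))
      · exact le_trans (le_of_eq (by congr 1)) hb.1
  · intro r i h
    rcases h with h | h
    · simp only [gtExtend, if_neg (show r ≠ n by omega)]
      exact hy.2.2 r i (Or.inl (by omega))
    · simp only [gtExtend]
      rcases eq_or_ne r n with rfl | hrn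
      · rw [if_pos rfl, dif_neg (by omega)]
      · rw [if_neg hrn]
        exact hy.2.2 r i (Or.inr h)

lemma extend_trunc {n : ℕ} {l : Fin (n+1) → ℕ} {x : ℕ → ℕ → ℕ} (hx : IsGT (n+1) l x) :
    gtExtend n l (gtTrunc n x) = x := by
  funext r i
  simp only [gtExtend, gtTrunc]
  rcases eq_or_ne r n with heq | hrn
  · subst heq
    rcases Nat.lt_or_ge i (r+1) with h' | h'
    · rw [if_pos rfl, dif_pos h']
      have := hx.1 ⟨i, h'⟩
      simp only [Nat.add_sub_cancel] at this
      exact this.symm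
    · rw [if_pos rfl, dif_neg (by omega)]
      exact (hx.2.2 r i (Or.inr (by omega))).symm
  · rw [if_neg hrn]
    rcases Nat.lt_or_ge r n with h' | h'
    · rw [if_pos h']
    · rw [if_neg (by omega)]
      exact (hx.2.2 r i (Or.inl (by omega))).symm

lemma trunc_extend {n : ℕ} {l : Fin (n+1) → ℕ} {μ : Fin n → ℕ} {y : ℕ → ℕ → ℕ}
    (hy : IsGT n μ y) : gtTrunc n (gtExtend n l y) = y := by
  funext r i
  simp only [gtExtend, gtTrunc]
  rcases Nat.lt_or_ge r n with h' | h'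
  · rw [if_pos h', if_neg (by omega)]
  · rw [if_neg (by omega)]
    exact (hy.2.2 r i (Or.inl h')).symm

def gtEquiv (n : ℕ) (l : Fin (n+1) → ℕ) :
    {x : ℕ → ℕ → ℕ // IsGT (n+1) l x} ≃
      Σ μ : {m : Fin n → ℕ // m ∈ gtbox l}, {y : ℕ → ℕ → ℕ // IsGT n μ.1 y} where
  toFun x := ⟨⟨fun i : Fin n => x.1 (n-1) (i:ℕ), mem_gtbox_of x.2⟩,
    ⟨gtTrunc n x.1, isGT_trunc x.2⟩⟩
  invFun p := ⟨gtExtend n l p.2.1, isGT_extend p.1.2 p.2.2⟩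
  left_inv x := Subtype.ext (extend_trunc x.2)
  right_inv p := by
    rcases p with ⟨⟨μ, hμ⟩, ⟨y, hy⟩⟩
    have h1 : (fun i : Fin n => gtExtend n l y (n-1) (i:ℕ)) = μ := by
      funext i
      have hn : 1 ≤ n := Nat.one_le_iff_ne_zero.mpr (by rintro rfl; exact i.elim0)
      simp only [gtExtend, if_neg (show n - 1 ≠ n by omega)]
      have := hy.1 i
      exact this
    subst h1
    exact Sigma.ext (Subtype.ext rfl) (heq_of_eq (Subtype.ext (trunc_extend hy)))

lemma gt_finite_card : ∀ (n : ℕ) (l : Fin n → ℕ),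
    Finite {x : ℕ → ℕ → ℕ // IsGT n l x} ∧
      Nat.card {x : ℕ → ℕ → ℕ // IsGT n l x} = gtcount n l := by
  intro n
  induction n with
  | zero =>
    intro l
    have huniq : ∀ p : {x : ℕ → ℕ → ℕ // IsGT 0 l x}, p = ⟨fun _ _ => 0,
        ⟨fun i => i.elim0, fun r i h _ => by omega, fun r i _ => rfl⟩⟩ := by
      rintro ⟨x, hx⟩
      refine Subtype.ext ?_
      funext r i
      exact hx.2.2 r i (Or.inl (Nat.zero_le _))
    haveI : Unique {x : ℕ → ℕ → ℕ // IsGT 0 l x} :=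
      ⟨⟨⟨fun _ _ => 0, ⟨fun i => i.elim0, fun r i h _ => by omega, fun r i _ => rfl⟩⟩⟩, huniq⟩
    exact ⟨Finite.of_subsingleton, Nat.card_unique⟩
  | succ n ih =>
    intro l
    have e := gtEquiv n l
    haveI hfin : ∀ μ : {m : Fin n → ℕ // m ∈ gtbox l}, Finite {y : ℕ → ℕ → ℕ // IsGT n μ.1 y} :=
      fun μ => (ih μ.1).1
    haveI : Finite (Σ μ : {m : Fin n → ℕ // m ∈ gtbox l}, {y : ℕ → ℕ → ℕ // IsGT n μ.1 y}) := by
      infer_instance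
    constructor
    · exact Finite.of_equiv _ e.symm
    · rw [Nat.card_congr e]
      letI : ∀ μ : {m : Fin n → ℕ // m ∈ gtbox l}, Fintype {y : ℕ → ℕ → ℕ // IsGT n μ.1 y} :=
        fun μ => Fintype.ofFinite _
      rw [Nat.card_eq_fintype_card, Fintype.card_sigma]
      have : ∀ μ : {m : Fin n → ℕ // m ∈ gtbox l},
          Fintype.card {y : ℕ → ℕ → ℕ // IsGT n μ.1 y} = gtcount n μ.1 := by
        intro μ
        rw [← Nat.card_eq_fintype_card]
        exact (ih μ.1).2
      rw [Finset.sum_congr rfl (fun μ _ => this μ)]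
      rw [show gtcount (n+1) l = ∑ μ ∈ gtbox l, gtcount n μ from rfl]
      exact Finset.sum_coe_sort (gtbox l) (gtcount n)

lemma mem_rectBoxes {a b i j : ℕ} :
    (i,j) ∈ rectBoxes a b ↔ 1 ≤ i ∧ i ≤ a ∧ 1 ≤ j ∧ j ≤ b := by
  simp only [rectBoxes, Finset.mem_product, Finset.mem_Icc]
  tauto

/-- Top row of the GT pattern for the `a×b` box bounded by `k`. -/
def topRow (a b k : ℕ) : Fin (a+b) → ℕ := fun i => if (i:ℕ) < a then k else 0

def ppToGT (a b k : ℕ) (P : ℕ × ℕ → ℕ) : ℕ → ℕ → ℕ :=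
  fun r i => if i < a ∧ i ≤ r ∧ r < a + b then (if i + b ≤ r then k else P (i+1, r-i+1)) else 0

def gtToPP (a b : ℕ) (x : ℕ → ℕ → ℕ) : ℕ × ℕ → ℕ :=
  fun q => if 1 ≤ q.1 ∧ q.1 ≤ a ∧ 1 ≤ q.2 ∧ q.2 ≤ b then x (q.1 + q.2 - 2) (q.1 - 1) else 0

lemma gt_chain_up {n : ℕ} {l : Fin n → ℕ} {x : ℕ → ℕ → ℕ} (hx : IsGT n l x) :
    ∀ (t r i : ℕ), i ≤ r → r + t + 1 ≤ n → x r i ≤ x (r+t) i := by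
  intro t
  induction t with
  | zero => intro r i _ _; exact le_rfl
  | succ t ih =>
    intro r i hi hrt
    calc x r i ≤ x (r+t) i := ih r i hi (by omega)
      _ ≤ x (r+t+1) i := (hx.2.1 (r+t) i (by omega) (by omega)).1

lemma gt_chain_diag {n : ℕ} {l : Fin n → ℕ} {x : ℕ → ℕ → ℕ} (hx : IsGT n l x) :
    ∀ (t r i : ℕ), i ≤ r → r + t + 1 ≤ n → x (r+t) (i+t) ≤ x r i := by
  intro t
  induction t with
  | zero => intro r i _ _; exact le_rfl
  | succ t ih =>
    intro r i hi hrt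
    calc x (r+t+1) (i+t+1) ≤ x (r+t) (i+t) := (hx.2.1 (r+t) (i+t) (by omega) (by omega)).2
      _ ≤ x r i := ih r i hi (by omega)

lemma isGT_ppToGT {a b k : ℕ} {P : ℕ × ℕ → ℕ} (hP : IsPP (rectBoxes a b) k P) :
    IsGT (a+b) (topRow a b k) (ppToGT a b k P) := by
  refine ⟨?_, ?_, ?_⟩
  · intro i
    have hn : (i:ℕ) < a + b := i.isLt
    simp only [ppToGT, topRow]
    by_cases h1 : (i:ℕ) < a
    · rw [if_pos ⟨h1, by omega, by omega⟩, if_pos (by omega), if_pos h1]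
    · rw [if_neg (by omega), if_neg h1]
  · intro r i hr hi
    simp only [ppToGT]
    constructor
    · by_cases h1 : i < a
      · rw [if_pos (show i < a ∧ i ≤ r ∧ r < a+b from ⟨h1, hi, by omega⟩),
          if_pos (show i < a ∧ i ≤ r+1 ∧ r+1 < a+b from ⟨h1, by omega, by omega⟩)]
        by_cases h2 : i + b ≤ r
        · rw [if_pos h2, if_pos (show i + b ≤ r + 1 by omega)]
        · rw [if_neg h2]
          by_cases h3 : i + b ≤ r + 1
          · rw [if_pos h3, show r - i + 1 = b by omega]
            exact hP.1 (i+1, b) (mem_rectBoxes.mpr ⟨by omega, by omega, by omega, by omega⟩)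
          · rw [if_neg h3, show r + 1 - i + 1 = (r - i + 1) + 1 by omega]
            exact hP.2.2.1 (i+1) (r-i+1)
              (mem_rectBoxes.mpr ⟨by omega, by omega, by omega, by omega⟩)
              (mem_rectBoxes.mpr ⟨by omega, by omega, by omega, by omega⟩)
      · rw [if_neg (show ¬(i < a ∧ i ≤ r ∧ r < a+b) by omega)]
        exact Nat.zero_le _
    · by_cases h1 : i + 1 < a
      · rw [if_pos (show i+1 < a ∧ i+1 ≤ r+1 ∧ r+1 < a+b from ⟨h1, by omega, by omega⟩),
          if_pos (show i < a ∧ i ≤ r ∧ r < a+b from ⟨by omega, hi, by omega⟩)]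
        by_cases h2 : i + b ≤ r
        · rw [if_pos (show i+1+b ≤ r+1 by omega), if_pos h2]
        · rw [if_neg (show ¬(i+1+b ≤ r+1) by omega), if_neg h2,
            show r + 1 - (i+1) + 1 = r - i + 1 by omega]
          exact hP.2.2.2 (i+1) (r-i+1)
            (mem_rectBoxes.mpr ⟨by omega, by omega, by omega, by omega⟩)
            (mem_rectBoxes.mpr ⟨by omega, by omega, by omega, by omega⟩)
      · rw [if_neg (show ¬(i+1 < a ∧ i+1 ≤ r+1 ∧ r+1 < a+b) by omega)]
        exact Nat.zero_le _
  · intro r i h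
    simp only [ppToGT]
    rw [if_neg (by omega)]

lemma isPP_gtToPP {a b k : ℕ} {x : ℕ → ℕ → ℕ} (hx : IsGT (a+b) (topRow a b k) x) :
    IsPP (rectBoxes a b) k (gtToPP a b x) := by
  refine ⟨?_, ?_, ?_, ?_⟩
  · rintro ⟨i, j⟩ hq
    rw [mem_rectBoxes] at hq
    simp only [gtToPP]
    rw [if_pos (by omega)]
    have hch := gt_chain_up hx ((a+b-1) - (i+j-2)) (i+j-2) (i-1) (by omega) (by omega)
    rw [show (i+j-2) + ((a+b-1) - (i+j-2)) = a+b-1 by omega] at hch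
    have htop := hx.1 ⟨i-1, by omega⟩
    simp only [topRow] at htop
    rw [if_pos (by omega : i-1 < a)] at htop
    exact le_trans hch (le_of_eq htop)
  · rintro ⟨i, j⟩ hq
    simp only [gtToPP]
    rw [if_neg (fun hc => hq (mem_rectBoxes.mpr hc))]
  · intro i j h1 h2
    rw [mem_rectBoxes] at h1 h2
    simp only [gtToPP]
    rw [if_pos (by omega), if_pos (by omega)]
    have := (hx.2.1 (i+j-2) (i-1) (by omega) (by omega)).1
    rw [show i + (j+1) - 2 = (i+j-2) + 1 by omega]
    exact this
  · intro i j h1 h2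
    rw [mem_rectBoxes] at h1 h2
    simp only [gtToPP]
    rw [if_pos (by omega), if_pos (by omega)]
    have := (hx.2.1 (i+j-2) (i-1) (by omega) (by omega)).2
    rw [show i + 1 + j - 2 = (i+j-2) + 1 by omega, show i + 1 - 1 = (i-1) + 1 by omega]
    exact this

lemma gtToPP_ppToGT {a b k : ℕ} {P : ℕ × ℕ → ℕ} (hP : IsPP (rectBoxes a b) k P) :
    gtToPP a b (ppToGT a b k P) = P := by
  funext q
  rcases q with ⟨i, j⟩
  simp only [gtToPP, ppToGT]
  by_cases hq : 1 ≤ i ∧ i ≤ a ∧ 1 ≤ j ∧ j ≤ b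
  · rw [if_pos hq, if_pos (by omega), if_neg (by omega),
      show i - 1 + 1 = i by omega, show i + j - 2 - (i-1) + 1 = j by omega]
  · rw [if_neg hq]
    exact (hP.2.1 (i,j) (fun hm => hq (mem_rectBoxes.mp hm))).symm

lemma ppToGT_gtToPP {a b k : ℕ} {x : ℕ → ℕ → ℕ} (hx : IsGT (a+b) (topRow a b k) x) :
    ppToGT a b k (gtToPP a b x) = x := by
  funext r i
  simp only [ppToGT, gtToPP]
  by_cases ho : i < a ∧ i ≤ r ∧ r < a + b
  · rw [if_pos ho]
    by_cases h2 : i + b ≤ r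
    · rw [if_pos h2]
      have hle : x r i ≤ k := by
        have hch := gt_chain_up hx ((a+b-1) - r) r i (by omega) (by omega)
        rw [show r + ((a+b-1) - r) = a+b-1 by omega] at hch
        have htop := hx.1 ⟨i, by omega⟩
        simp only [topRow] at htop
        rw [if_pos (by omega : i < a)] at htop
        exact le_trans hch (le_of_eq htop)
      have hge : k ≤ x r i := by
        have hch := gt_chain_diag hx ((a+b-1) - r) r i (by omega) (by omega)
        rw [show r + ((a+b-1) - r) = a+b-1 by omega] at hch
        have htop := hx.1 ⟨i + ((a+b-1) - r), by omega⟩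
        simp only [topRow] at htop
        rw [if_pos (by omega : i + ((a+b-1) - r) < a)] at htop
        exact le_trans (le_of_eq htop.symm) hch
      omega
    · rw [if_neg h2, if_pos (show 1 ≤ i+1 ∧ i+1 ≤ a ∧ 1 ≤ r-i+1 ∧ r-i+1 ≤ b by omega),
        show i + 1 + (r-i+1) - 2 = r by omega, show i + 1 - 1 = i by omega]
  · rw [if_neg ho]
    by_cases hir : i ≤ r
    · by_cases hrn : r < a + b
      · have hch := gt_chain_up hx ((a+b-1) - r) r i hir (by omega)
        rw [show r + ((a+b-1) - r) = a+b-1 by omega] at hch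
        have htop := hx.1 ⟨i, by omega⟩
        simp only [topRow] at htop
        rw [if_neg (by omega : ¬ i < a)] at htop
        omega
      · exact (hx.2.2 r i (Or.inl (by omega))).symm
    · exact (hx.2.2 r i (Or.inr (by omega))).symm

def ppEquiv (a b k : ℕ) :
    {P : ℕ × ℕ → ℕ // IsPP (rectBoxes a b) k P} ≃
      {x : ℕ → ℕ → ℕ // IsGT (a+b) (topRow a b k) x} where
  toFun P := ⟨ppToGT a b k P.1, isGT_ppToGT P.2⟩
  invFun x := ⟨gtToPP a b x.1, isPP_gtToPP x.2⟩
  left_inv P := Subtype.ext (gtToPP_ppToGT P.2)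
  right_inv x := Subtype.ext (ppToGT_gtToPP x.2)

/-- MacMahon's formula: the number of plane partitions in the `a × b` rectangle
bounded by `k` equals `∏_{1 ≤ i ≤ a} ∏_{1 ≤ j ≤ b} (k+i+j-1)/(i+j-1)`. -/
theorem statement0 (a b k : ℕ) :
    (Nat.card {P : ℕ × ℕ → ℕ // IsPP (rectBoxes a b) k P} : ℚ) =
      ∏ i ∈ Finset.Icc 1 a, ∏ j ∈ Finset.Icc 1 b,
        (((k : ℚ) + (i : ℚ) + (j : ℚ) - 1) / ((i : ℚ) + (j : ℚ) - 1)) := by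
  classical
  by_cases hab : a = 0 ∨ b = 0
  · have hD : rectBoxes a b = ∅ := by
      rcases hab with rfl | rfl
      · simp [rectBoxes]
      · simp [rectBoxes]
    haveI : Unique {P : ℕ × ℕ → ℕ // IsPP (rectBoxes a b) k P} := by
      refine ⟨⟨⟨fun _ => 0, ?_⟩⟩, ?_⟩
      · rw [hD]
        exact ⟨fun x hx => absurd hx (Finset.notMem_empty x), fun _ _ => rfl,
          fun i j h _ => absurd h (Finset.notMem_empty _),
          fun i j h _ => absurd h (Finset.notMem_empty _)⟩
      · intro p
        refine Subtype.ext (funext fun q => ?_)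
        exact p.2.2.1 q (by rw [hD]; exact Finset.notMem_empty q)
    rw [Nat.card_unique]
    rcases hab with rfl | rfl
    · simp
    · simp
  · push_neg at hab
    have ha : 1 ≤ a := Nat.one_le_iff_ne_zero.mpr hab.1
    have hb : 1 ≤ b := Nat.one_le_iff_ne_zero.mpr hab.2
    have hcard : Nat.card {P : ℕ × ℕ → ℕ // IsPP (rectBoxes a b) k P}
        = gtcount (a+b) (topRow a b k) := by
      rw [Nat.card_congr (ppEquiv a b k)]
      exact (gt_finite_card (a+b) (topRow a b k)).2
    rw [hcard]
    have hanti : Antitone (topRow a b k) := by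
      intro x y hxy
      have hv : (x:ℕ) ≤ (y:ℕ) := hxy
      simp only [topRow]
      split_ifs <;> omega
    have hform := gt_formula (a+b) (topRow a b k) hanti
    have hzq : ∀ (l : Fin (a+b) → ℕ) (i : Fin (a+b)),
        zq (a+b) l i = (l i : ℚ) + ((a:ℚ) + (b:ℚ)) - 1 - ((i:ℕ):ℚ) := by
      intro l i
      have hi1 : (i:ℕ) ≤ a + b - 1 := by omega
      have hn1 : 1 ≤ a + b := by omega
      simp only [zq]
      rw [Nat.cast_add, Nat.cast_sub hi1, Nat.cast_sub hn1, Nat.cast_one, Nat.cast_add]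
      ring
    have hV0 : (Matrix.vandermonde (zq (a+b) 0)).det ≠ 0 := by
      rw [Matrix.det_vandermonde_ne_zero_iff]
      intro i j hij
      rw [hzq, hzq] at hij
      simp only [Pi.zero_apply, Nat.cast_zero] at hij
      have : ((i:ℕ):ℚ) = ((j:ℕ):ℚ) := by linarith
      exact Fin.ext (by exact_mod_cast this)
    set c : Fin (a+b) → Fin (a+b) → ℚ := fun i j =>
      if (i:ℕ) < a ∧ a ≤ (j:ℕ) then ((k:ℚ) + ((j:ℕ):ℚ) - ((i:ℕ):ℚ)) / (((j:ℕ):ℚ) - ((i:ℕ):ℚ))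
      else 1 with hcdef
    have hpair : ∀ i j : Fin (a+b), i < j →
        zq (a+b) (topRow a b k) j - zq (a+b) (topRow a b k) i
          = (zq (a+b) 0 j - zq (a+b) 0 i) * c i j := by
      intro i j hij
      have hvij : (i:ℕ) < (j:ℕ) := hij
      have hne : ((j:ℕ):ℚ) - ((i:ℕ):ℚ) ≠ 0 := by
        have : ((i:ℕ):ℚ) < ((j:ℕ):ℚ) := by exact_mod_cast hvij
        linarith
      rw [hzq, hzq, hzq, hzq]
      simp only [Pi.zero_apply, Nat.cast_zero, hcdef]
      by_cases hc : (i:ℕ) < a ∧ a ≤ (j:ℕ)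
      · rw [if_pos hc]
        rw [show topRow a b k i = k from by simp only [topRow]; rw [if_pos hc.1],
          show topRow a b k j = 0 from by simp only [topRow]; rw [if_neg (by omega)]]
        field_simp
        ring
      · rw [if_neg hc, mul_one]
        rw [show topRow a b k i = topRow a b k j from by
          simp only [topRow]; split_ifs <;> omega]
        ring
    have hVl : (Matrix.vandermonde (zq (a+b) (topRow a b k))).det
        = (Matrix.vandermonde (zq (a+b) 0)).det * ∏ i, ∏ j ∈ Finset.Ioi i, c i j := by
      rw [Matrix.det_vandermonde, Matrix.det_vandermonde]
      rw [← Finset.prod_mul_distrib]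
      refine Finset.prod_congr rfl fun i _ => ?_
      rw [← Finset.prod_mul_distrib]
      refine Finset.prod_congr rfl fun j hj => ?_
      exact hpair i j (Finset.mem_Ioi.mp hj)
    have hgt : (gtcount (a+b) (topRow a b k) : ℚ) = ∏ i, ∏ j ∈ Finset.Ioi i, c i j := by
      have h2 : (gtcount (a+b) (topRow a b k) : ℚ) * (Matrix.vandermonde (zq (a+b) 0)).det
          = (∏ i, ∏ j ∈ Finset.Ioi i, c i j) * (Matrix.vandermonde (zq (a+b) 0)).det := by
        rw [hform, hVl]; ring
      exact mul_right_cancel₀ hV0 h2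
    rw [hgt]
    -- Now reindex the product
    rw [Finset.prod_sigma' Finset.univ (fun i => Finset.Ioi i) (fun i j => c i j)]
    rw [← Finset.prod_filter_mul_prod_filter_not
      (Finset.univ.sigma fun i : Fin (a+b) => Finset.Ioi i)
      (fun p => (p.1:ℕ) < a ∧ a ≤ (p.2:ℕ))]
    have hone : ∏ p ∈ (Finset.univ.sigma fun i : Fin (a+b) => Finset.Ioi i).filter
        (fun p => ¬((p.1:ℕ) < a ∧ a ≤ (p.2:ℕ))), c p.1 p.2 = 1 := by
      refine Finset.prod_eq_one fun p hp => ?_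
      rw [Finset.mem_filter] at hp
      simp only [hcdef]
      rw [if_neg hp.2]
    rw [hone, mul_one]
    have htarget : ∏ i ∈ Finset.Icc 1 a, ∏ j ∈ Finset.Icc 1 b,
        (((k : ℚ) + (i : ℚ) + (j : ℚ) - 1) / ((i : ℚ) + (j : ℚ) - 1))
        = ∏ q ∈ Finset.Icc 1 a ×ˢ Finset.Icc 1 b,
            (((k : ℚ) + (q.1 : ℚ) + (q.2 : ℚ) - 1) / ((q.1 : ℚ) + (q.2 : ℚ) - 1)) := by
      exact (Finset.prod_product' _ _ _).symm
    rw [htarget]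
    refine Finset.prod_nbij' (fun p => (a - (p.1:ℕ), (p.2:ℕ) - a + 1))
      (fun q => ⟨⟨a - q.1, by omega⟩, ⟨min (q.2 + a - 1) (a+b-1), by omega⟩⟩)
      ?_ ?_ ?_ ?_ ?_
    · intro p hp
      obtain ⟨p1, p2⟩ := p
      rw [Finset.mem_filter, Finset.mem_sigma] at hp
      obtain ⟨⟨-, hio⟩, h2⟩ := hp
      have hlt' := Finset.mem_Ioi.mp hio
      have hlt : (p1:ℕ) < (p2:ℕ) := hlt'
      have hj : (p2:ℕ) < a + b := p2.isLt
      simp only [Finset.mem_product, Finset.mem_Icc]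
      dsimp only at h2 ⊢
      omega
    · intro q hq
      rw [Finset.mem_product, Finset.mem_Icc, Finset.mem_Icc] at hq
      rw [Finset.mem_filter, Finset.mem_sigma]
      refine ⟨⟨Finset.mem_univ _, Finset.mem_Ioi.mpr ?_⟩, ?_⟩
      · rw [Fin.mk_lt_mk]
        omega
      · dsimp only
        omega
    · intro p hp
      obtain ⟨p1, p2⟩ := p
      rw [Finset.mem_filter, Finset.mem_sigma] at hp
      obtain ⟨⟨-, hio⟩, h2⟩ := hp
      have hlt' := Finset.mem_Ioi.mp hio
      have hlt : (p1:ℕ) < (p2:ℕ) := hlt'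
      have hj : (p2:ℕ) < a + b := p2.isLt
      dsimp only at h2
      refine Sigma.ext (Fin.ext ?_) (heq_of_eq (Fin.ext ?_)) <;> dsimp only <;> omega
    · intro q hq
      rw [Finset.mem_product, Finset.mem_Icc, Finset.mem_Icc] at hq
      rw [Prod.ext_iff]
      dsimp only
      constructor <;> omega
    · intro p hp
      obtain ⟨p1, p2⟩ := p
      rw [Finset.mem_filter, Finset.mem_sigma] at hp
      obtain ⟨⟨-, hio⟩, h2⟩ := hp
      have hlt' := Finset.mem_Ioi.mp hio
      have hlt : (p1:ℕ) < (p2:ℕ) := hlt'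
      have hj : (p2:ℕ) < a + b := p2.isLt
      dsimp only at h2 ⊢
      simp only [hcdef]
      rw [if_pos h2]
      have e1 : ((a - (p1:ℕ) : ℕ) : ℚ) = (a:ℚ) - ((p1:ℕ):ℚ) := by
        rw [Nat.cast_sub (by omega)]
      have e2 : (((p2:ℕ) - a + 1 : ℕ) : ℚ) = ((p2:ℕ):ℚ) - (a:ℚ) + 1 := by
        rw [Nat.cast_add, Nat.cast_sub (by omega), Nat.cast_one]
      rw [e1, e2]
      congr 1 <;> ring
end

section
/- Let n, k be positive integers with k ≤ n. The set of plane partitions in the (n−k)-staircase bounded by k is in bijection with (in particular, equinumerous to) the set of facets of the k-th order complex Δ_k of the poset X_n = {(i,j) : 1 ≤ i ≤ j ≤ n} ordered by (i,j) ≤ (i′,j′) if and only if i ≤ i′ and j ≥ j′. -/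
/-- The boxes of the `m`-staircase: pairs `(i, j)` of positive integers with `i + j ≤ m + 1`. -/
def staircaseBoxes (m : ℕ) : Finset (ℕ × ℕ) :=
  (Finset.Icc 1 m ×ˢ Finset.Icc 1 m).filter fun x => x.1 + x.2 ≤ m + 1

/-- The ground set of the poset `X_n = {(i,j) : 1 ≤ i ≤ j ≤ n}`. -/
def Xn (n : ℕ) : Finset (ℕ × ℕ) :=
  (Finset.Icc 1 n ×ˢ Finset.Icc 1 n).filter fun x => x.1 ≤ x.2

/-- `A` is an antichain with respect to the relation `le`. -/
def IsAntichainIn {α : Type*} (le : α → α → Prop) (A : Finset α) : Prop :=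
  ∀ a ∈ A, ∀ b ∈ A, a ≠ b → ¬ le a b ∧ ¬ le b a

/-- `S` has width at most `k` with respect to the relation `le`. -/
def WidthLE {α : Type*} (le : α → α → Prop) (S : Finset α) (k : ℕ) : Prop :=
  ∀ A : Finset α, A ⊆ S → IsAntichainIn le A → A.card ≤ k

/-- `S` is a facet of the `k`-th order complex `Δ_k(X)`. -/
def IsFacet {α : Type*} (le : α → α → Prop) (X : Finset α) (k : ℕ) (S : Finset α) : Prop :=
  S ⊆ X ∧ WidthLE le S k ∧
    ∀ S' : Finset α, S' ⊆ X → WidthLE le S' k → S ⊆ S' → S' = S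

namespace St4
open Finset
attribute [local instance] Classical.propDecidable
noncomputable section

/-- the order relation on `X_n`. -/
abbrev R : ℕ × ℕ → ℕ × ℕ → Prop := fun x y => x.1 ≤ y.1 ∧ y.2 ≤ x.2

/-- strict product order -/
abbrev SLT (a b : ℕ × ℕ) : Prop := a.1 < b.1 ∧ a.2 < b.2

lemma mem_Xn {n : ℕ} {x : ℕ × ℕ} : x ∈ Xn n ↔ 1 ≤ x.1 ∧ x.1 ≤ x.2 ∧ x.2 ≤ n := by
  cases x with
  | mk i j => simp [Xn, Finset.mem_filter, Finset.mem_product]; omega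

lemma mem_D {m : ℕ} {x : ℕ × ℕ} :
    x ∈ staircaseBoxes m ↔ 1 ≤ x.1 ∧ 1 ≤ x.2 ∧ x.1 + x.2 ≤ m + 1 := by
  cases x with
  | mk a b => simp [staircaseBoxes, Finset.mem_filter, Finset.mem_product]; omega

/-- pairwise strictly comparable -/
def PC (A : Finset (ℕ × ℕ)) : Prop :=
  ∀ a ∈ A, ∀ b ∈ A, a ≠ b → SLT a b ∨ SLT b a

lemma pc_iff_antichain {A : Finset (ℕ × ℕ)} : PC A ↔ IsAntichainIn R A := by
  constructor
  · intro h a ha b hb hab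
    rcases h a ha b hb hab with ⟨h1, h2⟩ | ⟨h1, h2⟩ <;>
      exact ⟨by simp only [R]; omega, by simp only [R]; omega⟩
  · intro h a ha b hb hab
    obtain ⟨h1, h2⟩ := h a ha b hb hab
    simp only [R, not_and, not_le] at h1 h2
    rcases Nat.lt_trichotomy a.1 b.1 with hc | hc | hc
    · exact Or.inl ⟨hc, by omega⟩
    · exfalso
      rcases Nat.lt_trichotomy a.2 b.2 with hd | hd | hd
      · omega
      · exact hab (Prod.ext hc hd)
      · omega
    · exact Or.inr ⟨hc, by omega⟩

lemma pc_subset {A B : Finset (ℕ × ℕ)} (h : B ⊆ A) (hA : PC A) : PC B :=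
  fun a ha b hb hab => hA a (h ha) b (h hb) hab

lemma pc_empty : PC (∅ : Finset (ℕ × ℕ)) := by intro a ha; simp at ha

lemma pc_insert {A : Finset (ℕ × ℕ)} {z : ℕ × ℕ} (hA : PC A)
    (h : ∀ p ∈ A, SLT p z ∨ SLT z p) : PC (insert z A) := by
  intro a ha b hb hab
  rcases Finset.mem_insert.mp ha with rfl | ha'
  · rcases Finset.mem_insert.mp hb with rfl | hb'
    · exact absurd rfl hab
    · rcases h b hb' with hh | hh
      · exact Or.inr hh
      · exact Or.inl hh
  · rcases Finset.mem_insert.mp hb with rfl | hb'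
    · exact h a ha'
    · exact hA a ha' b hb' hab

lemma pc_fst_injOn {A : Finset (ℕ × ℕ)} (hA : PC A) :
    Set.InjOn Prod.fst (A : Set (ℕ × ℕ)) := by
  intro a ha b hb hab
  by_contra hne
  rcases hA a ha b hb hne with ⟨h1, _⟩ | ⟨h1, _⟩ <;> omega

lemma pc_snd_injOn {A : Finset (ℕ × ℕ)} (hA : PC A) :
    Set.InjOn Prod.snd (A : Set (ℕ × ℕ)) := by
  intro a ha b hb hab
  by_contra hne
  rcases hA a ha b hb hne with ⟨_, h1⟩ | ⟨_, h1⟩ <;> omega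

/-- card bound via first coordinates lying in `Icc lo hi` -/
lemma pc_card_le_fst {A : Finset (ℕ × ℕ)} (hA : PC A) {lo hi : ℕ}
    (h : ∀ p ∈ A, p.1 ∈ Finset.Icc lo hi) : A.card ≤ hi + 1 - lo := by
  have := Finset.card_le_card_of_injOn Prod.fst (fun p hp => h p hp) (pc_fst_injOn hA)
  simpa [Nat.card_Icc] using this

lemma pc_card_le_snd {A : Finset (ℕ × ℕ)} (hA : PC A) {lo hi : ℕ}
    (h : ∀ p ∈ A, p.2 ∈ Finset.Icc lo hi) : A.card ≤ hi + 1 - lo := by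
  have := Finset.card_le_card_of_injOn Prod.snd (fun p hp => h p hp) (pc_snd_injOn hA)
  simpa [Nat.card_Icc] using this

/-- there's a maximal element in a nonempty PC set -/
lemma pc_exists_max {A : Finset (ℕ × ℕ)} (hA : PC A) (hne : A.Nonempty) :
    ∃ z ∈ A, ∀ p ∈ A, p ≠ z → SLT p z := by
  obtain ⟨z, hz, hmax⟩ := Finset.exists_max_image A Prod.fst hne
  refine ⟨z, hz, fun p hp hpz => ?_⟩
  rcases hA p hp z hz hpz with h | h
  · exact h
  · exact absurd (hmax p hp) (by omega)

/-! ### chain statistics -/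

/-- `S` contains a strictly increasing chain (= antichain of `R`) of
cardinality `r` bounded above by `(i,j)`. -/
def HasAC (S : Finset (ℕ × ℕ)) (r : ℕ) (i j : ℤ) : Prop :=
  ∃ A : Finset (ℕ × ℕ), A ⊆ S ∧ PC A ∧ A.card = r ∧
    ∀ p ∈ A, (p.1 : ℤ) ≤ i ∧ (p.2 : ℤ) ≤ j

lemma hasAC_zero (S : Finset (ℕ × ℕ)) (i j : ℤ) : HasAC S 0 i j :=
  ⟨∅, by simp, pc_empty, by simp, by simp⟩

lemma hasAC_mono_bound {S : Finset (ℕ × ℕ)} {r : ℕ} {i j i' j' : ℤ}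
    (hi : i ≤ i') (hj : j ≤ j') (h : HasAC S r i j) : HasAC S r i' j' := by
  obtain ⟨A, h1, h2, h3, h4⟩ := h
  exact ⟨A, h1, h2, h3, fun p hp => ⟨le_trans (h4 p hp).1 hi, le_trans (h4 p hp).2 hj⟩⟩

lemma hasAC_mono_set {S S' : Finset (ℕ × ℕ)} {r : ℕ} {i j : ℤ}
    (hS : S ⊆ S') (h : HasAC S r i j) : HasAC S' r i j := by
  obtain ⟨A, h1, h2, h3, h4⟩ := h
  exact ⟨A, h1.trans hS, h2, h3, h4⟩

lemma hasAC_card_le {S : Finset (ℕ × ℕ)} {r d : ℕ} {i j : ℤ}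
    (h : HasAC S r i j) (hd : d ≤ r) : HasAC S d i j := by
  obtain ⟨A, h1, h2, h3, h4⟩ := h
  obtain ⟨B, hBA, hBcard⟩ := Finset.exists_subset_card_eq (s := A) (n := d) (by omega)
  exact ⟨B, hBA.trans h1, pc_subset hBA h2, hBcard, fun p hp => h4 p (hBA hp)⟩

/-- positivity constraints: a chain of size `r ≥ 1` inside `Xn` needs room. -/
lemma hasAC_pos {n : ℕ} {S : Finset (ℕ × ℕ)} {r : ℕ} {i j : ℤ}
    (hS : S ⊆ Xn n) (h : HasAC S r i j) (hr : 1 ≤ r) : (r : ℤ) ≤ i ∧ (r : ℤ) ≤ j := by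
  obtain ⟨A, h1, h2, h3, h4⟩ := h
  have hb : ∀ p ∈ A, 1 ≤ p.1 ∧ p.1 ≤ p.2 := by
    intro p hp
    have := mem_Xn.mp (hS (h1 hp))
    exact ⟨this.1, this.2.1⟩
  -- i ≥ r : fst coords are r distinct values in [1, i]
  have hi0 : (1 : ℤ) ≤ i := by
    obtain ⟨p, hp⟩ := Finset.card_pos.mp (by omega : 0 < A.card)
    have := (h4 p hp).1; have := (hb p hp).1; omega
  have hj0 : (1 : ℤ) ≤ j := by
    obtain ⟨p, hp⟩ := Finset.card_pos.mp (by omega : 0 < A.card)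
    have := (h4 p hp).2; have := (hb p hp).1; have := (hb p hp).2; omega
  constructor
  · have := pc_card_le_fst h2 (lo := 1) (hi := i.toNat) (fun p hp => by
      have := (h4 p hp).1; have := (hb p hp).1
      simp only [Finset.mem_Icc]; omega)
    omega
  · have := pc_card_le_snd h2 (lo := 1) (hi := j.toNat) (fun p hp => by
      have := (h4 p hp).2; have := (hb p hp).1; have := (hb p hp).2
      simp only [Finset.mem_Icc]; omega)
    omega

/-- trimming: remove the top element of a chain; the remaining ones are bounded
one lower in each coordinate. -/
lemma hasAC_trim {S : Finset (ℕ × ℕ)} {r : ℕ} {i j : ℤ}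
    (h : HasAC S (r + 1) i j) : HasAC S r (i - 1) (j - 1) := by
  obtain ⟨A, h1, h2, h3, h4⟩ := h
  have hne : A.Nonempty := Finset.card_pos.mp (by omega)
  obtain ⟨z, hz, hmax⟩ := pc_exists_max h2 hne
  refine ⟨A.erase z, (Finset.erase_subset _ _).trans h1, pc_subset (Finset.erase_subset _ _) h2,
    by simp [Finset.card_erase_of_mem hz, h3], ?_⟩
  intro p hp
  obtain ⟨hpz, hpA⟩ := Finset.mem_erase.mp hp
  have hslt := hmax p hpA hpz
  have hz4 := h4 z hz
  exact ⟨by have := hslt.1; omega, by have := hslt.2; omega⟩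

lemma hasAC_trim_to {S : Finset (ℕ × ℕ)} {r d : ℕ} {i j : ℤ}
    (h : HasAC S r i j) (hd : d ≤ r) : HasAC S d (i - (r - d)) (j - (r - d)) := by
  induction r generalizing i j with
  | zero =>
    have : d = 0 := by omega
    subst this; simpa using h
  | succ r ih =>
    rcases Nat.eq_or_lt_of_le hd with rfl | hlt
    · simpa using h
    · have := ih (hasAC_trim h) (by omega)
      refine hasAC_mono_bound (le_of_eq ?_) (le_of_eq ?_) this <;> push_cast <;> ring

/-! ### the statistic `FS` on sets and the map `Ψ` -/

/-- `FS k S u v` : the largest `c ≤ k` such that `S` contains a chain of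
cardinality `c` bounded by `(u+c, v+c)`. -/
def FS (k : ℕ) (S : Finset (ℕ × ℕ)) (u v : ℤ) : ℕ :=
  ((Finset.range (k+1)).filter (fun c => HasAC S c (u + c) (v + c))).sup id

lemma FS_filter_nonempty (k : ℕ) (S : Finset (ℕ × ℕ)) (u v : ℤ) :
    ((Finset.range (k+1)).filter (fun c => HasAC S c (u + c) (v + c))).Nonempty :=
  ⟨0, Finset.mem_filter.mpr ⟨Finset.mem_range.mpr (by omega), by simpa using hasAC_zero S u v⟩⟩

lemma FS_le_k (k : ℕ) (S : Finset (ℕ × ℕ)) (u v : ℤ) : FS k S u v ≤ k := by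
  refine Finset.sup_le fun b hb => ?_
  have := Finset.mem_range.mp (Finset.mem_filter.mp hb).1
  simp only [id]
  omega

lemma FS_ge {k : ℕ} {S : Finset (ℕ × ℕ)} {u v : ℤ} {c : ℕ} (hc : c ≤ k)
    (h : HasAC S c (u + c) (v + c)) : c ≤ FS k S u v :=
  Finset.le_sup (f := id) (Finset.mem_filter.mpr ⟨Finset.mem_range.mpr (by omega), h⟩)

lemma FS_attained (k : ℕ) (S : Finset (ℕ × ℕ)) (u v : ℤ) :
    HasAC S (FS k S u v) (u + FS k S u v) (v + FS k S u v) := by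
  obtain ⟨b, hb, hs⟩ := Finset.exists_mem_eq_sup _ (FS_filter_nonempty k S u v) (id : ℕ → ℕ)
  have : FS k S u v = b := hs
  rw [this]
  exact (Finset.mem_filter.mp hb).2

lemma FS_mono {k : ℕ} {S : Finset (ℕ × ℕ)} {u v u' v' : ℤ} (hu : u ≤ u') (hv : v ≤ v') :
    FS k S u v ≤ FS k S u' v' := by
  refine Finset.sup_le fun b hb => ?_
  obtain ⟨hb1, hb2⟩ := Finset.mem_filter.mp hb
  have := Finset.mem_range.mp hb1
  show b ≤ FS k S u' v'
  exact FS_ge (by omega) (hasAC_mono_bound (by omega) (by omega) hb2)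

/-- the map from sets to plane partitions. -/
def PsiF (n k : ℕ) (S : Finset (ℕ × ℕ)) : ℕ × ℕ → ℕ := fun x =>
  if 1 ≤ x.1 ∧ 1 ≤ x.2 ∧ x.1 + x.2 ≤ (n - k) + 1 then
    FS k S ((x.2 : ℤ) - 1) (((n - k : ℕ) : ℤ) - (x.1 : ℤ))
  else 0

lemma psiF_isPP (n k : ℕ) (S : Finset (ℕ × ℕ)) :
    IsPP (staircaseBoxes (n - k)) k (PsiF n k S) := by
  refine ⟨?_, ?_, ?_, ?_⟩
  · intro x hx
    unfold PsiF
    split_ifs with h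
    · exact FS_le_k _ _ _ _
    · omega
  · intro x hx
    rw [mem_D] at hx
    simp only [PsiF]
    rw [if_neg hx]
  · intro a b h1 h2
    rw [mem_D] at h1 h2
    simp only [PsiF]
    rw [if_pos h1, if_pos h2]
    exact FS_mono (by push_cast; omega) le_rfl
  · intro a b h1 h2
    rw [mem_D] at h1 h2
    simp only [PsiF]
    rw [if_pos h2, if_pos h1]
    exact FS_mono le_rfl (by push_cast; omega)

/-! ### the statistics `FP`, `MP` built from a plane partition -/

/-- `FP` : the profile function determined by a plane partition `P`. -/
def FP (n k : ℕ) (P : ℕ × ℕ → ℕ) (u v : ℤ) : ℕ :=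
  if u < 0 ∨ v < 0 then 0
  else if ((n - k : ℕ) : ℤ) ≤ v then k
  else P ((((n - k : ℕ) : ℤ) - v).toNat, (min u v).toNat + 1)

/-- `MP` : the height function determined by a plane partition `P`. -/
def MP (n k : ℕ) (P : ℕ × ℕ → ℕ) (i j : ℤ) : ℕ :=
  ((Finset.range (k+1)).filter (fun r => (r : ℕ) ≤ FP n k P (i - r) (j - r))).sup id

/-- the candidate facet determined by a plane partition `P`. -/
def SP (n k : ℕ) (P : ℕ × ℕ → ℕ) : Finset (ℕ × ℕ) :=
  (Xn n).filter (fun x => MP n k P ((x.1 : ℤ) - 1) ((x.2 : ℤ) - 1) < MP n k P x.1 x.2)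

section PP
variable {n k : ℕ} {P : ℕ × ℕ → ℕ}

lemma P_row (hP : IsPP (staircaseBoxes (n - k)) k P) {a b b' : ℕ}
    (h1 : (a, b) ∈ staircaseBoxes (n - k)) (h2 : (a, b') ∈ staircaseBoxes (n - k))
    (hbb : b ≤ b') : P (a, b) ≤ P (a, b') := by
  induction b', hbb using Nat.le_induction with
  | base => exact le_rfl
  | succ b' hb ih =>
    rw [mem_D] at h1 h2
    have h2' : (a, b') ∈ staircaseBoxes (n - k) := mem_D.mpr (by simp; omega)
    exact le_trans (ih (mem_D.mpr (by simp; omega))) (hP.2.2.1 a b' h2' (mem_D.mpr (by simp; omega)))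

lemma P_col (hP : IsPP (staircaseBoxes (n - k)) k P) {a a' b : ℕ}
    (h1 : (a, b) ∈ staircaseBoxes (n - k)) (h2 : (a', b) ∈ staircaseBoxes (n - k))
    (haa : a' ≤ a) : P (a, b) ≤ P (a', b) := by
  induction a, haa using Nat.le_induction with
  | base => exact le_rfl
  | succ a ha ih =>
    rw [mem_D] at h1 h2
    have h1' : (a, b) ∈ staircaseBoxes (n - k) := mem_D.mpr (by simp; omega)
    exact le_trans (hP.2.2.2 a b h1' (mem_D.mpr (by simp; omega))) (ih h1')

lemma P_mono2 (hP : IsPP (staircaseBoxes (n - k)) k P) {a a' b b' : ℕ}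
    (h1 : (a, b) ∈ staircaseBoxes (n - k)) (h2 : (a', b') ∈ staircaseBoxes (n - k))
    (haa : a' ≤ a) (hbb : b ≤ b') : P (a, b) ≤ P (a', b') := by
  rw [mem_D] at h1 h2
  have hmid : (a', b) ∈ staircaseBoxes (n - k) := mem_D.mpr (by simp; omega)
  exact le_trans (P_col hP (mem_D.mpr (by simp; omega)) hmid haa)
    (P_row hP hmid (mem_D.mpr (by simp; omega)) hbb)

lemma FP_arg_mem {u v : ℤ} (hu : 0 ≤ u) (hv : 0 ≤ v) (hvm : v < ((n - k : ℕ) : ℤ)) :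
    ((((n - k : ℕ) : ℤ) - v).toNat, (min u v).toNat + 1) ∈ staircaseBoxes (n - k) := by
  rw [mem_D]; simp; omega

lemma FP_le_k (hP : IsPP (staircaseBoxes (n - k)) k P) (u v : ℤ) : FP n k P u v ≤ k := by
  unfold FP
  split_ifs with h1 h2
  · omega
  · exact le_rfl
  · exact hP.1 _ (FP_arg_mem (by omega) (by omega) (by omega))

lemma FP_neg {u v : ℤ} (h : u < 0 ∨ v < 0) : FP n k P u v = 0 := by
  unfold FP; split_ifs <;> tauto

lemma FP_big {u v : ℤ} (hu : 0 ≤ u) (hv : ((n - k : ℕ) : ℤ) ≤ v) : FP n k P u v = k := by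
  unfold FP
  rw [if_neg (by omega), if_pos hv]

lemma FP_pos_args {u v : ℤ} (h : 1 ≤ FP n k P u v) : 0 ≤ u ∧ 0 ≤ v := by
  by_contra hc
  rw [FP_neg (by omega)] at h; omega

lemma FP_mono (hP : IsPP (staircaseBoxes (n - k)) k P) {u v u' v' : ℤ}
    (hu : u ≤ u') (hv : v ≤ v') : FP n k P u v ≤ FP n k P u' v' := by
  by_cases h1 : u < 0 ∨ v < 0
  · rw [FP_neg h1]; omega
  · by_cases h2 : ((n - k : ℕ) : ℤ) ≤ v'
    · rw [FP_big (by omega) h2]; exact FP_le_k hP u v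
    · have hv' : v < ((n - k : ℕ) : ℤ) := by omega
      unfold FP
      split_ifs with g1 g2 g3 g4
      all_goals try omega
      exact P_mono2 hP (FP_arg_mem (by omega) (by omega) (by omega))
        (FP_arg_mem (by omega) (by omega) (by omega)) (by omega) (by omega)

lemma FP_min (u v : ℤ) : FP n k P u v = FP n k P (min u v) v := by
  unfold FP
  have : min (min u v) v = min u v := by omega
  rw [this]
  split_ifs <;> first | rfl | omega

lemma MP_filter_nonempty (P : ℕ × ℕ → ℕ) (i j : ℤ) :
    ((Finset.range (k+1)).filter (fun r => (r : ℕ) ≤ FP n k P (i - r) (j - r))).Nonempty :=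
  ⟨0, Finset.mem_filter.mpr ⟨Finset.mem_range.mpr (by omega), by omega⟩⟩

lemma MP_ge {i j : ℤ} {r : ℕ} (hr : r ≤ k) (h : r ≤ FP n k P (i - r) (j - r)) :
    r ≤ MP n k P i j :=
  Finset.le_sup (f := id) (Finset.mem_filter.mpr ⟨Finset.mem_range.mpr (by omega), h⟩)

lemma MP_le_of {i j : ℤ} {c : ℕ}
    (h : ∀ r, r ≤ k → r ≤ FP n k P (i - r) (j - r) → r ≤ c) : MP n k P i j ≤ c := by
  refine Finset.sup_le fun b hb => ?_
  obtain ⟨hb1, hb2⟩ := Finset.mem_filter.mp hb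
  exact h b (by have := Finset.mem_range.mp hb1; omega) hb2

lemma MP_spec (P : ℕ × ℕ → ℕ) (i j : ℤ) :
    MP n k P i j ≤ k ∧ (MP n k P i j : ℕ) ≤ FP n k P (i - MP n k P i j) (j - MP n k P i j) := by
  obtain ⟨b, hb, hs⟩ := Finset.exists_mem_eq_sup _ (MP_filter_nonempty P i j) (id : ℕ → ℕ)
  obtain ⟨hb1, hb2⟩ := Finset.mem_filter.mp hb
  have hbs : MP n k P i j = b := hs
  rw [hbs]
  exact ⟨by have := Finset.mem_range.mp hb1; omega, hb2⟩

lemma MP_le_k (P : ℕ × ℕ → ℕ) (i j : ℤ) : MP n k P i j ≤ k := (MP_spec P i j).1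

lemma MP_mono (hP : IsPP (staircaseBoxes (n - k)) k P) {i j i' j' : ℤ}
    (hi : i ≤ i') (hj : j ≤ j') : MP n k P i j ≤ MP n k P i' j' := by
  refine MP_le_of fun r hr h => MP_ge hr (le_trans h (FP_mono hP (by omega) (by omega)))

lemma MP_step (hP : IsPP (staircaseBoxes (n - k)) k P) (i j : ℤ) :
    MP n k P i j ≤ MP n k P (i - 1) (j - 1) + 1 := by
  obtain ⟨h1, h2⟩ := MP_spec (n := n) (k := k) P i j
  rcases Nat.eq_zero_or_pos (MP n k P i j) with h0 | h0
  · omega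
  · obtain ⟨s, hs⟩ : ∃ s, MP n k P i j = s + 1 := ⟨MP n k P i j - 1, by omega⟩
    rw [hs]
    have : s ≤ MP n k P (i - 1) (j - 1) := by
      refine MP_ge (by omega) (le_trans (Nat.le_succ s) ?_)
      rw [hs] at h2
      have e1 : i - 1 - (s : ℤ) = i - ((s + 1 : ℕ) : ℤ) := by push_cast; ring
      have e2 : j - 1 - (s : ℤ) = j - ((s + 1 : ℕ) : ℤ) := by push_cast; ring
      rw [e1, e2]
      exact h2
    omega

lemma MP_zero {i j : ℤ} (h : i ≤ 0 ∨ j ≤ 0) : MP n k P i j = 0 := by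
  refine Nat.le_zero.mp (MP_le_of fun r hr hle => ?_)
  rcases Nat.eq_zero_or_pos r with rfl | hpos
  · omega
  · exfalso
    obtain ⟨hu, hv⟩ := FP_pos_args (le_trans (by omega) hle)
    omega

lemma MP_pos {i j : ℤ} (h : 1 ≤ MP n k P i j) : 1 ≤ i ∧ 1 ≤ j := by
  by_contra hc
  push_neg at hc
  have : i ≤ 0 ∨ j ≤ 0 := by
    by_cases h1 : 1 ≤ i
    · exact Or.inr (by omega)
    · exact Or.inl (by omega)
  rw [MP_zero this] at h; omega

lemma MP_min (i j : ℤ) : MP n k P i j = MP n k P (min i j) j := by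
  have key : ∀ r : ℕ, FP n k P (i - r) (j - r) = FP n k P (min i j - r) (j - r) := by
    intro r
    rw [FP_min (i - r) (j - r), show min i j - (r : ℤ) = min (i - r) (j - r) from by omega]
  refine le_antisymm (MP_le_of fun r hr h => MP_ge hr (by rw [← key r]; exact h))
    (MP_le_of fun r hr h => MP_ge hr (by rw [key r]; exact h))

lemma MP_full (hkn : k ≤ n) {i j : ℤ} (hi : (k : ℤ) ≤ i) (hj : (n : ℤ) ≤ j) :
    MP n k P i j = k := by
  refine le_antisymm (MP_le_k P i j) (MP_ge le_rfl ?_)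
  rw [FP_big (by omega) (by rw [Nat.cast_sub hkn]; omega)]

end PP

/-! ### chains inside `SP` -/

lemma pc_union {A B : Finset (ℕ × ℕ)} (hA : PC A) (hB : PC B)
    (h : ∀ p ∈ A, ∀ q ∈ B, SLT p q) : PC (A ∪ B) := by
  intro a ha b hb hab
  rcases Finset.mem_union.mp ha with ha' | ha' <;> rcases Finset.mem_union.mp hb with hb' | hb'
  · exact hA a ha' b hb' hab
  · exact Or.inl (h a ha' b hb')
  · exact Or.inr (h b hb' a ha')
  · exact hB a ha' b hb' hab

lemma pc_union_card {A B : Finset (ℕ × ℕ)}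
    (h : ∀ p ∈ A, ∀ q ∈ B, SLT p q) : (A ∪ B).card = A.card + B.card := by
  refine Finset.card_union_of_disjoint (Finset.disjoint_left.mpr fun p hpA hpB => ?_)
  exact absurd (h p hpA p hpB).1 (lt_irrefl _)

section SPsec
variable {n k : ℕ} {P : ℕ × ℕ → ℕ}

lemma forced_jump (hP : IsPP (staircaseBoxes (n - k)) k P) (hkn : k ≤ n) {i j : ℕ}
    (hx : (i, j) ∈ Xn n) (hf : i + n ≤ k + j) :
    MP n k P ((i : ℤ) - 1) ((j : ℤ) - 1) < MP n k P i j := by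
  rw [mem_Xn] at hx
  simp only at hx
  have hik : i ≤ k := by omega
  have h1 : (i : ℕ) ≤ MP n k P (i : ℤ) (j : ℤ) := by
    refine MP_ge hik ?_
    rw [show (i : ℤ) - i = 0 by ring, FP_big (by omega) (by rw [Nat.cast_sub hkn]; omega)]
    exact hik
  have h2 : MP n k P ((i : ℤ) - 1) ((j : ℤ) - 1) ≤ i - 1 := by
    refine MP_le_of fun r hr hle => ?_
    rcases Nat.eq_zero_or_pos r with rfl | hpos
    · omega
    · have := (FP_pos_args (le_trans (by omega : 1 ≤ r) hle)).1
      omega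
  omega

lemma ClaimC (hP : IsPP (staircaseBoxes (n - k)) k P) :
    ∀ c : ℕ, ∀ x y : ℤ, MP n k P x y = c → 0 ≤ x → x ≤ y → y ≤ (n : ℤ) →
    HasAC (SP n k P) c x y := by
  intro c
  induction c using Nat.strong_induction_on with
  | _ c ih =>
    intro x y hMP hx hxy hyn
    rcases Nat.eq_zero_or_pos c with rfl | hc
    · exact hasAC_zero _ _ _
    set T := (Finset.range (x.toNat + 2)).filter
        (fun t : ℕ => MP n k P (x - t) (y - t) = c) with hT
    have h0T : (0 : ℕ) ∈ T :=
      Finset.mem_filter.mpr ⟨Finset.mem_range.mpr (by omega), by simpa using hMP⟩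
    set t := T.max' ⟨0, h0T⟩ with ht
    have htT : t ∈ T := T.max'_mem _
    obtain ⟨htr, hteq⟩ := Finset.mem_filter.mp htT
    have htr' := Finset.mem_range.mp htr
    have hpos := MP_pos (P := P) (i := x - t) (j := y - t) (by rw [hteq]; exact hc)
    have hnext : MP n k P (x - t - 1) (y - t - 1) = c - 1 := by
      have hne : MP n k P (x - t - 1) (y - t - 1) ≠ c := by
        intro hEq
        have hmem : (t + 1) ∈ T := Finset.mem_filter.mpr
          ⟨Finset.mem_range.mpr (by omega),
           by rw [show x - ((t + 1 : ℕ) : ℤ) = x - t - 1 by push_cast; ring,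
                  show y - ((t + 1 : ℕ) : ℤ) = y - t - 1 by push_cast; ring]; exact hEq⟩
        have := T.le_max' _ hmem
        omega
      have hmono : MP n k P (x - t - 1) (y - t - 1) ≤ c := by
        rw [← hteq]; exact MP_mono hP (by omega) (by omega)
      have hstep := MP_step hP (x - t) (y - t)
      omega
    set z : ℕ × ℕ := ((x - t).toNat, (y - t).toNat) with hzdef
    have hz1 : ((z.1 : ℕ) : ℤ) = x - t := by simp [hzdef]; omega
    have hz2 : ((z.2 : ℕ) : ℤ) = y - t := by simp [hzdef]; omega
    have hzX : z ∈ Xn n := mem_Xn.mpr ⟨by omega, by omega, by omega⟩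
    have hzS : z ∈ SP n k P := by
      refine Finset.mem_filter.mpr ⟨hzX, ?_⟩
      rw [hz1, hz2, hteq, hnext]
      omega
    obtain ⟨A, hA1, hA2, hA3, hA4⟩ :=
      ih (c - 1) (by omega) (x - t - 1) (y - t - 1) hnext (by omega) (by omega) (by omega)
    refine ⟨insert z A, ?_, ?_, ?_, ?_⟩
    · intro p hp
      rcases Finset.mem_insert.mp hp with rfl | hp'
      · exact hzS
      · exact hA1 hp'
    · refine pc_insert hA2 fun p hp => Or.inl ?_
      have h4 := hA4 p hp
      exact ⟨by omega, by omega⟩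
    · rw [Finset.card_insert_of_notMem (fun hmem => by
        have := (hA4 z hmem).1; omega), hA3]
      omega
    · intro p hp
      rcases Finset.mem_insert.mp hp with rfl | hp'
      · exact ⟨by omega, by omega⟩
      · have h4 := hA4 p hp'
        exact ⟨by omega, by omega⟩

lemma ClaimD (hP : IsPP (staircaseBoxes (n - k)) k P) (hkn : k ≤ n) :
    ∀ d : ℕ, ∀ x y : ℤ, k - MP n k P x y = d → 0 ≤ x → x ≤ y → y ≤ (n : ℤ) →
    (k : ℤ) ≤ x + n - y →
    ∃ B : Finset (ℕ × ℕ), B ⊆ SP n k P ∧ PC B ∧ B.card = d ∧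
      ∀ p ∈ B, x + 1 ≤ (p.1 : ℤ) ∧ y + 1 ≤ (p.2 : ℤ) := by
  intro d
  induction d using Nat.strong_induction_on with
  | _ d ih =>
    intro x y hd hx hxy hyn hcorner
    rcases Nat.eq_zero_or_pos d with rfl | hdpos
    · exact ⟨∅, by simp, pc_empty, by simp, by simp⟩
    have hck : MP n k P x y < k := by omega
    have hyn' : y < (n : ℤ) := by
      rcases lt_or_eq_of_le hyn with h | h
      · exact h
      · exfalso
        have := MP_full (P := P) hkn (i := x) (j := y) (by omega) (by omega)
        omega
    set T := (Finset.range (((n : ℤ) - y).toNat + 1)).filter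
        (fun t : ℕ => 1 ≤ t ∧ MP n k P x y < MP n k P (x + t) (y + t)) with hT
    have hTne : ((n : ℤ) - y).toNat ∈ T := by
      refine Finset.mem_filter.mpr ⟨Finset.mem_range.mpr (by omega), ⟨by omega, ?_⟩⟩
      have e1 : ((((n : ℤ) - y).toNat : ℕ) : ℤ) = (n : ℤ) - y := by omega
      rw [e1, show y + ((n : ℤ) - y) = (n : ℤ) by ring]
      have hfull : MP n k P (x + ((n : ℤ) - y)) (n : ℤ) = k :=
        MP_full hkn (by omega) le_rfl
      omega
    set t := T.min' ⟨_, hTne⟩ with htdef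
    have htT : t ∈ T := T.min'_mem _
    obtain ⟨htr, ht1, htlt⟩ := Finset.mem_filter.mp htT
    have htr' := Finset.mem_range.mp htr
    have hprev : MP n k P (x + t - 1) (y + t - 1) = MP n k P x y := by
      by_cases h1 : t = 1
      · rw [h1]
        norm_num
      · have ht2 : 2 ≤ t := by omega
        have hnm : (t - 1) ∉ T := fun hmem => by
          have := T.min'_le _ hmem
          omega
        have hnot : ¬ (1 ≤ t - 1 ∧ MP n k P x y < MP n k P (x + (t - 1 : ℕ)) (y + (t - 1 : ℕ))) :=
          fun hcon => hnm (Finset.mem_filter.mpr ⟨Finset.mem_range.mpr (by omega), hcon⟩)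
        have hmono : MP n k P x y ≤ MP n k P (x + (t - 1 : ℕ)) (y + (t - 1 : ℕ)) :=
          MP_mono hP (by omega) (by omega)
        have hle : MP n k P (x + (t - 1 : ℕ)) (y + (t - 1 : ℕ)) = MP n k P x y := by
          by_contra hne
          exact hnot ⟨by omega, by omega⟩
        rw [show x + (t : ℤ) - 1 = x + ((t - 1 : ℕ) : ℤ) by omega,
            show y + (t : ℤ) - 1 = y + ((t - 1 : ℕ) : ℤ) by omega]
        exact hle
    have hcur : MP n k P (x + t) (y + t) = MP n k P x y + 1 := by
      have hstep := MP_step hP (x + t) (y + t)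
      omega
    set z : ℕ × ℕ := ((x + t).toNat, (y + t).toNat) with hzdef
    have hz1 : ((z.1 : ℕ) : ℤ) = x + t := by simp [hzdef]; omega
    have hz2 : ((z.2 : ℕ) : ℤ) = y + t := by simp [hzdef]; omega
    have hzX : z ∈ Xn n := mem_Xn.mpr ⟨by omega, by omega, by omega⟩
    have hzS : z ∈ SP n k P := by
      refine Finset.mem_filter.mpr ⟨hzX, ?_⟩
      rw [hz1, hz2, hcur, show x + (t : ℤ) - 1 = x + t - 1 by ring,
          show y + (t : ℤ) - 1 = y + t - 1 by ring, hprev]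
      omega
    obtain ⟨B, hB1, hB2, hB3, hB4⟩ :=
      ih (d - 1) (by omega) (x + t) (y + t) (by omega) (by omega) (by omega) (by omega) (by omega)
    refine ⟨insert z B, ?_, ?_, ?_, ?_⟩
    · intro p hp
      rcases Finset.mem_insert.mp hp with rfl | hp'
      · exact hzS
      · exact hB1 hp'
    · refine pc_insert hB2 fun p hp => Or.inr ?_
      have h4 := hB4 p hp
      exact ⟨by omega, by omega⟩
    · rw [Finset.card_insert_of_notMem (fun hmem => by
        have := (hB4 z hmem).1; omega), hB3]
      omega
    · intro p hp
      rcases Finset.mem_insert.mp hp with rfl | hp'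
      · exact ⟨by omega, by omega⟩
      · have h4 := hB4 p hp'
        exact ⟨by omega, by omega⟩

lemma Wbound (hP : IsPP (staircaseBoxes (n - k)) k P) {A : Finset (ℕ × ℕ)}
    (hA : A ⊆ SP n k P) (hpc : PC A) {X Y : ℤ}
    (hb : ∀ p ∈ A, (p.1 : ℤ) ≤ X ∧ (p.2 : ℤ) ≤ Y) : A.card ≤ MP n k P X Y := by
  have key : ∀ p ∈ A, 1 ≤ MP n k P p.1 p.2 ∧ MP n k P p.1 p.2 ≤ MP n k P X Y := by
    intro p hp
    have hpS := (Finset.mem_filter.mp (hA hp)).2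
    exact ⟨by omega, MP_mono hP (hb p hp).1 (hb p hp).2⟩
  have hinj : Set.InjOn (fun p : ℕ × ℕ => MP n k P p.1 p.2) (A : Set (ℕ × ℕ)) := by
    intro a ha b hb' hab
    by_contra hne
    simp only at hab
    rcases hpc a ha b hb' hne with hslt | hslt
    · have h1 : MP n k P a.1 a.2 ≤ MP n k P ((b.1 : ℤ) - 1) ((b.2 : ℤ) - 1) :=
        MP_mono hP (by have := hslt.1; omega) (by have := hslt.2; omega)
      have h2 := (Finset.mem_filter.mp (hA hb')).2
      omega
    · have h1 : MP n k P b.1 b.2 ≤ MP n k P ((a.1 : ℤ) - 1) ((a.2 : ℤ) - 1) :=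
        MP_mono hP (by have := hslt.1; omega) (by have := hslt.2; omega)
      have h2 := (Finset.mem_filter.mp (hA ha)).2
      omega
  calc A.card = (A.image (fun p : ℕ × ℕ => MP n k P p.1 p.2)).card :=
        (Finset.card_image_of_injOn hinj).symm
    _ ≤ (Finset.Icc 1 (MP n k P X Y)).card := Finset.card_le_card (fun v hv => by
        obtain ⟨p, hp, rfl⟩ := Finset.mem_image.mp hv
        rw [Finset.mem_Icc]
        exact key p hp)
    _ = MP n k P X Y := by rw [Nat.card_Icc]; omega

lemma SP_width (hP : IsPP (staircaseBoxes (n - k)) k P) (hkn : k ≤ n) :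
    WidthLE R (SP n k P) k := by
  intro A hA hanti
  have hpc := pc_iff_antichain.mpr hanti
  have hb : ∀ p ∈ A, (p.1 : ℤ) ≤ (n : ℤ) ∧ (p.2 : ℤ) ≤ (n : ℤ) := by
    intro p hp
    have := mem_Xn.mp ((Finset.filter_subset _ _) (hA hp))
    exact ⟨by omega, by omega⟩
  calc A.card ≤ MP n k P n n := Wbound hP hA hpc hb
    _ = k := MP_full hkn (by exact_mod_cast hkn) le_rfl

lemma SP_facet (hP : IsPP (staircaseBoxes (n - k)) k P) (hkn : k ≤ n) :
    IsFacet R (Xn n) k (SP n k P) := by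
  refine ⟨Finset.filter_subset _ _, SP_width hP hkn, ?_⟩
  intro S' hS'X hS'W hSS'
  refine Finset.Subset.antisymm ?_ hSS'
  rintro ⟨i, j⟩ hz
  by_contra hznot
  have hzX := hS'X hz
  have hXn := mem_Xn.mp hzX
  simp only at hXn
  have hnoj : ¬ (MP n k P ((i : ℤ) - 1) ((j : ℤ) - 1) < MP n k P i j) :=
    fun hj => hznot (Finset.mem_filter.mpr ⟨hzX, hj⟩)
  have hmono : MP n k P ((i : ℤ) - 1) ((j : ℤ) - 1) ≤ MP n k P i j :=
    MP_mono hP (by omega) (by omega)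
  have hforced : ¬ (i + n ≤ k + j) := fun hf => hnoj (forced_jump hP hkn hzX hf)
  obtain ⟨A, hA1, hA2, hA3, hA4⟩ := ClaimC hP (MP n k P ((i : ℤ) - 1) ((j : ℤ) - 1))
    ((i : ℤ) - 1) ((j : ℤ) - 1) rfl (by omega) (by omega) (by omega)
  obtain ⟨B, hB1, hB2, hB3, hB4⟩ := ClaimD hP hkn (k - MP n k P (i : ℤ) (j : ℤ))
    (i : ℤ) (j : ℤ) rfl (by omega) (by omega) (by omega) (by omega)
  have hABslt : ∀ p ∈ A, ∀ q ∈ B, SLT p q := by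
    intro p hp q hq
    have h1 := hA4 p hp
    have h2 := hB4 q hq
    exact ⟨by omega, by omega⟩
  have hzA : ∀ p ∈ A, SLT p (i, j) := by
    intro p hp
    have := hA4 p hp
    exact ⟨by omega, by omega⟩
  have hzB : ∀ q ∈ B, SLT (i, j) q := by
    intro q hq
    have := hB4 q hq
    exact ⟨by omega, by omega⟩
  set C := insert (i, j) (A ∪ B) with hC
  have hCpc : PC C := by
    refine pc_insert (pc_union hA2 hB2 hABslt) fun p hp => ?_
    rcases Finset.mem_union.mp hp with hp' | hp'
    · exact Or.inl (hzA p hp')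
    · exact Or.inr (hzB p hp')
  have hCcard : C.card = k + 1 := by
    rw [hC, Finset.card_insert_of_notMem, pc_union_card hABslt, hA3, hB3]
    · have h1 : MP n k P ((i : ℤ) - 1) ((j : ℤ) - 1) ≤ k := MP_le_k P _ _
      have h2 : MP n k P (i : ℤ) (j : ℤ) ≤ k := MP_le_k P _ _
      omega
    · intro hmem
      rcases Finset.mem_union.mp hmem with hp' | hp'
      · exact absurd (hzA _ hp').1 (lt_irrefl _)
      · exact absurd (hzB _ hp').1 (lt_irrefl _)
  have hCsub : C ⊆ S' := by
    intro p hp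
    rcases Finset.mem_insert.mp hp with rfl | hp'
    · exact hz
    · rcases Finset.mem_union.mp hp' with hp'' | hp''
      · exact hSS' (hA1 hp'')
      · exact hSS' (hB1 hp'')
  have := hS'W C hCsub (pc_iff_antichain.mp hCpc)
  omega

end SPsec

/-! ### Ψ ∘ Φ = id -/

section PsiPhi
variable {n k : ℕ} {P : ℕ × ℕ → ℕ}

lemma PsiPhi (hP : IsPP (staircaseBoxes (n - k)) k P) (hkn : k ≤ n) :
    PsiF n k (SP n k P) = P := by
  funext x
  by_cases hx : x ∈ staircaseBoxes (n - k)
  case neg =>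
    have h0 := hP.2.1 x hx
    rw [mem_D] at hx
    simp only [PsiF]
    rw [if_neg hx, h0]
  case pos =>
    obtain ⟨a, b⟩ := x
    have hm := mem_D.mp hx
    simp only at hm
    simp only [PsiF]
    rw [if_pos (mem_D.mp hx)]
    set u : ℤ := (b : ℤ) - 1 with hudef
    set v : ℤ := ((n - k : ℕ) : ℤ) - (a : ℤ) with hvdef
    have hu : 0 ≤ u := by omega
    have hv : 0 ≤ v := by omega
    have huv : u ≤ v := by omega
    have hvm : v < ((n - k : ℕ) : ℤ) := by omega
    have hFP : FP n k P u v = P (a, b) := by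
      unfold FP
      rw [if_neg (by omega), if_neg (by omega)]
      congr 1
      rw [show min u v = u from by omega]
      simp only [Prod.mk.injEq]
      constructor <;> omega
    refine le_antisymm ?_ ?_
    · refine Finset.sup_le fun c hc => ?_
      obtain ⟨hc1, hc2⟩ := Finset.mem_filter.mp hc
      obtain ⟨A, hA1, hA2, hA3, hA4⟩ := hc2
      have h1 : A.card ≤ MP n k P (u + c) (v + c) := Wbound hP hA1 hA2 hA4
      obtain ⟨hs1, hs2⟩ := MP_spec (n := n) (k := k) P (u + c) (v + c)
      have h2 : MP n k P (u + c) (v + c) ≤ FP n k P u v :=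
        le_trans hs2 (FP_mono hP (by omega) (by omega))
      show id c ≤ P (a, b)
      simp only [id]
      omega
    · set c0 := P (a, b) with hc0
      have hc0k : c0 ≤ k := hP.1 _ hx
      have hMPge : c0 ≤ MP n k P (u + c0) (v + c0) := by
        refine MP_ge hc0k ?_
        rw [show u + (c0 : ℤ) - c0 = u from by ring, show v + (c0 : ℤ) - c0 = v from by ring,
          hFP]
      obtain ⟨A, hA1, hA2, hA3, hA4⟩ := ClaimC hP (MP n k P (u + c0) (v + c0)) (u + c0)
        (v + c0) rfl (by omega) (by omega) (by omega)
      obtain ⟨A', hsub, hcard⟩ := Finset.exists_subset_card_eq (s := A) (n := c0) (by omega)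
      exact FS_ge hc0k ⟨A', hsub.trans hA1, pc_subset hsub hA2, hcard,
        fun p hp => hA4 p (hsub hp)⟩

end PsiPhi

/-! ### the facet side -/

/-- the quadrant chain statistic of a set. -/
def MS (k : ℕ) (S : Finset (ℕ × ℕ)) (i j : ℤ) : ℕ :=
  ((Finset.range (k+1)).filter (fun r => HasAC S r i j)).sup id

section FacetSide
variable {n k : ℕ} {S : Finset (ℕ × ℕ)}

lemma MS_filter_nonempty (k : ℕ) (S : Finset (ℕ × ℕ)) (i j : ℤ) :
    ((Finset.range (k+1)).filter (fun r => HasAC S r i j)).Nonempty :=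
  ⟨0, Finset.mem_filter.mpr ⟨Finset.mem_range.mpr (by omega), hasAC_zero S i j⟩⟩

lemma MS_ge {i j : ℤ} {r : ℕ} (hr : r ≤ k) (h : HasAC S r i j) : r ≤ MS k S i j :=
  Finset.le_sup (f := id) (Finset.mem_filter.mpr ⟨Finset.mem_range.mpr (by omega), h⟩)

lemma MS_le_k (k : ℕ) (S : Finset (ℕ × ℕ)) (i j : ℤ) : MS k S i j ≤ k := by
  refine Finset.sup_le fun b hb => ?_
  have := Finset.mem_range.mp (Finset.mem_filter.mp hb).1
  simp only [id]
  omega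

lemma MS_attained (k : ℕ) (S : Finset (ℕ × ℕ)) (i j : ℤ) :
    HasAC S (MS k S i j) i j := by
  obtain ⟨b, hb, hs⟩ := Finset.exists_mem_eq_sup _ (MS_filter_nonempty k S i j) (id : ℕ → ℕ)
  have hbs : MS k S i j = b := hs
  rw [hbs]
  exact (Finset.mem_filter.mp hb).2

/-- the cells `(r, n-k+r)` belong to every facet. -/
lemma forced_mem (hS : IsFacet R (Xn n) k S) (hkn : k ≤ n) {r : ℕ}
    (h1 : 1 ≤ r) (hrk : r ≤ k) : (r, (n - k) + r) ∈ S := by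
  set x : ℕ × ℕ := (r, (n - k) + r) with hxdef
  have hxXn : x ∈ Xn n := by
    rw [hxdef, mem_Xn]
    refine ⟨?_, ?_, ?_⟩ <;> dsimp only <;> omega
  have hw : WidthLE R (insert x S) k := by
    intro A hA hanti
    have hpc := pc_iff_antichain.mpr hanti
    by_cases hxA : x ∈ A
    · set B := (A.erase x).filter (fun p => p.1 < x.1) with hB
      set Cc := (A.erase x).filter (fun p => x.1 < p.1) with hCc
      have hsplit : ∀ p ∈ A.erase x, SLT p x ∨ SLT x p := fun p hp =>
        hpc p (Finset.erase_subset _ _ hp) x hxA (Finset.mem_erase.mp hp).1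
      have hES : A.erase x ⊆ S := by
        intro p hp
        obtain ⟨hpx, hpA⟩ := Finset.mem_erase.mp hp
        rcases Finset.mem_insert.mp (hA hpA) with rfl | h
        · exact absurd rfl hpx
        · exact h
      have hBC : A.erase x = B ∪ Cc := by
        ext p
        simp only [hB, hCc, Finset.mem_union, Finset.mem_filter]
        constructor
        · intro hp
          rcases hsplit p hp with hlt | hlt
          · exact Or.inl ⟨hp, hlt.1⟩
          · exact Or.inr ⟨hp, hlt.1⟩
        · rintro (⟨hp, _⟩ | ⟨hp, _⟩) <;> exact hp
      have hBcard : B.card ≤ r - 1 := by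
        have := pc_card_le_fst (pc_subset (hB ▸ (Finset.filter_subset _ _).trans
          (Finset.erase_subset _ _)) hpc) (lo := 1) (hi := r - 1) (fun p hp => by
            obtain ⟨hp1, hp2⟩ := Finset.mem_filter.mp hp
            have := mem_Xn.mp (hS.1 (hES hp1))
            simp only [Finset.mem_Icc]
            simp only [hxdef] at hp2
            omega)
        omega
      have hCcard : Cc.card ≤ k - r := by
        have := pc_card_le_snd (pc_subset (hCc ▸ (Finset.filter_subset _ _).trans
          (Finset.erase_subset _ _)) hpc) (lo := (n - k) + r + 1) (hi := n) (fun p hp => by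
            obtain ⟨hp1, hp2⟩ := Finset.mem_filter.mp hp
            have hXp := mem_Xn.mp (hS.1 (hES hp1))
            have hcmp := hsplit p hp1
            simp only [hxdef] at hp2 hcmp ⊢
            have : x.2 < p.2 := by
              rcases hcmp with hlt | hlt
              · exfalso; omega
              · exact hlt.2
            simp only [Finset.mem_Icc]
            simp only [hxdef] at this
            omega)
        omega
      have hdisj : Disjoint B Cc := Finset.disjoint_left.mpr (fun p hp1 hp2 => by
        have := (Finset.mem_filter.mp hp1).2
        have := (Finset.mem_filter.mp hp2).2
        omega)
      have : A.card = (A.erase x).card + 1 := by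
        rw [Finset.card_erase_of_mem hxA]
        have : 1 ≤ A.card := Finset.card_pos.mpr ⟨x, hxA⟩
        omega
      rw [this, hBC, Finset.card_union_of_disjoint hdisj]
      omega
    · refine hS.2.1 A (fun p hp => ?_) hanti
      rcases Finset.mem_insert.mp (hA hp) with rfl | h
      · exact absurd hp hxA
      · exact h
  have heq := hS.2.2 (insert x S) (Finset.insert_subset hxXn hS.1) hw
    (Finset.subset_insert _ _)
  rw [← heq]
  exact Finset.mem_insert_self _ _

lemma MS_jump_of_mem (hS : IsFacet R (Xn n) k S) {x : ℕ × ℕ} (hx : x ∈ S) :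
    MS k S ((x.1 : ℤ) - 1) ((x.2 : ℤ) - 1) < MS k S x.1 x.2 := by
  obtain ⟨A, hA1, hA2, hA3, hA4⟩ := MS_attained k S ((x.1 : ℤ) - 1) ((x.2 : ℤ) - 1)
  have hxA : x ∉ A := fun hmem => by have := (hA4 x hmem).1; omega
  have hins : PC (insert x A) := pc_insert hA2 (fun p hp => Or.inl
    ⟨by have := (hA4 p hp).1; omega, by have := (hA4 p hp).2; omega⟩)
  have hsub : insert x A ⊆ S := Finset.insert_subset hx hA1
  have hcard : (insert x A).card = MS k S ((x.1 : ℤ) - 1) ((x.2 : ℤ) - 1) + 1 := by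
    rw [Finset.card_insert_of_notMem hxA, hA3]
  have hk' : (insert x A).card ≤ k := hS.2.1 _ hsub (pc_iff_antichain.mp hins)
  have : MS k S ((x.1 : ℤ) - 1) ((x.2 : ℤ) - 1) + 1 ≤ MS k S x.1 x.2 := by
    refine MS_ge (by omega) ⟨insert x A, hsub, hins, hcard, fun p hp => ?_⟩
    rcases Finset.mem_insert.mp hp with rfl | hp'
    · exact ⟨le_rfl, le_rfl⟩
    · exact ⟨by have := (hA4 p hp').1; omega, by have := (hA4 p hp').2; omega⟩
  omega

lemma mem_of_MS_jump (hS : IsFacet R (Xn n) k S) {i j : ℕ} (hXn : (i, j) ∈ Xn n)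
    (hj : MS k S ((i : ℤ) - 1) ((j : ℤ) - 1) < MS k S i j) : (i, j) ∈ S := by
  by_contra hns
  set x : ℕ × ℕ := (i, j) with hxdef
  have hw : WidthLE R (insert x S) k := by
    intro A hA hanti
    have hpc := pc_iff_antichain.mpr hanti
    by_cases hxA : x ∈ A
    · set B := (A.erase x).filter (fun p => p.1 < x.1) with hB
      set Cc := (A.erase x).filter (fun p => x.1 < p.1) with hCc
      have hsplit : ∀ p ∈ A.erase x, SLT p x ∨ SLT x p := fun p hp =>
        hpc p (Finset.erase_subset _ _ hp) x hxA (Finset.mem_erase.mp hp).1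
      have hES : A.erase x ⊆ S := by
        intro p hp
        obtain ⟨hpx, hpA⟩ := Finset.mem_erase.mp hp
        rcases Finset.mem_insert.mp (hA hpA) with rfl | h
        · exact absurd rfl hpx
        · exact h
      have hBC : A.erase x = B ∪ Cc := by
        ext p
        simp only [hB, hCc, Finset.mem_union, Finset.mem_filter]
        constructor
        · intro hp
          rcases hsplit p hp with hlt | hlt
          · exact Or.inl ⟨hp, hlt.1⟩
          · exact Or.inr ⟨hp, hlt.1⟩
        · rintro (⟨hp, _⟩ | ⟨hp, _⟩) <;> exact hp
      have hBS : B ⊆ S := (hB ▸ (Finset.filter_subset _ _)).trans hES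
      have hBpc : PC B := pc_subset ((hB ▸ (Finset.filter_subset _ _)).trans
        (Finset.erase_subset _ _)) hpc
      have hBcard : B.card ≤ MS k S ((i : ℤ) - 1) ((j : ℤ) - 1) := by
        refine MS_ge (le_trans (hS.2.1 B hBS (pc_iff_antichain.mp hBpc)) le_rfl)
          ⟨B, hBS, hBpc, rfl, fun p hp => ?_⟩
        obtain ⟨hp1, hp2⟩ := Finset.mem_filter.mp hp
        rcases hsplit p hp1 with hlt | hlt
        · exact ⟨by have := hlt.1; simp only [hxdef] at this ⊢; omega,
                 by have := hlt.2; simp only [hxdef] at this ⊢; omega⟩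
        · exfalso; simp only [hxdef] at hlt hp2; omega
      have hCS : Cc ⊆ S := (hCc ▸ (Finset.filter_subset _ _)).trans hES
      have hCpc : PC Cc := pc_subset ((hCc ▸ (Finset.filter_subset _ _)).trans
        (Finset.erase_subset _ _)) hpc
      have hCabove : ∀ p ∈ Cc, x.1 < p.1 ∧ x.2 < p.2 := by
        intro p hp
        obtain ⟨hp1, hp2⟩ := Finset.mem_filter.mp hp
        rcases hsplit p hp1 with hlt | hlt
        · exfalso; omega
        · exact hlt
      have hCcard : Cc.card ≤ k - MS k S (i : ℤ) (j : ℤ) := by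
        obtain ⟨A0, h01, h02, h03, h04⟩ := MS_attained k S (i : ℤ) (j : ℤ)
        have hAC : ∀ p ∈ A0, ∀ q ∈ Cc, SLT p q := by
          intro p hp q hq
          have h4 := h04 p hp
          have hq' := hCabove q hq
          simp only [hxdef] at hq'
          exact ⟨by omega, by omega⟩
        have hunion : (A0 ∪ Cc).card = A0.card + Cc.card := pc_union_card hAC
        have : (A0 ∪ Cc).card ≤ k := hS.2.1 _ (Finset.union_subset h01 hCS)
          (pc_iff_antichain.mp (pc_union h02 hCpc hAC))
        omega
      have hdisj : Disjoint B Cc := Finset.disjoint_left.mpr (fun p hp1 hp2 => by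
        have := (Finset.mem_filter.mp hp1).2
        have := (Finset.mem_filter.mp hp2).2
        omega)
      have hAcard : A.card = (A.erase x).card + 1 := by
        rw [Finset.card_erase_of_mem hxA]
        have : 1 ≤ A.card := Finset.card_pos.mpr ⟨x, hxA⟩
        omega
      rw [hAcard, hBC, Finset.card_union_of_disjoint hdisj]
      have := MS_le_k k S (i : ℤ) (j : ℤ)
      omega
    · refine hS.2.1 A (fun p hp => ?_) hanti
      rcases Finset.mem_insert.mp (hA hp) with rfl | h
      · exact absurd hp hxA
      · exact h
  have heq := hS.2.2 (insert x S) (Finset.insert_subset hXn hS.1) hw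
    (Finset.subset_insert _ _)
  exact hns (by rw [← heq]; exact Finset.mem_insert_self _ _)

lemma FP_PsiF_eq {u v : ℤ} (hu : 0 ≤ u) (hv : 0 ≤ v) (hvm : v < ((n - k : ℕ) : ℤ)) :
    FP n k (PsiF n k S) u v = FS k S (min u v) v := by
  unfold FP
  rw [if_neg (by omega), if_neg (by omega)]
  simp only [PsiF]
  rw [if_pos (show (1:ℕ) ≤ ((((n - k : ℕ) : ℤ) - v).toNat) ∧
      (1:ℕ) ≤ (min u v).toNat + 1 ∧
      ((((n - k : ℕ) : ℤ) - v).toNat) + ((min u v).toNat + 1) ≤ (n - k) + 1 from by omega)]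
  congr 1 <;> push_cast <;> omega

lemma claimE (hS : IsFacet R (Xn n) k S) (hkn : k ≤ n) {r : ℕ} (hr1 : 1 ≤ r)
    (hrk : r ≤ k) (i j : ℤ) :
    r ≤ FP n k (PsiF n k S) (i - r) (j - r) ↔ HasAC S r i j := by
  constructor
  · intro h
    obtain ⟨hu, hv⟩ := FP_pos_args (le_trans hr1 h)
    by_cases hbig : ((n - k : ℕ) : ℤ) ≤ j - r
    · refine ⟨(Finset.Icc 1 r).image (fun s => (s, (n - k) + s)), ?_, ?_, ?_, ?_⟩
      · intro p hp
        obtain ⟨s, hs, rfl⟩ := Finset.mem_image.mp hp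
        have := Finset.mem_Icc.mp hs
        exact forced_mem hS hkn (by omega) (by omega)
      · intro a ha b hb hab
        obtain ⟨s1, hs1, rfl⟩ := Finset.mem_image.mp ha
        obtain ⟨s2, hs2, rfl⟩ := Finset.mem_image.mp hb
        have hne : s1 ≠ s2 := fun hEq => hab (by rw [hEq])
        rcases Nat.lt_or_ge s1 s2 with hlt | hge
        · exact Or.inl ⟨by omega, by omega⟩
        · exact Or.inr ⟨by omega, by omega⟩
      · rw [Finset.card_image_of_injOn (fun a _ b _ hEq => by
          simpa using congrArg Prod.fst hEq), Nat.card_Icc]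
        omega
      · intro p hp
        obtain ⟨s, hs, rfl⟩ := Finset.mem_image.mp hp
        have := Finset.mem_Icc.mp hs
        constructor
        · simp only; omega
        · simp only; push_cast; omega
    · rw [FP_PsiF_eq hu hv (by omega)] at h
      have hatt := FS_attained k S (min (i - r) (j - r)) (j - r)
      have htrim := hasAC_trim_to hatt h
      refine hasAC_mono_bound ?_ ?_ htrim <;> omega
  · intro hAC
    obtain ⟨hi, hj⟩ := hasAC_pos hS.1 hAC hr1
    by_cases hbig : ((n - k : ℕ) : ℤ) ≤ j - r
    · rw [FP_big (by omega) hbig]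
      exact hrk
    · rw [FP_PsiF_eq (by omega) (by omega) (by omega)]
      refine FS_ge hrk ?_
      obtain ⟨A, h1, h2, h3, h4⟩ := hAC
      refine ⟨A, h1, h2, h3, fun p hp => ?_⟩
      have hXp := mem_Xn.mp (hS.1 (h1 hp))
      have h4' := h4 p hp
      constructor
      · have : (p.1 : ℤ) ≤ p.2 := by exact_mod_cast hXp.2.1
        omega
      · omega

lemma MP_eq_MS (hS : IsFacet R (Xn n) k S) (hkn : k ≤ n) (i j : ℤ) :
    MP n k (PsiF n k S) i j = MS k S i j := by
  unfold MP MS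
  congr 1
  apply Finset.filter_congr
  intro r hr
  have hrk := Finset.mem_range.mp hr
  rcases Nat.eq_zero_or_pos r with rfl | hrpos
  · simp [hasAC_zero]
  · exact claimE hS hkn (r := r) (by omega) (by omega) i j

lemma PhiPsi (hS : IsFacet R (Xn n) k S) (hkn : k ≤ n) : SP n k (PsiF n k S) = S := by
  ext x
  obtain ⟨i, j⟩ := x
  rw [SP, Finset.mem_filter]
  constructor
  · rintro ⟨hXn, hj⟩
    rw [MP_eq_MS hS hkn, MP_eq_MS hS hkn] at hj
    exact mem_of_MS_jump hS hXn hj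
  · intro hxS
    refine ⟨hS.1 hxS, ?_⟩
    rw [MP_eq_MS hS hkn, MP_eq_MS hS hkn]
    exact MS_jump_of_mem hS hxS

end FacetSide

end
end St4

/-- The plane partitions in the `(n-k)`-staircase bounded by `k` are in bijection
with the facets of the `k`-th order complex of the poset
`X_n = {(i,j) : 1 ≤ i ≤ j ≤ n}` ordered by `(i,j) ≤ (i',j') ↔ i ≤ i' ∧ j ≥ j'`. -/
theorem statement4 (n k : ℕ) (hn : 0 < n) (hk : 0 < k) (hkn : k ≤ n) :
    Nonempty
      ({P : ℕ × ℕ → ℕ // IsPP (staircaseBoxes (n - k)) k P} ≃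
        {S : Finset (ℕ × ℕ) //
          IsFacet (fun x y => x.1 ≤ y.1 ∧ y.2 ≤ x.2) (Xn n) k S}) := by
  exact ⟨{ toFun := fun P => ⟨St4.SP n k P.1, St4.SP_facet P.2 hkn⟩
           invFun := fun S => ⟨St4.PsiF n k S.1, St4.psiF_isPP n k S.1⟩
           left_inv := fun P => Subtype.ext (St4.PsiPhi P.2 hkn)
           right_inv := fun S => Subtype.ext (St4.PhiPsi S.2 hkn) }⟩
end

section
/- Let n, k be positive integers with k ≤ ⌊n/2⌋. The set of plane partitions in the shifted (n−2k−1)-staircase bounded by k is in bijection with (in particular, equinumerous to) the set of facets of the k-th order complex Δ_k of the poset Y_n = {(i,j) : 1 ≤ i < j ≤ n} with componentwise order. (If n−2k−1 ≤ 0, the diagram is empty and has exactly one empty plane partition.) -/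
/-- The boxes of the shifted `m`-staircase: pairs `(i, j)` with `1 ≤ i ≤ j ≤ m`. -/
def shiftedStaircaseBoxes (m : ℕ) : Finset (ℕ × ℕ) :=
  (Finset.Icc 1 m ×ˢ Finset.Icc 1 m).filter fun x => x.1 ≤ x.2

/-- The ground set of the poset `Y_n = {(i,j) : 1 ≤ i < j ≤ n}`. -/
def Yn (n : ℕ) : Finset (ℕ × ℕ) :=
  (Finset.Icc 1 n ×ˢ Finset.Icc 1 n).filter fun x => x.1 < x.2

namespace S5
open Finset

attribute [local instance] Classical.propDecidable

/-- the componentwise order used in the theorem -/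
def lp : ℕ × ℕ → ℕ × ℕ → Prop := fun x y => x.1 ≤ y.1 ∧ x.2 ≤ y.2

lemma mem_Yn {n : ℕ} {x : ℕ × ℕ} : x ∈ Yn n ↔ 1 ≤ x.1 ∧ x.1 < x.2 ∧ x.2 ≤ n := by
  unfold Yn
  simp only [Finset.mem_filter, Finset.mem_product, Finset.mem_Icc]
  omega

lemma mem_box {m : ℕ} {x : ℕ × ℕ} :
    x ∈ shiftedStaircaseBoxes m ↔ 1 ≤ x.1 ∧ x.1 ≤ x.2 ∧ x.2 ≤ m := by
  unfold shiftedStaircaseBoxes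
  simp only [Finset.mem_filter, Finset.mem_product, Finset.mem_Icc]
  omega

lemma antichain_pair {A : Finset (ℕ × ℕ)} (h : IsAntichainIn lp A) {a b : ℕ × ℕ}
    (ha : a ∈ A) (hb : b ∈ A) (hne : a ≠ b) :
    (a.1 < b.1 ∧ b.2 < a.2) ∨ (b.1 < a.1 ∧ a.2 < b.2) := by
  obtain ⟨h1, h2⟩ := h a ha b hb hne
  unfold lp at h1 h2
  omega

lemma antichain_subset {A B : Finset (ℕ × ℕ)} (h : IsAntichainIn lp B) (hAB : A ⊆ B) :
    IsAntichainIn lp A := fun a ha b hb hne => h a (hAB ha) b (hAB hb) hne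

lemma antichain_fst_injOn {A : Finset (ℕ × ℕ)} (h : IsAntichainIn lp A) :
    Set.InjOn Prod.fst (A : Set (ℕ × ℕ)) := by
  intro a ha b hb hfst
  by_contra hne
  rcases antichain_pair h ha hb hne with ⟨h1, _⟩ | ⟨h1, _⟩ <;> omega

lemma antichain_snd_injOn {A : Finset (ℕ × ℕ)} (h : IsAntichainIn lp A) :
    Set.InjOn Prod.snd (A : Set (ℕ × ℕ)) := by
  intro a ha b hb hsnd
  by_contra hne
  rcases antichain_pair h ha hb hne with ⟨_, h2⟩ | ⟨_, h2⟩ <;> omega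

/-- elements of a fixed antidiagonal form an antichain -/
lemma antichain_of_const_sum {A : Finset (ℕ × ℕ)} {s : ℕ}
    (h : ∀ x ∈ A, x.1 + x.2 = s ∧ 1 ≤ x.1) : IsAntichainIn lp A := by
  intro a ha b hb hne
  obtain ⟨hsa, _⟩ := h a ha
  obtain ⟨hsb, _⟩ := h b hb
  have : a.1 ≠ b.1 := by
    intro he
    exact hne (Prod.ext he (by omega))
  constructor <;> (unfold lp; omega)

/-- discrete intermediate value theorem -/
lemma discreteIVT (K : ℕ) (f : ℕ → ℤ) (h0 : 0 ≤ f 0) (hK : f K ≤ 0)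
    (hstep : ∀ c, c < K → f c - 1 ≤ f (c + 1)) : ∃ c ≤ K, f c = 0 := by
  induction K with
  | zero => exact ⟨0, le_refl 0, le_antisymm hK h0⟩
  | succ K ih =>
    by_cases hfK : f K ≤ 0
    · obtain ⟨c, hc, hfc⟩ := ih hfK (fun c hc => hstep c (by omega))
      exact ⟨c, by omega, hfc⟩
    · refine ⟨K + 1, le_refl _, ?_⟩
      have := hstep K (by omega)
      omega

/-- multi-step gap for a strictly increasing (up to K) function -/
lemma gapLemma (K : ℕ) (f : ℕ → ℕ) (h : ∀ a b, a < b → b ≤ K → f a < f b) :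
    ∀ b a, a ≤ b → b ≤ K → f a + (b - a) ≤ f b := by
  intro b
  induction b with
  | zero => intro a h1 _; interval_cases a; omega
  | succ b ih =>
    intro a hab hbK
    rcases Nat.lt_or_ge a (b+1) with hlt | hge
    · have h1 := ih a (by omega) (by omega)
      have h2 := h b (b+1) (by omega) hbK
      omega
    · have : a = b + 1 := by omega
      subst this; omega

/-- multi-step gap, decreasing version -/
lemma gapLemma' (K : ℕ) (f : ℕ → ℕ) (h : ∀ a b, a < b → b ≤ K → f b < f a) :
    ∀ b a, a ≤ b → b ≤ K → f b + (b - a) ≤ f a := by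
  intro b
  induction b with
  | zero => intro a h1 _; interval_cases a; omega
  | succ b ih =>
    intro a hab hbK
    rcases Nat.lt_or_ge a (b+1) with hlt | hge
    · have h1 := ih a (by omega) (by omega)
      have h2 := h b (b+1) (by omega) hbK
      omega
    · have : a = b + 1 := by omega
      subst this; omega


/-- two strictly monotone maps with the same image on a finite index set agree -/
lemma strictMono_image_eq : ∀ (I : Finset ℕ) (f g : ℕ → ℕ),
    (∀ a ∈ I, ∀ b ∈ I, a < b → f a < f b) →
    (∀ a ∈ I, ∀ b ∈ I, a < b → g a < g b) →
    I.image f = I.image g → ∀ a ∈ I, f a = g a := by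
  intro I
  induction I using Finset.strongInduction with
  | _ I ih =>
    intro f g hf hg him a ha
    have hne : I.Nonempty := ⟨a, ha⟩
    set a0 := I.min' hne with ha0
    have ha0I : a0 ∈ I := I.min'_mem hne
    have hminval : ∀ (f : ℕ → ℕ), (∀ a ∈ I, ∀ b ∈ I, a < b → f a < f b) →
        ∀ y ∈ I.image f, f a0 ≤ y := by
      intro f hf y hy
      obtain ⟨b, hb, rfl⟩ := Finset.mem_image.mp hy
      rcases Nat.eq_or_lt_of_le (I.min'_le b hb) with he | hlt
      · exact le_of_eq (congrArg f (ha0.trans he))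
      · exact le_of_lt (hf a0 ha0I b hb hlt)
    have heq0 : f a0 = g a0 := by
      have h1 : f a0 ≤ g a0 := hminval f hf _ (him ▸ Finset.mem_image_of_mem g ha0I)
      have h2 : g a0 ≤ f a0 := by
        refine hminval g hg _ ?_
        rw [← him]; exact Finset.mem_image_of_mem f ha0I
      omega
    rcases eq_or_ne a a0 with rfl | hne'
    · exact heq0
    have haI' : a ∈ I.erase a0 := Finset.mem_erase.mpr ⟨hne', ha⟩
    have himage : ∀ (f : ℕ → ℕ), (∀ a ∈ I, ∀ b ∈ I, a < b → f a < f b) →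
        (I.erase a0).image f = (I.image f).erase (f a0) := by
      intro f hf
      ext y
      simp only [Finset.mem_image, Finset.mem_erase]
      constructor
      · rintro ⟨b, ⟨hbne, hbI⟩, rfl⟩
        have : a0 < b := lt_of_le_of_ne (I.min'_le b hbI) (Ne.symm hbne)
        exact ⟨Nat.ne_of_gt (hf a0 ha0I b hbI this), ⟨b, hbI, rfl⟩⟩
      · rintro ⟨hyne, b, hbI, rfl⟩
        have hbne : b ≠ a0 := by rintro rfl; exact hyne rfl
        exact ⟨b, ⟨hbne, hbI⟩, rfl⟩
    refine ih (I.erase a0) (Finset.erase_ssubset ha0I) f g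
      (fun x hx y hy => hf x (Finset.mem_of_mem_erase hx) y (Finset.mem_of_mem_erase hy))
      (fun x hx y hy => hg x (Finset.mem_of_mem_erase hx) y (Finset.mem_of_mem_erase hy))
      ?_ a haI'
    rw [himage f hf, himage g hg, him, heq0]

lemma card_Yn (n : ℕ) : (Yn n).card = n.choose 2 := by
  induction n with
  | zero =>
    have : Yn 0 = ∅ := by
      ext x; simp only [mem_Yn, Finset.notMem_empty, iff_false]; omega
    simp [this]
  | succ n ih =>
    have hsplit : Yn (n+1) = Yn n ∪ (Finset.Icc 1 n).image (fun i => (i, n+1)) := by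
      ext x
      obtain ⟨x1, x2⟩ := x
      simp only [mem_Yn, Finset.mem_union, Finset.mem_image, Finset.mem_Icc, Prod.mk.injEq]
      constructor
      · rintro ⟨h1, h2, h3⟩
        rcases Nat.lt_or_ge x2 (n+1) with h | h
        · exact Or.inl ⟨h1, h2, by omega⟩
        · exact Or.inr ⟨x1, ⟨h1, by omega⟩, rfl, by omega⟩
      · rintro (⟨h1, h2, h3⟩ | ⟨i, ⟨hi1, hi2⟩, rfl, rfl⟩)
        · exact ⟨h1, h2, by omega⟩
        · exact ⟨hi1, by omega, le_refl _⟩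
    have hdisj : Disjoint (Yn n) ((Finset.Icc 1 n).image (fun i => (i, n+1))) := by
      rw [Finset.disjoint_left]
      intro x hx hx'
      obtain ⟨i, _, rfl⟩ := Finset.mem_image.mp hx'
      have := mem_Yn.mp hx
      omega
    have hcardim : ((Finset.Icc 1 n).image (fun i => (i, n+1))).card = n := by
      rw [Finset.card_image_of_injective _ (fun a b h => (Prod.mk.injEq _ _ _ _).mp h |>.1)]
      simp [Nat.card_Icc]
    rw [hsplit, Finset.card_union_of_disjoint hdisj, ih, hcardim,
      Nat.choose_succ_succ, Nat.choose_one_right, Nat.add_comm]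

lemma card_boxes (m : ℕ) : (shiftedStaircaseBoxes m).card = (m+1).choose 2 := by
  induction m with
  | zero =>
    have : shiftedStaircaseBoxes 0 = ∅ := by
      ext x; simp only [mem_box, Finset.notMem_empty, iff_false]; omega
    simp [this]
  | succ m ih =>
    have hsplit : shiftedStaircaseBoxes (m+1) =
        shiftedStaircaseBoxes m ∪ (Finset.Icc 1 (m+1)).image (fun i => (i, m+1)) := by
      ext x
      obtain ⟨x1, x2⟩ := x
      simp only [mem_box, Finset.mem_union, Finset.mem_image, Finset.mem_Icc, Prod.mk.injEq]
      constructor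
      · rintro ⟨h1, h2, h3⟩
        rcases Nat.lt_or_ge x2 (m+1) with h | h
        · exact Or.inl ⟨h1, h2, by omega⟩
        · exact Or.inr ⟨x1, ⟨h1, by omega⟩, rfl, by omega⟩
      · rintro (⟨h1, h2, h3⟩ | ⟨i, ⟨hi1, hi2⟩, rfl, rfl⟩)
        · exact ⟨h1, h2, by omega⟩
        · exact ⟨hi1, hi2, le_refl _⟩
    have hdisj : Disjoint (shiftedStaircaseBoxes m) ((Finset.Icc 1 (m+1)).image (fun i => (i, m+1))) := by
      rw [Finset.disjoint_left]
      intro x hx hx'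
      obtain ⟨i, _, rfl⟩ := Finset.mem_image.mp hx'
      have := mem_box.mp hx
      omega
    have hcardim : ((Finset.Icc 1 (m+1)).image (fun i => (i, m+1))).card = m + 1 := by
      rw [Finset.card_image_of_injective _ (fun a b h => (Prod.mk.injEq _ _ _ _).mp h |>.1)]
      simp [Nat.card_Icc]
    rw [hsplit, Finset.card_union_of_disjoint hdisj, ih, hcardim]
    have h2 : (m+1+1).choose 2 = (m+1).choose 1 + (m+1).choose 2 := Nat.choose_succ_succ _ _
    have h3 : (m+1).choose 2 = m.choose 1 + m.choose 2 := Nat.choose_succ_succ _ _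
    simp only [Nat.choose_one_right] at h2 h3
    omega

lemma sumIdent : ∀ (k n : ℕ), 2*k ≤ n →
    (∑ r ∈ Finset.range k, (2*n - 4*r - 3)) + (n - 2*k).choose 2 = n.choose 2 := by
  intro k
  induction k with
  | zero => intro n _; simp
  | succ k ih =>
    intro n hn
    rw [Finset.sum_range_succ]
    have h1 := ih n (by omega)
    have key : (n - 2*k).choose 2 = (2*n - 4*k - 3) + (n - 2*(k+1)).choose 2 := by
      have ha : n - 2*k = (n - 2*(k+1)) + 2 := by omega
      set a := n - 2*(k+1) with hadef
      rw [ha]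
      have h2 : (a+2).choose 2 = (a+1).choose 2 + (a+1).choose 1 := by
        rw [Nat.choose_succ_succ (a+1) 1, Nat.add_comm]
      have h3 : (a+1).choose 2 = a.choose 2 + a.choose 1 := by
        rw [Nat.choose_succ_succ a 1, Nat.add_comm]
      rw [h2, h3, Nat.choose_one_right, Nat.choose_one_right]
      omega
    omega


def ray (n s : ℕ) : Finset (ℕ × ℕ) := (Yn n).filter (fun x => x.1 + x.2 = s)

def boxrow (m σ : ℕ) : Finset (ℕ × ℕ) :=
  (shiftedStaircaseBoxes m).filter (fun x => x.1 + x.2 = σ)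

lemma mem_ray {n s : ℕ} {x : ℕ × ℕ} :
    x ∈ ray n s ↔ (1 ≤ x.1 ∧ x.1 < x.2 ∧ x.2 ≤ n) ∧ x.1 + x.2 = s := by
  unfold ray; rw [Finset.mem_filter, mem_Yn]

lemma mem_boxrow {m σ : ℕ} {x : ℕ × ℕ} :
    x ∈ boxrow m σ ↔ (1 ≤ x.1 ∧ x.1 ≤ x.2 ∧ x.2 ≤ m) ∧ x.1 + x.2 = σ := by
  unfold boxrow; rw [Finset.mem_filter, mem_box]

lemma ray_eq (n s : ℕ) :
    ray n s = (Finset.Icc (max 1 (s - n)) ((s-1)/2)).image (fun i => (i, s - i)) := by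
  ext x
  obtain ⟨x1, x2⟩ := x
  simp only [mem_ray, Finset.mem_image, Finset.mem_Icc, Prod.mk.injEq]
  constructor
  · rintro ⟨⟨h1, h2, h3⟩, h4⟩
    exact ⟨x1, ⟨by omega, by omega⟩, rfl, by omega⟩
  · rintro ⟨i, ⟨hi1, hi2⟩, rfl, rfl⟩
    omega

lemma boxrow_eq (m σ : ℕ) :
    boxrow m σ = (Finset.Icc (max 1 (σ - m)) (σ/2)).image (fun r => (r, σ - r)) := by
  ext x
  obtain ⟨x1, x2⟩ := x
  simp only [mem_boxrow, Finset.mem_image, Finset.mem_Icc, Prod.mk.injEq]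
  constructor
  · rintro ⟨⟨h1, h2, h3⟩, h4⟩
    exact ⟨x1, ⟨by omega, by omega⟩, rfl, by omega⟩
  · rintro ⟨r, ⟨hr1, hr2⟩, rfl, rfl⟩
    omega

lemma card_ray (n s : ℕ) : (ray n s).card = (s-1)/2 + 1 - max 1 (s - n) := by
  rw [ray_eq, Finset.card_image_of_injOn (fun a _ b _ h => ((Prod.mk.injEq _ _ _ _).mp h).1),
    Nat.card_Icc]

lemma card_boxrow (m σ : ℕ) : (boxrow m σ).card = σ/2 + 1 - max 1 (σ - m) := by
  rw [boxrow_eq, Finset.card_image_of_injOn (fun a _ b _ h => ((Prod.mk.injEq _ _ _ _).mp h).1),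
    Nat.card_Icc]

lemma card_ray_boxrow {n k σ : ℕ} (hnk : 2*k+2 ≤ n) (hb : (boxrow (n-2*k-1) σ).Nonempty) :
    (ray n (σ + 2*k+1)).card = (boxrow (n-2*k-1) σ).card + k := by
  obtain ⟨b, hbmem⟩ := hb
  rw [mem_boxrow] at hbmem
  rw [card_ray, card_boxrow]
  omega

/-- extract a strictly "staircase-decreasing" enumeration from an antichain -/
lemma exists_chain {A : Finset (ℕ × ℕ)} {K : ℕ} (hA : IsAntichainIn lp A)
    (hcard : A.card = K + 1) :
    ∃ X : ℕ → ℕ × ℕ, (∀ c, c ≤ K → X c ∈ A) ∧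
      ∀ c c', c < c' → c' ≤ K → (X c).1 < (X c').1 ∧ (X c').2 < (X c).2 := by
  classical
  have hinj := antichain_fst_injOn hA
  have hV : (A.image Prod.fst).card = K + 1 := by
    rw [Finset.card_image_of_injOn hinj, hcard]
  set e := (A.image Prod.fst).orderIsoOfFin hV with he
  have huniq : ∀ v : ℕ, v ∈ A.image Prod.fst → ∃! a, a ∈ A ∧ a.1 = v := by
    intro v hv
    obtain ⟨a, ha, rfl⟩ := Finset.mem_image.mp hv
    exact ⟨a, ⟨ha, rfl⟩, fun b hb => hinj hb.1 ha hb.2⟩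
  have hlt : ∀ c : ℕ, min c K < K + 1 := fun c => by omega
  refine ⟨fun c =>
      A.choose (fun a => a.1 = (e ⟨min c K, hlt c⟩ : ℕ)) (huniq _ (e ⟨min c K, hlt c⟩).2),
    ?_, ?_⟩
  · intro c _
    exact Finset.choose_mem _ _ _
  · intro c c' hcc hc'
    have hfst : (A.choose (fun a => a.1 = (e ⟨min c K, hlt c⟩ : ℕ)) (huniq _ (e ⟨min c K, hlt c⟩).2)).1
        < (A.choose (fun a => a.1 = (e ⟨min c' K, hlt c'⟩ : ℕ)) (huniq _ (e ⟨min c' K, hlt c'⟩).2)).1 := by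
      rw [Finset.choose_property (fun a => a.1 = (e ⟨min c K, hlt c⟩ : ℕ)) A _,
        Finset.choose_property (fun a => a.1 = (e ⟨min c' K, hlt c'⟩ : ℕ)) A _]
      exact e.strictMono (show (⟨min c K, hlt c⟩ : Fin (K+1)) < ⟨min c' K, hlt c'⟩ from by
        simp only [Fin.mk_lt_mk]; omega)
    have hmem1 := Finset.choose_mem (fun a => a.1 = (e ⟨min c K, hlt c⟩ : ℕ)) A (huniq _ (e ⟨min c K, hlt c⟩).2)
    have hmem2 := Finset.choose_mem (fun a => a.1 = (e ⟨min c' K, hlt c'⟩ : ℕ)) A (huniq _ (e ⟨min c' K, hlt c'⟩).2)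
    have hne : (A.choose (fun a => a.1 = (e ⟨min c K, hlt c⟩ : ℕ)) (huniq _ (e ⟨min c K, hlt c⟩).2))
        ≠ (A.choose (fun a => a.1 = (e ⟨min c' K, hlt c'⟩ : ℕ)) (huniq _ (e ⟨min c' K, hlt c'⟩).2)) := by
      intro hcontra
      rw [hcontra] at hfst
      omega
    rcases antichain_pair hA hmem1 hmem2 hne with ⟨ha, hb⟩ | ⟨ha, hb⟩
    · exact ⟨hfst, hb⟩
    · omega

/-- the complement point associated to a box `b` with plane-partition value `v` -/
def tp (k : ℕ) (b : ℕ × ℕ) (v : ℕ) : ℕ × ℕ := (b.1 + (k - v), b.2 + k + 1 + v)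

def Tset (n k : ℕ) (P : ℕ × ℕ → ℕ) : Finset (ℕ × ℕ) :=
  (shiftedStaircaseBoxes (n - 2*k - 1)).image (fun b => tp k b (P b))

def Sset (n k : ℕ) (P : ℕ × ℕ → ℕ) : Finset (ℕ × ℕ) := Yn n \ Tset n k P

lemma mem_Tset {n k : ℕ} {P : ℕ × ℕ → ℕ} {x : ℕ × ℕ} :
    x ∈ Tset n k P ↔ ∃ b ∈ shiftedStaircaseBoxes (n - 2*k - 1), tp k b (P b) = x :=
  Finset.mem_image

lemma ppMono {m k : ℕ} {P : ℕ × ℕ → ℕ} (hP : IsPP (shiftedStaircaseBoxes m) k P)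
    {b b' : ℕ × ℕ} (hb : b ∈ shiftedStaircaseBoxes m) (hb' : b' ∈ shiftedStaircaseBoxes m)
    (h1 : b.1 ≤ b'.1) (h2 : b'.2 ≤ b.2) : P b' ≤ P b := by
  obtain ⟨r, c⟩ := b
  obtain ⟨r', c'⟩ := b'
  simp only [mem_box] at hb hb'
  simp only at h1 h2
  have col : ∀ t, c' + t ≤ c → P (r', c') ≤ P (r', c' + t) := by
    intro t
    induction t with
    | zero => intro _; simp
    | succ t ih =>
      intro ht
      refine le_trans (ih (by omega)) (hP.2.2.1 r' (c' + t) ?_ ?_)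
      · rw [mem_box]; simp only; omega
      · rw [mem_box]; simp only; omega
  have row : ∀ t, r + t ≤ r' → P (r + t, c) ≤ P (r, c) := by
    intro t
    induction t with
    | zero => intro _; simp
    | succ t ih =>
      intro ht
      refine le_trans (hP.2.2.2 (r + t) c ?_ ?_) (ih (by omega))
      · rw [mem_box]; simp only; omega
      · rw [mem_box]; simp only; omega
  have hc : P (r', c') ≤ P (r', c) := by
    have := col (c - c') (by omega)
    have he : c' + (c - c') = c := by omega
    rwa [he] at this
  have hr : P (r', c) ≤ P (r, c) := by
    have := row (r' - r) (by omega)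
    have he : r + (r' - r) = r' := by omega
    rwa [he] at this
  exact le_trans hc hr

lemma tp_mem {n k : ℕ} {P : ℕ × ℕ → ℕ} (hP : IsPP (shiftedStaircaseBoxes (n - 2*k - 1)) k P)
    {b : ℕ × ℕ} (hb : b ∈ shiftedStaircaseBoxes (n - 2*k - 1)) : tp k b (P b) ∈ Yn n := by
  have hv := hP.1 b hb
  rw [mem_box] at hb
  rw [mem_Yn]
  unfold tp
  simp only
  omega

lemma tp_sum {k : ℕ} {b : ℕ × ℕ} {v : ℕ} (hv : v ≤ k) :
    (tp k b v).1 + (tp k b v).2 = b.1 + b.2 + 2*k + 1 := by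
  unfold tp; simp only; omega

lemma tp_fst_lt {n k : ℕ} {P : ℕ × ℕ → ℕ} (hP : IsPP (shiftedStaircaseBoxes (n - 2*k - 1)) k P)
    {b b' : ℕ × ℕ} (hb : b ∈ shiftedStaircaseBoxes (n - 2*k - 1))
    (hb' : b' ∈ shiftedStaircaseBoxes (n - 2*k - 1))
    (hsum : b.1 + b.2 = b'.1 + b'.2) (hlt : b.1 < b'.1) :
    (tp k b (P b)).1 < (tp k b' (P b')).1 := by
  have hmono : P b' ≤ P b := by
    refine ppMono hP hb hb' (by omega) (by omega)
  have h1 := hP.1 b hb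
  have h2 := hP.1 b' hb'
  unfold tp
  simp only
  omega

lemma tp_injOn {n k : ℕ} {P : ℕ × ℕ → ℕ} (hP : IsPP (shiftedStaircaseBoxes (n - 2*k - 1)) k P)
    {b b' : ℕ × ℕ} (hb : b ∈ shiftedStaircaseBoxes (n - 2*k - 1))
    (hb' : b' ∈ shiftedStaircaseBoxes (n - 2*k - 1))
    (heq : tp k b (P b) = tp k b' (P b')) : b = b' := by
  by_contra hne
  have hs : b.1 + b.2 = b'.1 + b'.2 := by
    have e1 := tp_sum (k := k) (b := b) (hP.1 b hb)
    have e2 := tp_sum (k := k) (b := b') (hP.1 b' hb')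
    rw [heq] at e1
    omega
  have hfst : b.1 ≠ b'.1 := by
    intro hf
    apply hne
    exact Prod.ext hf (by omega)
  rcases Nat.lt_or_ge b.1 b'.1 with h | h
  · have := tp_fst_lt hP hb hb' hs h
    rw [heq] at this; omega
  · have := tp_fst_lt hP hb' hb hs.symm (by omega)
    rw [heq] at this; omega

lemma Sset_subset {n k : ℕ} {P : ℕ × ℕ → ℕ} : Sset n k P ⊆ Yn n :=
  Finset.sdiff_subset

/-- (F1) the complement of `Tset P` has width at most `k` -/
lemma widthF {n k : ℕ} {P : ℕ × ℕ → ℕ} (hP : IsPP (shiftedStaircaseBoxes (n - 2*k - 1)) k P) :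
    WidthLE lp (Sset n k P) k := by
  intro A hsub hanti
  by_contra hbig
  push_neg at hbig
  obtain ⟨B, hBsub, hBcard⟩ := Finset.exists_subset_card_eq (s := A) (n := k+1) (by omega)
  have hBanti := antichain_subset hanti hBsub
  obtain ⟨X, hXmem, hXlt⟩ := exists_chain hBanti hBcard
  have gap1 : ∀ a b, a ≤ b → b ≤ k → (X a).1 + (b - a) ≤ (X b).1 :=
    fun a b => gapLemma k (fun c => (X c).1) (fun a b hab hbk => (hXlt a b hab hbk).1) b a
  have gap2 : ∀ a b, a ≤ b → b ≤ k → (X b).2 + (b - a) ≤ (X a).2 :=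
    fun a b => gapLemma' k (fun c => (X c).2) (fun a b hab hbk => (hXlt a b hab hbk).2) b a
  have hYmem : ∀ c, c ≤ k → (X c) ∈ Yn n := fun c hc =>
    (Finset.mem_sdiff.mp (hsub (hBsub (hXmem c hc)))).1
  have hboxmem : ∀ c, c ≤ k →
      ((X c).1 - c, (X c).2 + c - (2*k+1)) ∈ shiftedStaircaseBoxes (n - 2*k - 1) := by
    intro c hc
    have h0 := mem_Yn.mp (hYmem 0 (by omega))
    have hck := mem_Yn.mp (hYmem c hc)
    have hkk := mem_Yn.mp (hYmem k (le_refl k))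
    have g1 := gap1 0 c (by omega) hc
    have g2 := gap2 0 c (by omega) hc
    have g3 := gap1 c k hc (le_refl k)
    have g4 := gap2 c k hc (le_refl k)
    rw [mem_box]
    simp only
    omega
  have hstep : ∀ c, c < k →
      ((k : ℤ) - P ((X c).1 - c, (X c).2 + c - (2*k+1)) - c) - 1 ≤
      ((k : ℤ) - P ((X (c+1)).1 - (c+1), (X (c+1)).2 + (c+1) - (2*k+1)) - (c+1)) := by
    intro c hc
    have h0 := mem_Yn.mp (hYmem 0 (by omega))
    have g1 := gap1 0 c (by omega) (by omega)
    have g2 := gap2 0 (c+1) (by omega) (by omega)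
    have hstep1 := (hXlt c (c+1) (by omega) (by omega)).1
    have hstep2 := (hXlt c (c+1) (by omega) (by omega)).2
    have hmono : P ((X (c+1)).1 - (c+1), (X (c+1)).2 + (c+1) - (2*k+1)) ≤
        P ((X c).1 - c, (X c).2 + c - (2*k+1)) := by
      refine ppMono hP (hboxmem c (by omega)) (hboxmem (c+1) (by omega)) ?_ ?_ <;>
        simp only <;> omega
    omega
  obtain ⟨c, hck, hφc⟩ := discreteIVT k
    (fun c => (k : ℤ) - P ((X c).1 - c, (X c).2 + c - (2*k+1)) - c)
    (by
      have := hP.1 _ (hboxmem 0 (by omega))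
      push_cast
      omega)
    (by push_cast; omega)
    hstep
  have hval : P ((X c).1 - c, (X c).2 + c - (2*k+1)) = k - c ∧ c ≤ k := by
    constructor <;> omega
  have hXT : X c ∈ Tset n k P := by
    rw [mem_Tset]
    refine ⟨_, hboxmem c hck, ?_⟩
    have h0 := mem_Yn.mp (hYmem 0 (by omega))
    have hck2 := mem_Yn.mp (hYmem c hck)
    have g1 := gap1 0 c (by omega) hck
    have g2 := gap2 0 c (by omega) hck
    have hb := mem_box.mp (hboxmem c hck)
    unfold tp
    rw [hval.1]
    apply Prod.ext <;> simp only <;> omega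
  exact (Finset.mem_sdiff.mp (hsub (hBsub (hXmem c hck)))).2 hXT

lemma pair_recover {σ : ℕ} {y : ℕ × ℕ} (h : y.1 + y.2 = σ) : (y.1, σ - y.1) = y := by
  obtain ⟨y1, y2⟩ := y
  simp only at h ⊢
  rw [show σ - y1 = y2 by omega]

/-- the antidiagonal slice of `Tset` is the image of the corresponding box row -/
lemma ray_filter_Tset {n k : ℕ} {P : ℕ × ℕ → ℕ}
    (hP : IsPP (shiftedStaircaseBoxes (n - 2*k - 1)) k P) (σ : ℕ) :
    (ray n (σ + 2*k + 1)).filter (fun y => y ∈ Tset n k P) =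
      (boxrow (n - 2*k - 1) σ).image (fun b => tp k b (P b)) := by
  ext y
  constructor
  · intro hy
    obtain ⟨hyray, hyT⟩ := Finset.mem_filter.mp hy
    obtain ⟨b', hb', rfl⟩ := mem_Tset.mp hyT
    refine Finset.mem_image.mpr ⟨b', ?_, rfl⟩
    rw [mem_boxrow]
    have h1 := mem_box.mp hb'
    have hsum := tp_sum (k := k) (b := b') (hP.1 b' hb')
    have hysum := (mem_ray.mp hyray).2
    exact ⟨h1, by omega⟩
  · intro hy
    obtain ⟨b', hb'row, rfl⟩ := Finset.mem_image.mp hy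
    have hb' : b' ∈ shiftedStaircaseBoxes (n - 2*k - 1) := (Finset.mem_filter.mp hb'row).1
    refine Finset.mem_filter.mpr ⟨?_, mem_Tset.mpr ⟨b', hb', rfl⟩⟩
    rw [mem_ray]
    have h1 := mem_Yn.mp (tp_mem hP hb')
    have hsum := tp_sum (k := k) (b := b') (hP.1 b' hb')
    have hσ := (mem_boxrow.mp hb'row).2
    exact ⟨h1, by omega⟩

/-- (F2) maximality of `Sset P` -/
lemma maxF {n k : ℕ} {P : ℕ × ℕ → ℕ} (hP : IsPP (shiftedStaircaseBoxes (n - 2*k - 1)) k P) :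
    ∀ S' : Finset (ℕ × ℕ), S' ⊆ Yn n → WidthLE lp S' k → Sset n k P ⊆ S' →
      S' = Sset n k P := by
  intro S' hS'sub hw hsub
  by_contra hne
  have hex : ∃ x ∈ S', x ∉ Sset n k P := by
    by_contra h
    push_neg at h
    exact hne (Finset.Subset.antisymm h hsub)
  obtain ⟨x, hxS', hxnot⟩ := hex
  have hxY : x ∈ Yn n := hS'sub hxS'
  have hxT : x ∈ Tset n k P := by
    by_contra hxT
    exact hxnot (Finset.mem_sdiff.mpr ⟨hxY, hxT⟩)
  obtain ⟨b, hbmem, hbx⟩ := mem_Tset.mp hxT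
  have hsx : x.1 + x.2 = b.1 + b.2 + 2*k + 1 := by
    rw [← hbx, tp_sum (hP.1 b hbmem)]
  have hAsub : insert x ((ray n (b.1 + b.2 + 2*k + 1)).filter (fun y => y ∉ Tset n k P)) ⊆ S' := by
    intro y hy
    rcases Finset.mem_insert.mp hy with rfl | hyR
    · exact hxS'
    · obtain ⟨hyray, hyT⟩ := Finset.mem_filter.mp hyR
      have hyY : y ∈ Yn n := by
        rw [mem_Yn]; exact (mem_ray.mp hyray).1
      exact hsub (Finset.mem_sdiff.mpr ⟨hyY, hyT⟩)
  have hAanti : IsAntichainIn lp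
      (insert x ((ray n (b.1 + b.2 + 2*k + 1)).filter (fun y => y ∉ Tset n k P))) := by
    refine antichain_of_const_sum (s := b.1 + b.2 + 2*k + 1) ?_
    intro y hy
    rcases Finset.mem_insert.mp hy with rfl | hyR
    · exact ⟨hsx, (mem_Yn.mp hxY).1⟩
    · have := mem_ray.mp (Finset.mem_filter.mp hyR).1
      exact ⟨this.2, this.1.1⟩
  have hxnotR : x ∉ (ray n (b.1 + b.2 + 2*k + 1)).filter (fun y => y ∉ Tset n k P) := by
    intro hcon
    exact (Finset.mem_filter.mp hcon).2 hxT
  have hcardA : (insert x ((ray n (b.1 + b.2 + 2*k + 1)).filter (fun y => y ∉ Tset n k P))).card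
      = ((ray n (b.1 + b.2 + 2*k + 1)).filter (fun y => y ∉ Tset n k P)).card + 1 :=
    Finset.card_insert_of_notMem hxnotR
  have hsplit := Finset.card_filter_add_card_filter_not
    (s := ray n (b.1 + b.2 + 2*k + 1)) (p := fun y => y ∈ Tset n k P)
  have hcardim : ((boxrow (n - 2*k - 1) (b.1 + b.2)).image (fun b => tp k b (P b))).card
      = (boxrow (n - 2*k - 1) (b.1 + b.2)).card := by
    apply Finset.card_image_of_injOn
    intro b1 hb1 b2 hb2 heq
    exact tp_injOn hP (Finset.mem_of_mem_filter _ hb1) (Finset.mem_of_mem_filter _ hb2) heq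
  have hbrow_ne : (boxrow (n - 2*k - 1) (b.1 + b.2)).Nonempty :=
    ⟨b, mem_boxrow.mpr ⟨mem_box.mp hbmem, rfl⟩⟩
  have hnk : 2*k + 2 ≤ n := by
    have := mem_box.mp hbmem
    omega
  have hray := card_ray_boxrow hnk hbrow_ne
  have hTcard := ray_filter_Tset hP (b.1 + b.2)
  rw [hTcard, hcardim] at hsplit
  have hwA := hw _ hAsub hAanti
  omega

/-- (F3) injectivity -/
lemma Sset_inj {n k : ℕ} {P P' : ℕ × ℕ → ℕ}
    (hP : IsPP (shiftedStaircaseBoxes (n - 2*k - 1)) k P)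
    (hP' : IsPP (shiftedStaircaseBoxes (n - 2*k - 1)) k P')
    (hSS : Sset n k P = Sset n k P') : P = P' := by
  have hTsub : ∀ (Q : ℕ × ℕ → ℕ), IsPP (shiftedStaircaseBoxes (n - 2*k - 1)) k Q →
      Tset n k Q ⊆ Yn n := by
    intro Q hQ y hy
    obtain ⟨b', hb', rfl⟩ := mem_Tset.mp hy
    exact tp_mem hQ hb'
  have hTT : Tset n k P = Tset n k P' := by
    have e1 : Yn n \ Sset n k P = Tset n k P := by
      unfold Sset
      exact Finset.sdiff_sdiff_eq_self (hTsub P hP)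
    have e2 : Yn n \ Sset n k P' = Tset n k P' := by
      unfold Sset
      exact Finset.sdiff_sdiff_eq_self (hTsub P' hP')
    rw [← e1, ← e2, hSS]
  funext b
  by_cases hb : b ∈ shiftedStaircaseBoxes (n - 2*k - 1)
  swap
  · rw [hP.2.1 b hb, hP'.2.1 b hb]
  have hbrow : b ∈ boxrow (n - 2*k - 1) (b.1 + b.2) := mem_boxrow.mpr ⟨mem_box.mp hb, rfl⟩
  have key : ∀ r ∈ (boxrow (n - 2*k - 1) (b.1 + b.2)).image Prod.fst,
      r + (k - P (r, b.1 + b.2 - r)) = r + (k - P' (r, b.1 + b.2 - r)) := by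
    have hmemrw : ∀ r, r ∈ (boxrow (n - 2*k - 1) (b.1 + b.2)).image Prod.fst →
        (r, b.1 + b.2 - r) ∈ boxrow (n - 2*k - 1) (b.1 + b.2) := by
      intro r hr
      obtain ⟨y, hy, rfl⟩ := Finset.mem_image.mp hr
      have := mem_boxrow.mp hy
      rw [pair_recover this.2]
      exact hy
    have himg : ∀ (Q : ℕ × ℕ → ℕ), IsPP (shiftedStaircaseBoxes (n - 2*k - 1)) k Q →
        ((boxrow (n - 2*k - 1) (b.1 + b.2)).image Prod.fst).image
          (fun r => r + (k - Q (r, b.1 + b.2 - r))) =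
        ((boxrow (n - 2*k - 1) (b.1 + b.2)).image (fun y => tp k y (Q y))).image Prod.fst := by
      intro Q hQ
      rw [Finset.image_image, Finset.image_image]
      apply Finset.image_congr
      intro y hy
      have hs := mem_boxrow.mp hy
      simp only [Function.comp]
      rw [pair_recover hs.2]
      rfl
    have hmono : ∀ (Q : ℕ × ℕ → ℕ), IsPP (shiftedStaircaseBoxes (n - 2*k - 1)) k Q →
        ∀ r1 ∈ (boxrow (n - 2*k - 1) (b.1 + b.2)).image Prod.fst,
        ∀ r2 ∈ (boxrow (n - 2*k - 1) (b.1 + b.2)).image Prod.fst, r1 < r2 →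
          r1 + (k - Q (r1, b.1 + b.2 - r1)) < r2 + (k - Q (r2, b.1 + b.2 - r2)) := by
      intro Q hQ r1 hr1 r2 hr2 hlt
      have h1 := hmemrw r1 hr1
      have h2 := hmemrw r2 hr2
      have hs1 := mem_boxrow.mp h1
      have hs2 := mem_boxrow.mp h2
      have := tp_fst_lt hQ (Finset.mem_of_mem_filter _ h1) (Finset.mem_of_mem_filter _ h2)
        (by simp only; omega) (by simp only; omega)
      unfold tp at this
      simp only at this
      exact this
    refine strictMono_image_eq _ _ _ (hmono P hP) (hmono P' hP') ?_
    rw [himg P hP, himg P' hP']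
    congr 1
    rw [← ray_filter_Tset hP, ← ray_filter_Tset hP', hTT]
  have hbin : b.1 ∈ (boxrow (n - 2*k - 1) (b.1 + b.2)).image Prod.fst :=
    Finset.mem_image_of_mem Prod.fst hbrow
  have hkey := key b.1 hbin
  rw [pair_recover rfl] at hkey
  have h1 := hP.1 b hb
  have h2 := hP'.1 b hb
  omega

lemma antichain_empty : IsAntichainIn lp (∅ : Finset (ℕ × ℕ)) := by
  intro a ha
  simp at ha

/-- length of the longest piece of antichain of `S` lying strictly "before" `x` -/
noncomputable def dd (S : Finset (ℕ × ℕ)) (x : ℕ × ℕ) : ℕ :=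
  ((S.filter (fun y => y.1 < x.1 ∧ x.2 < y.2)).powerset.filter
    (fun A => IsAntichainIn lp A)).sup Finset.card

/-- length of the longest piece of antichain of `S` lying strictly "after" `x` -/
noncomputable def ee (S : Finset (ℕ × ℕ)) (x : ℕ × ℕ) : ℕ :=
  ((S.filter (fun y => x.1 < y.1 ∧ y.2 < x.2)).powerset.filter
    (fun A => IsAntichainIn lp A)).sup Finset.card

lemma dd_witness (S : Finset (ℕ × ℕ)) (x : ℕ × ℕ) :
    ∃ A : Finset (ℕ × ℕ), A ⊆ S ∧ IsAntichainIn lp A ∧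
      (∀ y ∈ A, y.1 < x.1 ∧ x.2 < y.2) ∧ A.card = dd S x := by
  have hne : ((S.filter (fun y => y.1 < x.1 ∧ x.2 < y.2)).powerset.filter
      (fun A => IsAntichainIn lp A)).Nonempty := by
    refine ⟨∅, Finset.mem_filter.mpr ⟨Finset.empty_mem_powerset _, antichain_empty⟩⟩
  obtain ⟨A, hA, hsup⟩ := Finset.exists_mem_eq_sup _ hne Finset.card
  obtain ⟨hA1, hA2⟩ := Finset.mem_filter.mp hA
  have hA1' := Finset.mem_powerset.mp hA1
  refine ⟨A, fun y hy => Finset.mem_of_mem_filter _ (hA1' hy), hA2,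
    fun y hy => (Finset.mem_filter.mp (hA1' hy)).2, hsup.symm⟩

lemma ee_witness (S : Finset (ℕ × ℕ)) (x : ℕ × ℕ) :
    ∃ A : Finset (ℕ × ℕ), A ⊆ S ∧ IsAntichainIn lp A ∧
      (∀ y ∈ A, x.1 < y.1 ∧ y.2 < x.2) ∧ A.card = ee S x := by
  have hne : ((S.filter (fun y => x.1 < y.1 ∧ y.2 < x.2)).powerset.filter
      (fun A => IsAntichainIn lp A)).Nonempty := by
    refine ⟨∅, Finset.mem_filter.mpr ⟨Finset.empty_mem_powerset _, antichain_empty⟩⟩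
  obtain ⟨A, hA, hsup⟩ := Finset.exists_mem_eq_sup _ hne Finset.card
  obtain ⟨hA1, hA2⟩ := Finset.mem_filter.mp hA
  have hA1' := Finset.mem_powerset.mp hA1
  refine ⟨A, fun y hy => Finset.mem_of_mem_filter _ (hA1' hy), hA2,
    fun y hy => (Finset.mem_filter.mp (hA1' hy)).2, hsup.symm⟩

lemma le_dd {S A : Finset (ℕ × ℕ)} {x : ℕ × ℕ} (hAS : A ⊆ S) (hanti : IsAntichainIn lp A)
    (hbef : ∀ y ∈ A, y.1 < x.1 ∧ x.2 < y.2) : A.card ≤ dd S x := by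
  refine Finset.le_sup (Finset.mem_filter.mpr ⟨Finset.mem_powerset.mpr ?_, hanti⟩)
  intro y hy
  exact Finset.mem_filter.mpr ⟨hAS hy, hbef y hy⟩

lemma le_ee {S A : Finset (ℕ × ℕ)} {x : ℕ × ℕ} (hAS : A ⊆ S) (hanti : IsAntichainIn lp A)
    (haft : ∀ y ∈ A, x.1 < y.1 ∧ y.2 < x.2) : A.card ≤ ee S x := by
  refine Finset.le_sup (Finset.mem_filter.mpr ⟨Finset.mem_powerset.mpr ?_, hanti⟩)
  intro y hy
  exact Finset.mem_filter.mpr ⟨hAS hy, haft y hy⟩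

lemma antichain_union {B C : Finset (ℕ × ℕ)} (hB : IsAntichainIn lp B) (hC : IsAntichainIn lp C)
    (hcross : ∀ b ∈ B, ∀ c ∈ C, b.1 < c.1 ∧ c.2 < b.2) :
    IsAntichainIn lp (B ∪ C) ∧ (B ∪ C).card = B.card + C.card := by
  have hdisj : Disjoint B C := by
    rw [Finset.disjoint_left]
    intro a haB haC
    have := hcross a haB a haC
    omega
  constructor
  · intro a ha b hb hne
    rcases Finset.mem_union.mp ha with haB | haC <;> rcases Finset.mem_union.mp hb with hbB | hbC
    · exact hB a haB b hbB hne
    · have := hcross a haB b hbC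
      exact ⟨fun h => by have := h.2; omega, fun h => by have := h.1; omega⟩
    · have := hcross b hbB a haC
      exact ⟨fun h => by have := h.1; omega, fun h => by have := h.2; omega⟩
    · exact hC a haC b hbC hne
  · exact Finset.card_union_of_disjoint hdisj

lemma card_le_of_fst_Icc {A : Finset (ℕ × ℕ)} (hanti : IsAntichainIn lp A) {lo hi : ℕ}
    (h : ∀ y ∈ A, lo ≤ y.1 ∧ y.1 ≤ hi) : A.card ≤ hi + 1 - lo := by
  have h1 : A.card = (A.image Prod.fst).card :=
    (Finset.card_image_of_injOn (antichain_fst_injOn hanti)).symm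
  have h2 : A.image Prod.fst ⊆ Finset.Icc lo hi := by
    intro v hv
    obtain ⟨y, hy, rfl⟩ := Finset.mem_image.mp hv
    exact Finset.mem_Icc.mpr (h y hy)
  have := Finset.card_le_card h2
  rw [Nat.card_Icc] at this
  omega

lemma card_le_of_snd_Icc {A : Finset (ℕ × ℕ)} (hanti : IsAntichainIn lp A) {lo hi : ℕ}
    (h : ∀ y ∈ A, lo ≤ y.2 ∧ y.2 ≤ hi) : A.card ≤ hi + 1 - lo := by
  have h1 : A.card = (A.image Prod.snd).card :=
    (Finset.card_image_of_injOn (antichain_snd_injOn hanti)).symm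
  have h2 : A.image Prod.snd ⊆ Finset.Icc lo hi := by
    intro v hv
    obtain ⟨y, hy, rfl⟩ := Finset.mem_image.mp hv
    exact Finset.mem_Icc.mpr (h y hy)
  have := Finset.card_le_card h2
  rw [Nat.card_Icc] at this
  omega

section Backward

variable {n k : ℕ} {S : Finset (ℕ × ℕ)}

lemma dd_le_fst (hSY : S ⊆ Yn n) (x : ℕ × ℕ) : dd S x ≤ x.1 - 1 := by
  obtain ⟨A, hAS, hanti, hbef, hcard⟩ := dd_witness S x
  rw [← hcard]
  refine le_trans (card_le_of_fst_Icc hanti (lo := 1) (hi := x.1 - 1) ?_) (by omega)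
  intro y hy
  have h1 := (mem_Yn.mp (hSY (hAS hy))).1
  have h2 := (hbef y hy).1
  omega

lemma dd_add_snd (hSY : S ⊆ Yn n) (x : ℕ × ℕ) : dd S x ≤ n - x.2 := by
  obtain ⟨A, hAS, hanti, hbef, hcard⟩ := dd_witness S x
  rw [← hcard]
  refine le_trans (card_le_of_snd_Icc hanti (lo := x.2 + 1) (hi := n) ?_) (by omega)
  intro y hy
  have h1 := (mem_Yn.mp (hSY (hAS hy))).2.2
  have h2 := (hbef y hy).2
  omega

lemma snd_sub_fst_gap (hSY : S ⊆ Yn n) {x : ℕ × ℕ} (hx : x.1 < x.2) :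
    x.1 + 2 * ee S x + 1 ≤ x.2 := by
  obtain ⟨A, hAS, hanti, haft, hcard⟩ := ee_witness S x
  rcases Finset.eq_empty_or_nonempty A with rfl | hne
  · simp only [Finset.card_empty] at hcard
    omega
  obtain ⟨z, hz, hzmax⟩ := Finset.exists_max_image A Prod.fst hne
  have hz1 : x.1 + A.card ≤ z.1 := by
    have hb := card_le_of_fst_Icc hanti (lo := x.1 + 1) (hi := z.1)
      (fun y hy => ⟨by have := (haft y hy).1; omega, hzmax y hy⟩)
    have hz2 := (haft z hz).1
    omega
  have hmin : ∀ y ∈ A, z.2 ≤ y.2 ∧ y.2 ≤ x.2 - 1 := by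
    intro y hy
    refine ⟨?_, by have := (haft y hy).2; omega⟩
    rcases eq_or_ne y z with rfl | hne'
    · exact le_refl _
    · have hfstne : y.1 ≠ z.1 := fun h => hne' (antichain_fst_injOn hanti hy hz h)
      have hfst : y.1 < z.1 := by
        have := hzmax y hy
        omega
      rcases antichain_pair hanti hy hz hne' with ⟨h1, h2⟩ | ⟨h1, h2⟩ <;> omega
  have hz2 : z.2 + A.card ≤ x.2 := by
    have hb := card_le_of_snd_Icc hanti hmin
    have hz3 := (haft z hz).2
    omega
  have hzY := mem_Yn.mp (hSY (hAS hz))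
  omega

lemma dd_mono {x x' : ℕ × ℕ} (h1 : x.1 ≤ x'.1) (h2 : x'.2 ≤ x.2) : dd S x ≤ dd S x' := by
  obtain ⟨A, hAS, hanti, hbef, hcard⟩ := dd_witness S x
  rw [← hcard]
  exact le_dd hAS hanti (fun y hy => by have := hbef y hy; omega)

lemma ee_mono {x x' : ℕ × ℕ} (h1 : x.1 ≤ x'.1) (h2 : x'.2 ≤ x.2) : ee S x' ≤ ee S x := by
  obtain ⟨A, hAS, hanti, haft, hcard⟩ := ee_witness S x'
  rw [← hcard]
  exact le_ee hAS hanti (fun y hy => by have := haft y hy; omega)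

lemma dd_strict {x x' : ℕ × ℕ} (hx : x ∈ S) (h1 : x.1 < x'.1) (h2 : x'.2 < x.2) :
    dd S x + 1 ≤ dd S x' := by
  obtain ⟨A, hAS, hanti, hbef, hcard⟩ := dd_witness S x
  have hcross : ∀ b ∈ A, ∀ c ∈ ({x} : Finset (ℕ × ℕ)), b.1 < c.1 ∧ c.2 < b.2 := by
    intro b hb c hc
    rw [Finset.mem_singleton] at hc
    subst hc
    exact hbef b hb
  have hxanti : IsAntichainIn lp ({x} : Finset (ℕ × ℕ)) := by
    intro a ha b hb hne
    rw [Finset.mem_singleton] at ha hb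
    subst ha; subst hb; exact absurd rfl hne
  obtain ⟨hanti', hcard'⟩ := antichain_union hanti hxanti hcross
  have := le_dd (x := x') (Finset.union_subset hAS (by simpa using hx)) hanti' ?_
  · rw [hcard', Finset.card_singleton] at this
    omega
  · intro y hy
    rcases Finset.mem_union.mp hy with hyA | hyx
    · have := hbef y hyA
      omega
    · rw [Finset.mem_singleton] at hyx
      subst hyx
      omega

/-- (B-a) and (B-c): upper bounds from the width of `S` -/
lemma dpe_le_mem (hw : WidthLE lp S k) {x : ℕ × ℕ} (hx : x ∈ S) :
    dd S x + ee S x + 1 ≤ k := by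
  obtain ⟨A, hAS, hAanti, hbef, hAcard⟩ := dd_witness S x
  obtain ⟨B, hBS, hBanti, haft, hBcard⟩ := ee_witness S x
  have hxanti : IsAntichainIn lp ({x} : Finset (ℕ × ℕ)) := by
    intro a ha b hb hne
    rw [Finset.mem_singleton] at ha hb
    subst ha; subst hb; exact absurd rfl hne
  obtain ⟨h1anti, h1card⟩ := antichain_union hAanti hxanti
    (fun b hb c hc => by rw [Finset.mem_singleton] at hc; subst hc; exact hbef b hb)
  obtain ⟨h2anti, h2card⟩ := antichain_union h1anti hBanti
    (fun b hb c hc => by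
      rcases Finset.mem_union.mp hb with hbA | hbx
      · have := hbef b hbA
        have := haft c hc
        omega
      · rw [Finset.mem_singleton] at hbx
        subst hbx
        have := haft c hc
        omega)
  have hsub : A ∪ {x} ∪ B ⊆ S :=
    Finset.union_subset (Finset.union_subset hAS (by simpa using hx)) hBS
  have := hw _ hsub h2anti
  rw [h2card, h1card, Finset.card_singleton] at this
  omega

lemma dpe_le (hw : WidthLE lp S k) (x : ℕ × ℕ) : dd S x + ee S x ≤ k := by
  obtain ⟨A, hAS, hAanti, hbef, hAcard⟩ := dd_witness S x
  obtain ⟨B, hBS, hBanti, haft, hBcard⟩ := ee_witness S x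
  obtain ⟨h2anti, h2card⟩ := antichain_union hAanti hBanti
    (fun b hb c hc => by
      have := hbef b hb
      have := haft c hc
      omega)
  have := hw _ (Finset.union_subset hAS hBS) h2anti
  rw [h2card] at this
  omega

/-- (B-b): lower bound from maximality -/
lemma k_le_dpe (hS : IsFacet lp (Yn n) k S) {x : ℕ × ℕ} (hxY : x ∈ Yn n) (hxS : x ∉ S) :
    k ≤ dd S x + ee S x := by
  have hnw : ¬ WidthLE lp (insert x S) k := by
    intro hw
    have := hS.2.2 (insert x S) (Finset.insert_subset hxY hS.1) hw (Finset.subset_insert x S)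
    exact hxS (this ▸ Finset.mem_insert_self x S)
  rw [WidthLE] at hnw
  push_neg at hnw
  obtain ⟨A, hAsub, hAanti, hAcard⟩ := hnw
  have hxA : x ∈ A := by
    by_contra hxA
    have : A ⊆ S := fun y hy => by
      rcases Finset.mem_insert.mp (hAsub hy) with rfl | h
      · exact absurd hy hxA
      · exact h
    have := hS.2.1 A this hAanti
    omega
  have hA'sub : A.erase x ⊆ S := by
    intro y hy
    obtain ⟨hyne, hyA⟩ := Finset.mem_erase.mp hy
    rcases Finset.mem_insert.mp (hAsub hyA) with rfl | h
    · exact absurd rfl hyne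
    · exact h
  have hA'anti : IsAntichainIn lp (A.erase x) :=
    antichain_subset hAanti (Finset.erase_subset x A)
  have hsplitpair : ∀ y ∈ A.erase x, (y.1 < x.1 ∧ x.2 < y.2) ∨ (x.1 < y.1 ∧ y.2 < x.2) := by
    intro y hy
    obtain ⟨hyne, hyA⟩ := Finset.mem_erase.mp hy
    exact antichain_pair hAanti hyA hxA hyne
  have hsplit : (A.erase x).card ≤
      ((A.erase x).filter (fun y => y.1 < x.1)).card +
      ((A.erase x).filter (fun y => ¬ y.1 < x.1)).card := by
    refine le_trans (Finset.card_le_card (fun y hy => ?_)) (Finset.card_union_le _ _)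
    rw [Finset.mem_union, Finset.mem_filter, Finset.mem_filter]
    by_cases h : y.1 < x.1
    · exact Or.inl ⟨hy, h⟩
    · exact Or.inr ⟨hy, h⟩
  have hB := le_dd (x := x) (S := S) (A := (A.erase x).filter (fun y => y.1 < x.1))
    (fun y hy => hA'sub (Finset.mem_of_mem_filter _ hy))
    (antichain_subset hA'anti (Finset.filter_subset _ _))
    (fun y hy => by
      have h1 := (Finset.mem_filter.mp hy).2
      rcases hsplitpair y (Finset.mem_of_mem_filter _ hy) with h | h
      · exact h
      · omega)
  have hC := le_ee (x := x) (S := S) (A := (A.erase x).filter (fun y => ¬ y.1 < x.1))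
    (fun y hy => hA'sub (Finset.mem_of_mem_filter _ hy))
    (antichain_subset hA'anti (Finset.filter_subset _ _))
    (fun y hy => by
      have h1 := (Finset.mem_filter.mp hy).2
      rcases hsplitpair y (Finset.mem_of_mem_filter _ hy) with h | h
      · omega
      · exact h)
  have hcardA' : A.card - 1 ≤ (A.erase x).card := by
    rw [Finset.card_erase_of_mem hxA]
  omega

lemma dpe_eq (hS : IsFacet lp (Yn n) k S) {x : ℕ × ℕ} (hx : x ∈ Yn n \ S) :
    dd S x + ee S x = k := by
  obtain ⟨hxY, hxS⟩ := Finset.mem_sdiff.mp hx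
  exact le_antisymm (dpe_le hS.2.1 x) (k_le_dpe hS hxY hxS)

end Backward

section Backward2

variable {n k : ℕ} {S : Finset (ℕ × ℕ)}

lemma card_S_bound (hS : IsFacet lp (Yn n) k S) (hkn : 2*k ≤ n) :
    S.card + (shiftedStaircaseBoxes (n - 2*k - 1)).card ≤ (Yn n).card := by
  have hfib : S.card = ∑ r ∈ Finset.range k, (S.filter (fun x => dd S x = r)).card :=
    Finset.card_eq_sum_card_fiberwise
      (fun x hx => Finset.mem_range.mpr (by have := dpe_le_mem hS.2.1 hx; omega))
  have hbound : ∀ r ∈ Finset.range k,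
      (S.filter (fun x => dd S x = r)).card ≤ 2*n - 4*r - 3 := by
    intro r hr
    rw [Finset.mem_range] at hr
    have hinj : Set.InjOn (fun x : ℕ × ℕ => x.1 + x.2)
        ((S.filter (fun x => dd S x = r)) : Set (ℕ × ℕ)) := by
      intro a ha b hb hsum
      rw [Finset.mem_coe, Finset.mem_filter] at ha hb
      have hsum' : a.1 + a.2 = b.1 + b.2 := hsum
      by_contra hne
      have h1 : a.1 ≠ b.1 := by
        intro h
        exact hne (Prod.ext h (by omega))
      rcases Nat.lt_or_ge a.1 b.1 with h | h
      · have := dd_strict (S := S) ha.1 h (show b.2 < a.2 by omega)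
        omega
      · have := dd_strict (S := S) hb.1 (show b.1 < a.1 by omega) (show a.2 < b.2 by omega)
        omega
    have hsub : (S.filter (fun x => dd S x = r)).image (fun x => x.1 + x.2) ⊆
        Finset.Icc (2*r+3) (2*n - 2*r - 1) := by
      intro v hv
      obtain ⟨y, hy, rfl⟩ := Finset.mem_image.mp hv
      obtain ⟨hyS, hyd⟩ := Finset.mem_filter.mp hy
      have hyY := mem_Yn.mp (hS.1 hyS)
      have h1 := dd_le_fst hS.1 y
      have h2 := dd_add_snd hS.1 y
      rw [Finset.mem_Icc]
      omega
    have hcard := Finset.card_le_card hsub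
    rw [Finset.card_image_of_injOn hinj, Nat.card_Icc] at hcard
    omega
  have hsum := Finset.sum_le_sum hbound
  have hident := sumIdent k n hkn
  have h1 := card_Yn n
  have h2 := card_boxes (n - 2*k - 1)
  have h4 : ((n - 2*k - 1) + 1).choose 2 = (n - 2*k).choose 2 := by
    rcases Nat.lt_or_ge n (2*k+1) with h | h
    · have e1 : n - 2*k - 1 = 0 := by omega
      have e2 : n - 2*k = 0 := by omega
      rw [e1, e2]
      decide
    · congr 1
      omega
  omega

/-- the box associated to a complement element -/
noncomputable def bx (k : ℕ) (S : Finset (ℕ × ℕ)) (x : ℕ × ℕ) : ℕ × ℕ :=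
  (x.1 - dd S x, x.2 + dd S x - (2*k+1))

lemma bx_mem (hS : IsFacet lp (Yn n) k S) {x : ℕ × ℕ} (hx : x ∈ Yn n \ S) :
    bx k S x ∈ shiftedStaircaseBoxes (n - 2*k - 1) := by
  obtain ⟨hxY, hxS⟩ := Finset.mem_sdiff.mp hx
  have hd := dpe_eq hS hx
  have h1 := dd_le_fst hS.1 x
  have h2 := dd_add_snd hS.1 x
  have hY := mem_Yn.mp hxY
  have h3 := snd_sub_fst_gap hS.1 (x := x) hY.2.1
  rw [mem_box]
  unfold bx
  simp only
  omega

lemma bx_sum (hS : IsFacet lp (Yn n) k S) {x : ℕ × ℕ} (hx : x ∈ Yn n \ S) :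
    (bx k S x).1 + (bx k S x).2 + (2*k+1) = x.1 + x.2 := by
  have hb := mem_box.mp (bx_mem hS hx)
  obtain ⟨hxY, hxS⟩ := Finset.mem_sdiff.mp hx
  have h1 := dd_le_fst hS.1 x
  have hY := mem_Yn.mp hxY
  unfold bx at hb ⊢
  simp only at hb ⊢
  omega

/-- `dd` grows by at most one along an antidiagonal step -/
lemma dd_step {u x : ℕ × ℕ} (h1 : u.1 + 1 = x.1) (h2 : x.2 + 1 = u.2) :
    dd S x ≤ dd S u + 1 := by
  obtain ⟨A, hAS, hanti, hbef, hcard⟩ := dd_witness S x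
  have hbox : ∀ y ∈ A, y.1 ≤ u.1 ∧ u.2 ≤ y.2 := by
    intro y hy
    have := hbef y hy
    omega
  -- at most one violator
  have hviol : ((A.filter (fun y => ¬ (y.1 < u.1 ∧ u.2 < y.2)))).card ≤ 1 := by
    rw [Finset.card_le_one]
    intro a ha b hb
    obtain ⟨haA, haV⟩ := Finset.mem_filter.mp ha
    obtain ⟨hbA, hbV⟩ := Finset.mem_filter.mp hb
    have haB := hbox a haA
    have hbB := hbox b hbA
    by_contra hne
    have hfst : a.1 ≠ b.1 := fun h => hne (antichain_fst_injOn hanti haA hbA h)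
    have hsnd : a.2 ≠ b.2 := fun h => hne (antichain_snd_injOn hanti haA hbA h)
    rcases antichain_pair hanti haA hbA hne with ⟨hc1, hc2⟩ | ⟨hc1, hc2⟩ <;> omega
  have hkeep := le_dd (x := u) (S := S) (A := A.filter (fun y => y.1 < u.1 ∧ u.2 < y.2))
    (fun y hy => hAS (Finset.mem_of_mem_filter _ hy))
    (antichain_subset hanti (Finset.filter_subset _ _))
    (fun y hy => (Finset.mem_filter.mp hy).2)
  have hsplit : (A.filter (fun y => y.1 < u.1 ∧ u.2 < y.2)).card +
      (A.filter (fun y => ¬ (y.1 < u.1 ∧ u.2 < y.2))).card = A.card :=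
    Finset.card_filter_add_card_filter_not _
  omega

/-- `ee` grows by at most one along a backwards antidiagonal step -/
lemma ee_step {x v : ℕ × ℕ} (h1 : x.1 + 1 = v.1) (h2 : v.2 + 1 = x.2) :
    ee S x ≤ ee S v + 1 := by
  obtain ⟨A, hAS, hanti, haft, hcard⟩ := ee_witness S x
  have hbox : ∀ y ∈ A, v.1 ≤ y.1 ∧ y.2 ≤ v.2 := by
    intro y hy
    have := haft y hy
    omega
  have hviol : ((A.filter (fun y => ¬ (v.1 < y.1 ∧ y.2 < v.2)))).card ≤ 1 := by
    rw [Finset.card_le_one]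
    intro a ha b hb
    obtain ⟨haA, haV⟩ := Finset.mem_filter.mp ha
    obtain ⟨hbA, hbV⟩ := Finset.mem_filter.mp hb
    have haB := hbox a haA
    have hbB := hbox b hbA
    by_contra hne
    have hfst : a.1 ≠ b.1 := fun h => hne (antichain_fst_injOn hanti haA hbA h)
    have hsnd : a.2 ≠ b.2 := fun h => hne (antichain_snd_injOn hanti haA hbA h)
    rcases antichain_pair hanti haA hbA hne with ⟨hc1, hc2⟩ | ⟨hc1, hc2⟩ <;> omega
  have hkeep := le_ee (x := v) (S := S) (A := A.filter (fun y => v.1 < y.1 ∧ y.2 < v.2))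
    (fun y hy => hAS (Finset.mem_of_mem_filter _ hy))
    (antichain_subset hanti (Finset.filter_subset _ _))
    (fun y hy => (Finset.mem_filter.mp hy).2)
  have hsplit : (A.filter (fun y => v.1 < y.1 ∧ y.2 < v.2)).card +
      (A.filter (fun y => ¬ (v.1 < y.1 ∧ y.2 < v.2))).card = A.card :=
    Finset.card_filter_add_card_filter_not _
  omega

/-- `dd` does not grow over a complement point -/
lemma dd_stepT (hS : IsFacet lp (Yn n) k S) {u x : ℕ × ℕ}
    (hu : u ∈ Yn n \ S) (h1 : u.1 + 1 = x.1) (h2 : x.2 + 1 = u.2) :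
    dd S x ≤ dd S u := by
  obtain ⟨A, hAS, hanti, hbef, hcard⟩ := dd_witness S x
  obtain ⟨E, hES, hEanti, haft, hEcard⟩ := ee_witness S u
  have hcross : ∀ y ∈ A, ∀ z ∈ E, y.1 < z.1 ∧ z.2 < y.2 := by
    intro y hy z hz
    have hb := hbef y hy
    have ha := haft z hz
    omega
  obtain ⟨huanti, hucard⟩ := antichain_union hanti hEanti hcross
  have := hS.2.1 _ (Finset.union_subset hAS hES) huanti
  rw [hucard] at this
  have hd := dpe_eq hS hu
  omega

/-- `ee` does not grow backwards over a complement point -/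
lemma ee_stepT (hS : IsFacet lp (Yn n) k S) {x v : ℕ × ℕ}
    (hv : v ∈ Yn n \ S) (h1 : x.1 + 1 = v.1) (h2 : v.2 + 1 = x.2) :
    ee S x ≤ ee S v := by
  obtain ⟨A, hAS, hanti, haft, hcard⟩ := ee_witness S x
  obtain ⟨E, hES, hEanti, hbef, hEcard⟩ := dd_witness S v
  have hcross : ∀ y ∈ E, ∀ z ∈ A, y.1 < z.1 ∧ z.2 < y.2 := by
    intro y hy z hz
    have hb := hbef y hy
    have ha := haft z hz
    omega
  obtain ⟨huanti, hucard⟩ := antichain_union hEanti hanti hcross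
  have := hS.2.1 _ (Finset.union_subset hES hAS) huanti
  rw [hucard] at this
  have hd := dpe_eq hS hv
  omega

/-- the number of `S`-points before `x` on its antidiagonal -/
noncomputable def Sb (n : ℕ) (S : Finset (ℕ × ℕ)) (x : ℕ × ℕ) : ℕ :=
  ((ray n (x.1 + x.2)).filter (fun y => y ∈ S ∧ y.1 < x.1)).card

noncomputable def Sa (n : ℕ) (S : Finset (ℕ × ℕ)) (x : ℕ × ℕ) : ℕ :=
  ((ray n (x.1 + x.2)).filter (fun y => y ∈ S ∧ x.1 < y.1)).card

lemma le_dd_Sb (x : ℕ × ℕ) : Sb n S x ≤ dd S x := by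
  refine le_dd (fun y hy => (Finset.mem_filter.mp hy).2.1) ?_ ?_
  · refine antichain_of_const_sum (s := x.1 + x.2) ?_
    intro y hy
    have := mem_ray.mp (Finset.mem_of_mem_filter _ hy)
    exact ⟨this.2, this.1.1⟩
  · intro y hy
    have h1 := (Finset.mem_filter.mp hy).2.2
    have h2 := mem_ray.mp (Finset.mem_of_mem_filter _ hy)
    omega

lemma le_ee_Sa (x : ℕ × ℕ) : Sa n S x ≤ ee S x := by
  refine le_ee (fun y hy => (Finset.mem_filter.mp hy).2.1) ?_ ?_
  · refine antichain_of_const_sum (s := x.1 + x.2) ?_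
    intro y hy
    have := mem_ray.mp (Finset.mem_of_mem_filter _ hy)
    exact ⟨this.2, this.1.1⟩
  · intro y hy
    have h1 := (Finset.mem_filter.mp hy).2.2
    have h2 := mem_ray.mp (Finset.mem_of_mem_filter _ hy)
    omega

/-- a ray point is determined by its first coordinate -/
lemma ray_ext {s : ℕ} {y x : ℕ × ℕ} (hy : y ∈ ray n s) (hx : x ∈ ray n s)
    (h : y.1 = x.1) : y = x := by
  have h1 := mem_ray.mp hy
  have h2 := mem_ray.mp hx
  exact Prod.ext h (by omega)

lemma Sb_rec {u x : ℕ × ℕ} (hu : u ∈ Yn n) (h1 : u.1 + 1 = x.1) (h2 : x.2 + 1 = u.2) :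
    Sb n S x = Sb n S u + (if u ∈ S then 1 else 0) := by
  have hsum : u.1 + u.2 = x.1 + x.2 := by omega
  have huray : u ∈ ray n (x.1 + x.2) := by
    rw [mem_ray]
    exact ⟨mem_Yn.mp hu, by omega⟩
  by_cases huS : u ∈ S
  · have hins : (ray n (x.1 + x.2)).filter (fun y => y ∈ S ∧ y.1 < x.1) =
        insert u ((ray n (x.1 + x.2)).filter (fun y => y ∈ S ∧ y.1 < u.1)) := by
      ext y
      rw [Finset.mem_insert, Finset.mem_filter, Finset.mem_filter]
      constructor
      · rintro ⟨hyr, hyS, hylt⟩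
        rcases Nat.lt_or_ge y.1 u.1 with h | h
        · exact Or.inr ⟨hyr, hyS, h⟩
        · exact Or.inl (ray_ext hyr huray (by omega))
      · rintro (rfl | ⟨hyr, hyS, hylt⟩)
        · exact ⟨huray, huS, by omega⟩
        · exact ⟨hyr, hyS, by omega⟩
    have hnotmem : u ∉ (ray n (x.1 + x.2)).filter (fun y => y ∈ S ∧ y.1 < u.1) := by
      intro hmem
      have := (Finset.mem_filter.mp hmem).2.2
      omega
    rw [Sb, Sb, hins, Finset.card_insert_of_notMem hnotmem, if_pos huS, hsum]
  · have heq : (ray n (x.1 + x.2)).filter (fun y => y ∈ S ∧ y.1 < x.1) =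
        (ray n (x.1 + x.2)).filter (fun y => y ∈ S ∧ y.1 < u.1) := by
      ext y
      rw [Finset.mem_filter, Finset.mem_filter]
      constructor
      · rintro ⟨hyr, hyS, hylt⟩
        rcases Nat.lt_or_ge y.1 u.1 with h | h
        · exact ⟨hyr, hyS, h⟩
        · exact absurd (ray_ext hyr huray (by omega) ▸ hyS) huS
      · rintro ⟨hyr, hyS, hylt⟩
        exact ⟨hyr, hyS, by omega⟩
    rw [Sb, Sb, heq, if_neg huS, hsum]
    omega

lemma Sa_rec {x v : ℕ × ℕ} (hv : v ∈ Yn n) (h1 : x.1 + 1 = v.1) (h2 : v.2 + 1 = x.2) :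
    Sa n S x = Sa n S v + (if v ∈ S then 1 else 0) := by
  have hsum : v.1 + v.2 = x.1 + x.2 := by omega
  have hvray : v ∈ ray n (x.1 + x.2) := by
    rw [mem_ray]
    exact ⟨mem_Yn.mp hv, by omega⟩
  by_cases hvS : v ∈ S
  · have hins : (ray n (x.1 + x.2)).filter (fun y => y ∈ S ∧ x.1 < y.1) =
        insert v ((ray n (x.1 + x.2)).filter (fun y => y ∈ S ∧ v.1 < y.1)) := by
      ext y
      rw [Finset.mem_insert, Finset.mem_filter, Finset.mem_filter]
      constructor
      · rintro ⟨hyr, hyS, hylt⟩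
        rcases Nat.lt_or_ge v.1 y.1 with h | h
        · exact Or.inr ⟨hyr, hyS, h⟩
        · exact Or.inl (ray_ext hyr hvray (by omega))
      · rintro (rfl | ⟨hyr, hyS, hylt⟩)
        · exact ⟨hvray, hvS, by omega⟩
        · exact ⟨hyr, hyS, by omega⟩
    have hnotmem : v ∉ (ray n (x.1 + x.2)).filter (fun y => y ∈ S ∧ v.1 < y.1) := by
      intro hmem
      have := (Finset.mem_filter.mp hmem).2.2
      omega
    rw [Sa, Sa, hins, Finset.card_insert_of_notMem hnotmem, if_pos hvS, hsum]
  · have heq : (ray n (x.1 + x.2)).filter (fun y => y ∈ S ∧ x.1 < y.1) =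
        (ray n (x.1 + x.2)).filter (fun y => y ∈ S ∧ v.1 < y.1) := by
      ext y
      rw [Finset.mem_filter, Finset.mem_filter]
      constructor
      · rintro ⟨hyr, hyS, hylt⟩
        rcases Nat.lt_or_ge v.1 y.1 with h | h
        · exact ⟨hyr, hyS, h⟩
        · exact absurd (ray_ext hyr hvray (by omega) ▸ hyS) hvS
      · rintro ⟨hyr, hyS, hylt⟩
        exact ⟨hyr, hyS, by omega⟩
    rw [Sa, Sa, heq, if_neg hvS, hsum]
    omega

/-- MAIN structural lemma: `dd` counts the `S`-points before `x` on its antidiagonal -/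
lemma dd_eq_Sb (hS : IsFacet lp (Yn n) k S) : ∀ a : ℕ, ∀ x : ℕ × ℕ, x ∈ Yn n → x.1 = a →
    dd S x = Sb n S x := by
  intro a
  induction a using Nat.strong_induction_on with
  | _ a ih =>
    intro x hx rfl
    have hY := mem_Yn.mp hx
    by_cases hbase : x.1 = 1 ∨ x.2 = n
    · have hdd : dd S x = 0 := by
        obtain ⟨A, hAS, hanti, hbef, hcard⟩ := dd_witness S x
        rcases Finset.eq_empty_or_nonempty A with rfl | ⟨y, hy⟩
        · simpa using hcard.symm
        · have hyY := mem_Yn.mp (hS.1 (hAS hy))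
          have := hbef y hy
          omega
      have hSb : Sb n S x = 0 := by
        rw [Sb, Finset.card_eq_zero]
        ext y
        simp only [Finset.mem_filter, Finset.notMem_empty, iff_false, not_and]
        intro hyr hyS
        have h1 := mem_ray.mp hyr
        omega
      rw [hdd, hSb]
    · push_neg at hbase
      set u : ℕ × ℕ := (x.1 - 1, x.2 + 1) with hudef
      have h1 : u.1 + 1 = x.1 := by simp only [hudef]; omega
      have h2 : x.2 + 1 = u.2 := by simp only [hudef]
      have huY : u ∈ Yn n := by
        rw [mem_Yn]
        simp only [hudef]
        omega
      have hIH : dd S u = Sb n S u := ih (x.1 - 1) (by omega) u huY (by simp only [hudef])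
      have hrec := Sb_rec (S := S) huY h1 h2
      -- lower bound
      have hlow := le_dd_Sb (S := S) (n := n) x
      by_cases huS : u ∈ S
      · have hup := dd_step (S := S) h1 h2
        have hstrict := dd_strict (S := S) (x := u) (x' := x) huS (by omega) (by omega)
        rw [if_pos huS] at hrec
        omega
      · have hup := dd_stepT hS (Finset.mem_sdiff.mpr ⟨huY, huS⟩) h1 h2
        have hmono := dd_mono (S := S) (x := u) (x' := x) (by omega) (by omega)
        rw [if_neg huS] at hrec
        omega

/-- dual: `ee` counts the `S`-points after `x` on its antidiagonal -/
lemma ee_eq_Sa (hS : IsFacet lp (Yn n) k S) : ∀ b : ℕ, ∀ x : ℕ × ℕ, x ∈ Yn n → x.2 = b →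
    ee S x = Sa n S x := by
  intro b
  induction b using Nat.strong_induction_on with
  | _ b ih =>
    intro x hx hxb
    subst hxb
    have hY := mem_Yn.mp hx
    by_cases hbase : x.2 ≤ x.1 + 2
    · have hee : ee S x = 0 := by
        obtain ⟨A, hAS, hanti, haft, hcard⟩ := ee_witness S x
        rcases Finset.eq_empty_or_nonempty A with rfl | ⟨y, hy⟩
        · simpa using hcard.symm
        · have hyY := mem_Yn.mp (hS.1 (hAS hy))
          have := haft y hy
          omega
      have hSa : Sa n S x = 0 := by
        rw [Sa, Finset.card_eq_zero]
        ext y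
        simp only [Finset.mem_filter, Finset.notMem_empty, iff_false, not_and]
        intro hyr hyS
        have h1 := mem_ray.mp hyr
        omega
      rw [hee, hSa]
    · push_neg at hbase
      set v : ℕ × ℕ := (x.1 + 1, x.2 - 1) with hvdef
      have h1 : x.1 + 1 = v.1 := by simp only [hvdef]
      have h2 : v.2 + 1 = x.2 := by simp only [hvdef]; omega
      have hvY : v ∈ Yn n := by
        rw [mem_Yn]
        simp only [hvdef]
        omega
      have hIH : ee S v = Sa n S v := ih v.2 (by simp only [hvdef]; omega) v hvY rfl
      have hrec := Sa_rec (S := S) hvY h1 h2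
      have hlow := le_ee_Sa (S := S) (n := n) x
      by_cases hvS : v ∈ S
      · have hup := ee_step (S := S) h1 h2
        have hstrict : ee S v + 1 ≤ ee S x := by
          obtain ⟨A, hAS, hanti, haft, hcard⟩ := ee_witness S v
          have hvanti : IsAntichainIn lp ({v} : Finset (ℕ × ℕ)) := by
            intro a ha b hb hne
            rw [Finset.mem_singleton] at ha hb
            subst ha; subst hb; exact absurd rfl hne
          obtain ⟨hanti', hcard'⟩ := antichain_union hvanti hanti
            (fun a ha c hc => by
              rw [Finset.mem_singleton] at ha
              subst ha
              have := haft c hc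
              omega)
          have := le_ee (x := x) (S := S)
            (Finset.union_subset (by simpa using hvS) hAS) hanti' ?_
          · rw [hcard', Finset.card_singleton] at this
            omega
          · intro y hy
            rcases Finset.mem_union.mp hy with hyv | hyA
            · rw [Finset.mem_singleton] at hyv
              subst hyv
              omega
            · have := haft y hyA
              omega
        rw [if_pos hvS] at hrec
        omega
      · have hup := ee_stepT hS (Finset.mem_sdiff.mpr ⟨hvY, hvS⟩) h1 h2
        have hmono := ee_mono (S := S) (x := x) (x' := v) (by omega) (by omega)
        rw [if_neg hvS] at hrec
        omega

end Backward2

section Backward3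

variable {n k : ℕ} {S : Finset (ℕ × ℕ)}

lemma dd_eq_Sb' (hS : IsFacet lp (Yn n) k S) {x : ℕ × ℕ} (hx : x ∈ Yn n) :
    dd S x = Sb n S x := dd_eq_Sb hS x.1 x hx rfl

lemma ee_eq_Sa' (hS : IsFacet lp (Yn n) k S) {x : ℕ × ℕ} (hx : x ∈ Yn n) :
    ee S x = Sa n S x := ee_eq_Sa hS x.2 x hx rfl

/-- the `S`-part of the antidiagonal of a complement point has exactly `k` elements -/
lemma ray_S_card (hS : IsFacet lp (Yn n) k S) {x : ℕ × ℕ} (hx : x ∈ Yn n \ S) :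
    ((ray n (x.1 + x.2)).filter (fun y => y ∈ S)).card = k := by
  obtain ⟨hxY, hxS⟩ := Finset.mem_sdiff.mp hx
  have hsplit : (ray n (x.1 + x.2)).filter (fun y => y ∈ S) =
      ((ray n (x.1 + x.2)).filter (fun y => y ∈ S ∧ y.1 < x.1)) ∪
      ((ray n (x.1 + x.2)).filter (fun y => y ∈ S ∧ x.1 < y.1)) := by
    ext y
    rw [Finset.mem_union, Finset.mem_filter, Finset.mem_filter, Finset.mem_filter]
    constructor
    · rintro ⟨hyr, hyS⟩
      have hxray : x ∈ ray n (x.1 + x.2) := mem_ray.mpr ⟨mem_Yn.mp hxY, rfl⟩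
      have hne : y.1 ≠ x.1 := by
        intro h
        exact hxS ((ray_ext hyr hxray h) ▸ hyS)
      rcases Nat.lt_or_ge y.1 x.1 with h | h
      · exact Or.inl ⟨hyr, hyS, h⟩
      · exact Or.inr ⟨hyr, hyS, by omega⟩
    · rintro (⟨hyr, hyS, _⟩ | ⟨hyr, hyS, _⟩) <;> exact ⟨hyr, hyS⟩
  have hdisj : Disjoint ((ray n (x.1 + x.2)).filter (fun y => y ∈ S ∧ y.1 < x.1))
      ((ray n (x.1 + x.2)).filter (fun y => y ∈ S ∧ x.1 < y.1)) := by
    rw [Finset.disjoint_left]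
    intro a ha ha'
    have h1 := (Finset.mem_filter.mp ha).2.2
    have h2 := (Finset.mem_filter.mp ha').2.2
    omega
  have hd := dpe_eq hS hx
  have h1 := dd_eq_Sb' hS hxY
  have h2 := ee_eq_Sa' hS hxY
  rw [hsplit, Finset.card_union_of_disjoint hdisj]
  unfold Sb at h1
  unfold Sa at h2
  omega

/-- the antidiagonal of a complement point has exactly `boxrow + k` points,
and its complement part has exactly `boxrow` points -/
lemma ray_T_card' (hS : IsFacet lp (Yn n) k S) {x : ℕ × ℕ} (hx : x ∈ Yn n \ S) :
    ((ray n (x.1 + x.2)).filter (fun y => y ∈ Yn n \ S)).card =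
      (boxrow (n - 2*k - 1) ((bx k S x).1 + (bx k S x).2)).card := by
  have hbmem := mem_box.mp (bx_mem hS hx)
  have hnk : 2*k + 2 ≤ n := by omega
  have hbrow_ne : (boxrow (n - 2*k - 1) ((bx k S x).1 + (bx k S x).2)).Nonempty :=
    ⟨bx k S x, mem_boxrow.mpr ⟨hbmem, rfl⟩⟩
  have hray := card_ray_boxrow hnk hbrow_ne
  have hsx := bx_sum hS hx
  have hraysum2 : (bx k S x).1 + (bx k S x).2 + 2*k + 1 = x.1 + x.2 := by omega
  rw [hraysum2] at hray
  have hsplit := Finset.card_filter_add_card_filter_not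
    (s := ray n (x.1 + x.2)) (p := fun y => y ∈ S)
  have hSk := ray_S_card hS hx
  have hTeq : (ray n (x.1 + x.2)).filter (fun y => ¬ y ∈ S) =
      (ray n (x.1 + x.2)).filter (fun y => y ∈ Yn n \ S) := by
    ext y
    rw [Finset.mem_filter, Finset.mem_filter]
    constructor
    · rintro ⟨hyr, hyS⟩
      exact ⟨hyr, Finset.mem_sdiff.mpr ⟨mem_Yn.mpr (mem_ray.mp hyr).1, hyS⟩⟩
    · rintro ⟨hyr, hyT⟩
      exact ⟨hyr, (Finset.mem_sdiff.mp hyT).2⟩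
  rw [hTeq] at hsplit
  omega

lemma bx_fst_strict (hS : IsFacet lp (Yn n) k S) {x x' : ℕ × ℕ}
    (hx : x ∈ Yn n \ S) (hx' : x' ∈ Yn n \ S)
    (hsum : x.1 + x.2 = x'.1 + x'.2) (hlt : x.1 < x'.1) :
    (bx k S x).1 < (bx k S x').1 := by
  obtain ⟨hxY, hxS⟩ := Finset.mem_sdiff.mp hx
  obtain ⟨hx'Y, hx'S⟩ := Finset.mem_sdiff.mp hx'
  have h1 := dd_eq_Sb' hS hxY
  have h2 := dd_eq_Sb' hS hx'Y
  -- Sb x' ≤ Sb x + (x'.1 - x.1 - 1)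
  have hxray : x ∈ ray n (x.1 + x.2) := mem_ray.mpr ⟨mem_Yn.mp hxY, rfl⟩
  have hcov : (ray n (x.1 + x.2)).filter (fun y => y ∈ S ∧ y.1 < x'.1) ⊆
      ((ray n (x.1 + x.2)).filter (fun y => y ∈ S ∧ y.1 < x.1)) ∪
      ((ray n (x.1 + x.2)).filter (fun y => y ∈ S ∧ x.1 < y.1 ∧ y.1 < x'.1)) := by
    intro y hy
    obtain ⟨hyr, hyS, hylt⟩ := Finset.mem_filter.mp hy
    rw [Finset.mem_union, Finset.mem_filter, Finset.mem_filter]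
    have hne : y.1 ≠ x.1 := by
      intro h
      exact hxS ((ray_ext hyr hxray h) ▸ hyS)
    rcases Nat.lt_or_ge y.1 x.1 with h | h
    · exact Or.inl ⟨hyr, hyS, h⟩
    · exact Or.inr ⟨hyr, hyS, by omega, hylt⟩
  have hmid : ((ray n (x.1 + x.2)).filter (fun y => y ∈ S ∧ x.1 < y.1 ∧ y.1 < x'.1)).card ≤
      x'.1 - 1 + 1 - (x.1 + 1) := by
    refine card_le_of_fst_Icc ?_ ?_
    · refine antichain_of_const_sum (s := x.1 + x.2) ?_
      intro y hy
      have := mem_ray.mp (Finset.mem_of_mem_filter _ hy)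
      exact ⟨this.2, this.1.1⟩
    · intro y hy
      have := (Finset.mem_filter.mp hy).2.2
      omega
  have hcard := le_trans (Finset.card_le_card hcov) (Finset.card_union_le _ _)
  have hSb' : Sb n S x' = ((ray n (x.1 + x.2)).filter (fun y => y ∈ S ∧ y.1 < x'.1)).card := by
    unfold Sb
    rw [hsum]
  have hddfst := dd_le_fst hS.1 x
  have hY := mem_Yn.mp hxY
  unfold bx
  simp only
  unfold Sb at h1 h2 hSb'
  omega

lemma bx_injOn' (hS : IsFacet lp (Yn n) k S) :
    ∀ x ∈ Yn n \ S, ∀ x' ∈ Yn n \ S, bx k S x = bx k S x' → x = x' := by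
  intro x hx x' hx' heq
  have hsx := bx_sum hS hx
  have hsx' := bx_sum hS hx'
  have hsum : x.1 + x.2 = x'.1 + x'.2 := by
    rw [heq] at hsx
    omega
  by_contra hne
  have hfst : x.1 ≠ x'.1 := by
    intro h
    exact hne (Prod.ext h (by omega))
  rcases Nat.lt_or_ge x.1 x'.1 with h | h
  · have := bx_fst_strict hS hx hx' hsum h
    rw [heq] at this
    omega
  · have := bx_fst_strict hS hx' hx hsum.symm (by omega)
    rw [heq] at this
    omega

lemma bx_ray_image (hS : IsFacet lp (Yn n) k S) {x : ℕ × ℕ} (hx : x ∈ Yn n \ S) :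
    ((ray n (x.1 + x.2)).filter (fun y => y ∈ Yn n \ S)).image (bx k S) =
      boxrow (n - 2*k - 1) ((bx k S x).1 + (bx k S x).2) := by
  have hsx := bx_sum hS hx
  apply Finset.eq_of_subset_of_card_le
  · intro b hb
    obtain ⟨y, hy, rfl⟩ := Finset.mem_image.mp hb
    obtain ⟨hyray, hyT⟩ := Finset.mem_filter.mp hy
    have hsy := bx_sum hS hyT
    have hysum := (mem_ray.mp hyray).2
    exact mem_boxrow.mpr ⟨mem_box.mp (bx_mem hS hyT), by omega⟩
  · rw [Finset.card_image_of_injOn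
      (fun a ha b hb h => bx_injOn' hS a (Finset.mem_filter.mp ha).2 b (Finset.mem_filter.mp hb).2 h)]
    rw [ray_T_card' hS hx]

lemma bx_surj' (hS : IsFacet lp (Yn n) k S) :
    ∀ b ∈ shiftedStaircaseBoxes (n - 2*k - 1), ∃ x ∈ Yn n \ S, bx k S x = b := by
  intro b hb
  have hbb := mem_box.mp hb
  have hnk : 2*k + 2 ≤ n := by omega
  have hbrow : b ∈ boxrow (n - 2*k - 1) (b.1 + b.2) := mem_boxrow.mpr ⟨hbb, rfl⟩
  have hray := card_ray_boxrow hnk ⟨b, hbrow⟩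
  -- the corresponding antidiagonal contains a complement point
  have hTex : ∃ t ∈ ray n (b.1 + b.2 + 2*k + 1), t ∉ S := by
    by_contra hcon
    push_neg at hcon
    have hsub : ray n (b.1 + b.2 + 2*k + 1) ⊆ S := fun t ht => hcon t ht
    have hanti : IsAntichainIn lp (ray n (b.1 + b.2 + 2*k + 1)) := by
      refine antichain_of_const_sum (s := b.1 + b.2 + 2*k + 1) ?_
      intro y hy
      have := mem_ray.mp hy
      exact ⟨this.2, this.1.1⟩
    have := hS.2.1 _ hsub hanti
    have hpos : 1 ≤ (boxrow (n - 2*k - 1) (b.1 + b.2)).card := Finset.card_pos.mpr ⟨b, hbrow⟩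
    omega
  obtain ⟨t, htray, htS⟩ := hTex
  have htY : t ∈ Yn n := mem_Yn.mpr (mem_ray.mp htray).1
  have htT : t ∈ Yn n \ S := Finset.mem_sdiff.mpr ⟨htY, htS⟩
  have htsum : t.1 + t.2 = b.1 + b.2 + 2*k + 1 := (mem_ray.mp htray).2
  have hst := bx_sum hS htT
  have hbsum : (bx k S t).1 + (bx k S t).2 = b.1 + b.2 := by omega
  have himg := bx_ray_image hS htT
  rw [hbsum] at himg
  have hbin : b ∈ ((ray n (t.1 + t.2)).filter (fun y => y ∈ Yn n \ S)).image (bx k S) := by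
    rw [himg]
    exact hbrow
  obtain ⟨y, hy, hyb⟩ := Finset.mem_image.mp hbin
  exact ⟨y, (Finset.mem_filter.mp hy).2, hyb⟩

/-- exchange lemma, first form -/
lemma exchG (hS : IsFacet lp (Yn n) k S) {x x' : ℕ × ℕ}
    (hx : x ∈ Yn n \ S) (hx' : x' ∈ Yn n \ S)
    (hsum : x.1 + x.2 = x'.1 + x'.2 + 1) (hlt : x'.1 < x.1)
    (hineq : dd S x' + x.1 ≤ dd S x + x'.1) : False := by
  obtain ⟨hxY, hxS⟩ := Finset.mem_sdiff.mp hx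
  obtain ⟨hx'Y, hx'S⟩ := Finset.mem_sdiff.mp hx'
  have hD : ((ray n (x.1 + x.2)).filter (fun y => y ∈ S ∧ y.1 < x.1)).card = dd S x := by
    have := dd_eq_Sb' hS hxY
    unfold Sb at this
    omega
  have hU : ((ray n (x'.1 + x'.2)).filter (fun y => y ∈ S ∧ x'.1 < y.1)).card = ee S x' := by
    have := ee_eq_Sa' hS hx'Y
    unfold Sa at this
    omega
  have hDanti : IsAntichainIn lp ((ray n (x.1 + x.2)).filter (fun y => y ∈ S ∧ y.1 < x.1)) := by
    refine antichain_of_const_sum (s := x.1 + x.2) ?_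
    intro y hy
    have := mem_ray.mp (Finset.mem_of_mem_filter _ hy)
    exact ⟨this.2, this.1.1⟩
  have hUanti : IsAntichainIn lp ((ray n (x'.1 + x'.2)).filter (fun y => y ∈ S ∧ x'.1 < y.1)) := by
    refine antichain_of_const_sum (s := x'.1 + x'.2) ?_
    intro y hy
    have := mem_ray.mp (Finset.mem_of_mem_filter _ hy)
    exact ⟨this.2, this.1.1⟩
  -- split D
  have hdropped : (((ray n (x.1 + x.2)).filter (fun y => y ∈ S ∧ y.1 < x.1)).filter
      (fun y => ¬ y.1 ≤ x'.1)).card ≤ x.1 - 1 + 1 - (x'.1 + 1) := by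
    refine card_le_of_fst_Icc (antichain_subset hDanti (Finset.filter_subset _ _)) ?_
    intro y hy
    have h1 := (Finset.mem_filter.mp hy).2
    have h2 := (Finset.mem_filter.mp (Finset.mem_of_mem_filter _ hy)).2.2
    omega
  have hsplitD := Finset.card_filter_add_card_filter_not
    (s := (ray n (x.1 + x.2)).filter (fun y => y ∈ S ∧ y.1 < x.1)) (p := fun y => y.1 ≤ x'.1)
  -- build the union
  obtain ⟨hWanti, hWcard⟩ := antichain_union
    (antichain_subset hDanti (Finset.filter_subset _ _)) hUanti
    (B := ((ray n (x.1 + x.2)).filter (fun y => y ∈ S ∧ y.1 < x.1)).filter (fun y => y.1 ≤ x'.1))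
    (fun y hy z hz => by
      have hy1 := (Finset.mem_filter.mp hy).2
      have hy2 := mem_ray.mp (Finset.mem_of_mem_filter _ (Finset.mem_of_mem_filter _ hy))
      have hz1 := (Finset.mem_filter.mp hz).2.2
      have hz2 := mem_ray.mp (Finset.mem_of_mem_filter _ hz)
      constructor <;> omega)
  have hsub : (((ray n (x.1 + x.2)).filter (fun y => y ∈ S ∧ y.1 < x.1)).filter
        (fun y => y.1 ≤ x'.1)) ∪
      ((ray n (x'.1 + x'.2)).filter (fun y => y ∈ S ∧ x'.1 < y.1)) ⊆ S := by
    intro y hy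
    rcases Finset.mem_union.mp hy with h | h
    · exact (Finset.mem_filter.mp (Finset.mem_of_mem_filter _ h)).2.1
    · exact (Finset.mem_filter.mp h).2.1
  have hw := hS.2.1 _ hsub hWanti
  rw [hWcard] at hw
  have hd := dpe_eq hS hx'
  omega

/-- exchange lemma, second form -/
lemma exchG' (hS : IsFacet lp (Yn n) k S) {x x' : ℕ × ℕ}
    (hx : x ∈ Yn n \ S) (hx' : x' ∈ Yn n \ S)
    (hsum : x.1 + x.2 = x'.1 + x'.2 + 1) (hle : x.1 ≤ x'.1)
    (hineq : dd S x + x'.1 + 1 ≤ dd S x' + x.1) : False := by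
  obtain ⟨hxY, hxS⟩ := Finset.mem_sdiff.mp hx
  obtain ⟨hx'Y, hx'S⟩ := Finset.mem_sdiff.mp hx'
  have hD : ((ray n (x'.1 + x'.2)).filter (fun y => y ∈ S ∧ y.1 < x'.1)).card = dd S x' := by
    have := dd_eq_Sb' hS hx'Y
    unfold Sb at this
    omega
  have hU : ((ray n (x.1 + x.2)).filter (fun y => y ∈ S ∧ x.1 < y.1)).card = ee S x := by
    have := ee_eq_Sa' hS hxY
    unfold Sa at this
    omega
  have hDanti : IsAntichainIn lp ((ray n (x'.1 + x'.2)).filter (fun y => y ∈ S ∧ y.1 < x'.1)) := by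
    refine antichain_of_const_sum (s := x'.1 + x'.2) ?_
    intro y hy
    have := mem_ray.mp (Finset.mem_of_mem_filter _ hy)
    exact ⟨this.2, this.1.1⟩
  have hUanti : IsAntichainIn lp ((ray n (x.1 + x.2)).filter (fun y => y ∈ S ∧ x.1 < y.1)) := by
    refine antichain_of_const_sum (s := x.1 + x.2) ?_
    intro y hy
    have := mem_ray.mp (Finset.mem_of_mem_filter _ hy)
    exact ⟨this.2, this.1.1⟩
  have hdropped : (((ray n (x'.1 + x'.2)).filter (fun y => y ∈ S ∧ y.1 < x'.1)).filter
      (fun y => ¬ y.1 < x.1)).card ≤ x'.1 - 1 + 1 - x.1 := by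
    refine card_le_of_fst_Icc (antichain_subset hDanti (Finset.filter_subset _ _)) ?_
    intro y hy
    have h1 := (Finset.mem_filter.mp hy).2
    have h2 := (Finset.mem_filter.mp (Finset.mem_of_mem_filter _ hy)).2.2
    omega
  have hsplitD := Finset.card_filter_add_card_filter_not
    (s := (ray n (x'.1 + x'.2)).filter (fun y => y ∈ S ∧ y.1 < x'.1)) (p := fun y => y.1 < x.1)
  obtain ⟨hWanti, hWcard⟩ := antichain_union
    (antichain_subset hDanti (Finset.filter_subset _ _)) hUanti
    (B := ((ray n (x'.1 + x'.2)).filter (fun y => y ∈ S ∧ y.1 < x'.1)).filter (fun y => y.1 < x.1))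
    (fun y hy z hz => by
      have hy1 := (Finset.mem_filter.mp hy).2
      have hy2 := mem_ray.mp (Finset.mem_of_mem_filter _ (Finset.mem_of_mem_filter _ hy))
      have hz1 := (Finset.mem_filter.mp hz).2.2
      have hz2 := mem_ray.mp (Finset.mem_of_mem_filter _ hz)
      constructor <;> omega)
  have hsub : (((ray n (x'.1 + x'.2)).filter (fun y => y ∈ S ∧ y.1 < x'.1)).filter
        (fun y => y.1 < x.1)) ∪
      ((ray n (x.1 + x.2)).filter (fun y => y ∈ S ∧ x.1 < y.1)) ⊆ S := by
    intro y hy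
    rcases Finset.mem_union.mp hy with h | h
    · exact (Finset.mem_filter.mp (Finset.mem_of_mem_filter _ h)).2.1
    · exact (Finset.mem_filter.mp h).2.1
  have hw := hS.2.1 _ hsub hWanti
  rw [hWcard] at hw
  have hd := dpe_eq hS hx
  have hY := mem_Yn.mp hxY
  have hY' := mem_Yn.mp hx'Y
  omega

/-- the basic coordinate facts for a complement point -/
lemma bx_coords (hS : IsFacet lp (Yn n) k S) {x : ℕ × ℕ} (hx : x ∈ Yn n \ S) :
    x.1 = (bx k S x).1 + dd S x ∧ x.2 + dd S x = (bx k S x).2 + 2*k + 1 ∧ dd S x ≤ k := by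
  have hb := mem_box.mp (bx_mem hS hx)
  have h1 := dd_le_fst hS.1 x
  have hY := mem_Yn.mp (Finset.mem_sdiff.mp hx).1
  have hd := dpe_eq hS hx
  unfold bx at hb ⊢
  simp only at hb ⊢
  omega

lemma tp_bx (hS : IsFacet lp (Yn n) k S) {x : ℕ × ℕ} (hx : x ∈ Yn n \ S) :
    tp k (bx k S x) (k - dd S x) = x := by
  obtain ⟨hc1, hc2, hc3⟩ := bx_coords hS hx
  unfold tp
  apply Prod.ext <;> simp only <;> omega

/-- the backward direction: every facet arises from a plane partition -/
lemma backward (hS : IsFacet lp (Yn n) k S) :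
    ∃ P : ℕ × ℕ → ℕ, IsPP (shiftedStaircaseBoxes (n - 2*k - 1)) k P ∧ Sset n k P = S := by
  have huniq : ∀ b ∈ shiftedStaircaseBoxes (n - 2*k - 1),
      ∃! x, x ∈ Yn n \ S ∧ bx k S x = b := by
    intro b hb
    obtain ⟨x, hx, hbx⟩ := bx_surj' hS b hb
    exact ⟨x, ⟨hx, hbx⟩, fun y hy => bx_injOn' hS y hy.1 x hx (hy.2.trans hbx.symm)⟩
  set P : ℕ × ℕ → ℕ := fun b =>
    if hb : b ∈ shiftedStaircaseBoxes (n - 2*k - 1) then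
      k - dd S ((Yn n \ S).choose (fun x => bx k S x = b) (huniq b hb)) else 0 with hPdef
  have hPval : ∀ b, ∀ hb : b ∈ shiftedStaircaseBoxes (n - 2*k - 1),
      ∃ x, x ∈ Yn n \ S ∧ bx k S x = b ∧ P b = k - dd S x := by
    intro b hb
    refine ⟨(Yn n \ S).choose (fun x => bx k S x = b) (huniq b hb),
      Finset.choose_mem (fun x => bx k S x = b) (Yn n \ S) (huniq b hb),
      Finset.choose_property (fun x => bx k S x = b) (Yn n \ S) (huniq b hb), ?_⟩
    simp only [hPdef]
    rw [dif_pos hb]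
  have hP0 : ∀ b, b ∉ shiftedStaircaseBoxes (n - 2*k - 1) → P b = 0 := by
    intro b hb
    simp only [hPdef]
    rw [dif_neg hb]
  have hfacts : ∀ i j : ℕ, ∀ hb : (i, j) ∈ shiftedStaircaseBoxes (n - 2*k - 1),
      ∃ x, x ∈ Yn n \ S ∧ P (i, j) = k - dd S x ∧
        x.1 - dd S x = i ∧ x.2 + dd S x - (2*k+1) = j ∧
        dd S x ≤ x.1 - 1 ∧ 1 ≤ x.1 ∧ dd S x + ee S x = k ∧ 1 ≤ x.2 + dd S x - (2*k+1) := by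
    intro i j hb
    obtain ⟨x, hx, hbx, hval⟩ := hPval (i, j) hb
    have hfst : x.1 - dd S x = i := congrArg Prod.fst hbx
    have hsnd : x.2 + dd S x - (2*k+1) = j := congrArg Prod.snd hbx
    have h1 := dd_le_fst hS.1 x
    have hY := mem_Yn.mp (Finset.mem_sdiff.mp hx).1
    have hd := dpe_eq hS hx
    have hbox := mem_box.mp hb
    exact ⟨x, hx, hval, hfst, hsnd, h1, by omega, hd, by omega⟩
  refine ⟨P, ⟨?_, hP0, ?_, ?_⟩, ?_⟩
  · intro b hb
    obtain ⟨x, hx, hbx, hval⟩ := hPval b hb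
    rw [hval]
    omega
  · -- P (i, j) ≤ P (i, j+1)
    intro i j hb' hb
    obtain ⟨x, hx, hval, hfst, hsnd, h1, h2, hd, h3⟩ := hfacts i (j+1) hb
    obtain ⟨x', hx', hval', hfst', hsnd', h1', h2', hd', h3'⟩ := hfacts i j hb'
    rw [hval, hval']
    by_contra hcon
    push_neg at hcon
    have hddlt : dd S x' < dd S x := by omega
    refine exchG hS hx hx' (by omega) (by omega) (by omega)
  · -- P (i+1, j) ≤ P (i, j)
    intro i j hb' hb
    obtain ⟨x, hx, hval, hfst, hsnd, h1, h2, hd, h3⟩ := hfacts (i+1) j hb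
    obtain ⟨x', hx', hval', hfst', hsnd', h1', h2', hd', h3'⟩ := hfacts i j hb'
    rw [hval, hval']
    by_contra hcon
    push_neg at hcon
    have hddlt : dd S x < dd S x' := by omega
    refine exchG' hS hx hx' (by omega) (by omega) (by omega)
  · -- Sset n k P = S
    have hT : Tset n k P = Yn n \ S := by
      ext y
      constructor
      · intro hy
        obtain ⟨b, hb, hby⟩ := mem_Tset.mp hy
        obtain ⟨x, hx, hbx, hval⟩ := hPval b hb
        have htp : tp k b (P b) = x := by
          rw [hval, ← hbx]
          exact tp_bx hS hx
        rw [← hby, htp]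
        exact hx
      · intro hy
        have hbmem := bx_mem hS hy
        obtain ⟨x, hx, hbx, hval⟩ := hPval (bx k S y) hbmem
        have hxy : x = y := bx_injOn' hS x hx y hy hbx
        subst hxy
        refine mem_Tset.mpr ⟨bx k S x, hbmem, ?_⟩
        rw [hval]
        exact tp_bx hS hx
    rw [Sset, hT, Finset.sdiff_sdiff_eq_self hS.1]

end Backward3

end S5

/-- The plane partitions in the shifted `(n-2k-1)`-staircase bounded by `k` are in
bijection with the facets of the `k`-th order complex of the poset
`Y_n = {(i,j) : 1 ≤ i < j ≤ n}` with componentwise order. -/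
theorem statement5 (n k : ℕ) (hn : 0 < n) (hk : 0 < k) (hkn : k ≤ n / 2) :
    Nonempty
      ({P : ℕ × ℕ → ℕ // IsPP (shiftedStaircaseBoxes (n - 2 * k - 1)) k P} ≃
        {S : Finset (ℕ × ℕ) //
          IsFacet (fun x y => x.1 ≤ y.1 ∧ x.2 ≤ y.2) (Yn n) k S}) := by
  refine ⟨Equiv.ofBijective
    (fun Ps => ⟨S5.Sset n k Ps.1, S5.Sset_subset, S5.widthF Ps.2, S5.maxF Ps.2⟩) ⟨?_, ?_⟩⟩
  · intro P1 P2 h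
    apply Subtype.ext
    exact S5.Sset_inj P1.2 P2.2 (congrArg Subtype.val h)
  · intro Sf
    obtain ⟨P, hPP, hSP⟩ := S5.backward Sf.2
    exact ⟨⟨P, hPP⟩, Subtype.ext hSP⟩
end
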